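/- arXiv:2503.10606 — 12 statements merged into one kernel-verified Lean document; each statement's English description precedes it below -/
import Mathlib

section
/- The function G has the following structure: there exist r_ph and r_ISCO with r_h < r_ph < r_ISCO < ∞ such that (1) G(r_h) = −1/r_h²; (2) G has exactly one zero in (r_h,∞), located at r_ph, with G(r) < 0 for r_h ≤ r < r_ph and G(r) > 0 for r > r_ph; (3) G has exactly one critical point in (r_h,∞), located at r_ISCO, which is a strict global maximum of G on [r_h,∞) with G(r_ISCO) > 0; and (4) G(r) → 0 as r → ∞ (more precisely, M·r·G(r) → 1 as r → ∞). Moreover, 2χ(r_ph) = r_ph χ'(r_ph), i.e. r_ph is the unique photon-sphere radius. -/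
open Real Filter Set Topology

/-- structure of the function `G` for a generic static spherically
symmetric black hole metric function `χ`. -/
theorem stmt0
    (χ : ℝ → ℝ) (r_h M : ℝ)
    (hrh : 0 < r_h)
    (hsmooth : ContDiffOn ℝ (⊤ : ℕ∞) χ (Set.Ioi 0))
    (hA1 : χ r_h = 0 ∧ 0 < deriv χ r_h)
    (hA2 : ∀ r, r_h < r → 0 < χ r ∧ 0 < deriv χ r)
    (hM : 0 < M)
    (hA3a : Tendsto χ atTop (𝓝 1))
    (hA3b : Tendsto (fun r => r ^ 2 * deriv χ r) atTop (𝓝 (2 * M)))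
    (hA4 : ∃! r, r ∈ Set.Ioi r_h ∧
      deriv (deriv χ) r / deriv χ r - 2 * deriv χ r / χ r + 3 / r = 0)
    (G : ℝ → ℝ)
    (hG : ∀ r, G r = (2 * χ r - r * deriv χ r) / (r ^ 3 * deriv χ r)) :
    ∃ r_ph r_ISCO : ℝ, r_h < r_ph ∧ r_ph < r_ISCO ∧
      -- (1) value at the horizon
      G r_h = -1 / r_h ^ 2 ∧
      -- (2) unique zero at r_ph, with definite signs on either side
      G r_ph = 0 ∧
      (∀ r, r_h ≤ r → r < r_ph → G r < 0) ∧
      (∀ r, r_ph < r → 0 < G r) ∧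
      (∀ r, r_h < r → G r = 0 → r = r_ph) ∧
      -- (3) unique critical point at r_ISCO, a strict global maximum on [r_h,∞)
      deriv G r_ISCO = 0 ∧
      (∀ r, r_h < r → deriv G r = 0 → r = r_ISCO) ∧
      0 < G r_ISCO ∧
      (∀ r, r_h ≤ r → r ≠ r_ISCO → G r < G r_ISCO) ∧
      -- (4) asymptotic behavior
      Tendsto G atTop (𝓝 0) ∧
      Tendsto (fun r => M * r * G r) atTop (𝓝 1) ∧
      -- photon sphere condition
      2 * χ r_ph = r_ph * deriv χ r_ph := by
  obtain ⟨hχrh, hχ'rh⟩ := hA1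
  set H : ℝ → ℝ := fun r =>
    deriv (deriv χ) r / deriv χ r - 2 * deriv χ r / χ r + 3 / r with hHdef
  obtain ⟨r_I, ⟨hrI_mem, hHrI⟩, hA4u⟩ := hA4
  have hrI : r_h < r_I := hrI_mem
  have hGfun : G = fun r => (2 * χ r - r * deriv χ r) / (r ^ 3 * deriv χ r) := funext hG
  -- smoothness facts
  have hs1 : ContDiffOn ℝ (⊤ : ℕ∞) (deriv χ) (Set.Ioi 0) :=
    hsmooth.deriv_of_isOpen isOpen_Ioi (by simp)
  have hs2 : ContDiffOn ℝ (⊤ : ℕ∞) (deriv (deriv χ)) (Set.Ioi 0) :=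
    hs1.deriv_of_isOpen isOpen_Ioi (by simp)
  have hdχ : ∀ r : ℝ, 0 < r → HasDerivAt χ (deriv χ r) r := fun r hr =>
    ((hsmooth.differentiableOn (by simp)).differentiableAt (Ioi_mem_nhds hr)).hasDerivAt
  have hdχ' : ∀ r : ℝ, 0 < r → HasDerivAt (deriv χ) (deriv (deriv χ) r) r := fun r hr =>
    ((hs1.differentiableOn (by simp)).differentiableAt (Ioi_mem_nhds hr)).hasDerivAt
  have hcχ : ContinuousOn χ (Set.Ioi 0) := hsmooth.continuousOn
  have hcχ' : ContinuousOn (deriv χ) (Set.Ioi 0) := hs1.continuousOn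
  have hcχ'' : ContinuousOn (deriv (deriv χ)) (Set.Ioi 0) := hs2.continuousOn
  -- positivity
  have hrpos : ∀ r : ℝ, r_h ≤ r → 0 < r := fun r hr => lt_of_lt_of_le hrh hr
  have hχ'pos : ∀ r : ℝ, r_h ≤ r → 0 < deriv χ r := by
    intro r hr
    rcases eq_or_lt_of_le hr with h | h
    · rwa [← h]
    · exact (hA2 r h).2
  have hden : ∀ r : ℝ, r_h ≤ r → 0 < r ^ 3 * deriv χ r := fun r hr =>
    mul_pos (pow_pos (hrpos r hr) 3) (hχ'pos r hr)
  -- value at horizon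
  have hGrh : G r_h = -1 / r_h ^ 2 := by
    rw [hG, hχrh]
    have h1 : deriv χ r_h ≠ 0 := ne_of_gt hχ'rh
    have h2 : r_h ≠ 0 := ne_of_gt hrh
    field_simp
    ring
  -- derivative of G
  have hGderiv : ∀ r : ℝ, r_h < r →
      HasDerivAt G (-2 * χ r / (r ^ 3 * deriv χ r) * H r) r := by
    intro r hr
    have hr0 : 0 < r := hrpos r hr.le
    have hN : HasDerivAt (fun x => 2 * χ x - x * deriv χ x)
        (2 * deriv χ r - (1 * deriv χ r + r * deriv (deriv χ) r)) r :=
      ((hdχ r hr0).const_mul 2).sub ((hasDerivAt_id r).mul (hdχ' r hr0))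
    have hD : HasDerivAt (fun x => x ^ 3 * deriv χ x)
        (3 * r ^ 2 * deriv χ r + r ^ 3 * deriv (deriv χ) r) r := by
      have := (hasDerivAt_pow 3 r).mul (hdχ' r hr0)
      refine this.congr_deriv ?_
      norm_num
    have hDne : r ^ 3 * deriv χ r ≠ 0 := ne_of_gt (hden r hr.le)
    have hdiv := hN.div hD hDne
    rw [hGfun]
    refine hdiv.congr_deriv ?_
    have hχpos : (0:ℝ) < χ r := (hA2 r hr).1
    have hχ'p : (0:ℝ) < deriv χ r := hχ'pos r hr.le
    have h1 : χ r ≠ 0 := ne_of_gt hχpos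
    have h2 : deriv χ r ≠ 0 := ne_of_gt hχ'p
    have h3 : r ≠ 0 := ne_of_gt hr0
    rw [hHdef]
    field_simp
    ring
  have hGd : ∀ r : ℝ, r_h < r →
      deriv G r = -2 * χ r / (r ^ 3 * deriv χ r) * H r := fun r hr =>
    (hGderiv r hr).deriv
  -- continuity of G on [r_h, ∞)
  have hsub : Set.Ici r_h ⊆ Set.Ioi (0:ℝ) := fun x hx => hrpos x hx
  have hGcont : ContinuousOn G (Set.Ici r_h) := by
    rw [hGfun]
    apply ContinuousOn.div
    · exact (continuousOn_const.mul (hcχ.mono hsub)).sub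
        (continuousOn_id.mul (hcχ'.mono hsub))
    · exact (continuousOn_pow 3).mul (hcχ'.mono hsub)
    · intro x hx; exact ne_of_gt (hden x hx)
  -- H tends to -infinity at r_h from the right
  have hHbot : Tendsto H (𝓝[>] r_h) atBot := by
    have hrh_mem : r_h ∈ Set.Ioi (0:ℝ) := hrh
    have hle : 𝓝[>] r_h ≤ 𝓝[Set.Ioi (0:ℝ)] r_h :=
      nhdsWithin_mono r_h (fun x hx => hrpos x (le_of_lt hx))
    have tA : Tendsto (fun r => deriv (deriv χ) r / deriv χ r + 3 / r) (𝓝[>] r_h)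
        (𝓝 (deriv (deriv χ) r_h / deriv χ r_h + 3 / r_h)) := by
      have t1 : Tendsto (deriv (deriv χ)) (𝓝[>] r_h) (𝓝 (deriv (deriv χ) r_h)) :=
        (hcχ'' r_h hrh_mem).mono_left hle
      have t2 : Tendsto (deriv χ) (𝓝[>] r_h) (𝓝 (deriv χ r_h)) :=
        (hcχ' r_h hrh_mem).mono_left hle
      have t3 : Tendsto (fun r : ℝ => r) (𝓝[>] r_h) (𝓝 r_h) :=
        tendsto_id.mono_left nhdsWithin_le_nhds
      exact (t1.div t2 (ne_of_gt hχ'rh)).add (tendsto_const_nhds.div t3 (ne_of_gt hrh))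
    have tB : Tendsto (fun r => 2 * deriv χ r / χ r) (𝓝[>] r_h) atTop := by
      have t2 : Tendsto (fun r => 2 * deriv χ r) (𝓝[>] r_h) (𝓝 (2 * deriv χ r_h)) :=
        (tendsto_const_nhds.mul (((hcχ' r_h hrh_mem)).mono_left hle))
      have tχ : Tendsto χ (𝓝[>] r_h) (𝓝[>] (0:ℝ)) := by
        rw [tendsto_nhdsWithin_iff]
        constructor
        · have := (hcχ r_h hrh_mem).mono_left hle
          rwa [hχrh] at this
        · filter_upwards [self_mem_nhdsWithin] with x hx
          exact (hA2 x hx).1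
      have tinv : Tendsto (fun r => (χ r)⁻¹) (𝓝[>] r_h) atTop :=
        tendsto_inv_nhdsGT_zero.comp tχ
      have := Tendsto.pos_mul_atTop (by linarith) t2 tinv
      refine this.congr (fun r => ?_)
      rw [div_eq_mul_inv]
    have hBneg : Tendsto (fun r => -(2 * deriv χ r / χ r)) (𝓝[>] r_h) atBot :=
      tendsto_neg_atBot_iff.mpr tB
    have hev : ∀ᶠ r in 𝓝[>] r_h, (fun r => deriv (deriv χ) r / deriv χ r + 3 / r) r ≤
        deriv (deriv χ) r_h / deriv χ r_h + 3 / r_h + 1 :=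
      tA.eventually (eventually_le_nhds (lt_add_one _))
    have hsum := tendsto_atBot_add_left_of_ge' (𝓝[>] r_h)
      (deriv (deriv χ) r_h / deriv χ r_h + 3 / r_h + 1) hev hBneg
    refine hsum.congr (fun r => ?_)
    rw [hHdef]; ring
  -- a point a in (r_h, r_I) with H a < 0
  obtain ⟨a, ha1, ha2, haneg⟩ : ∃ a, r_h < a ∧ a < r_I ∧ H a < 0 := by
    have h1 : ∀ᶠ r in 𝓝[>] r_h, H r < 0 := hHbot.eventually (eventually_lt_atBot 0)
    have h2 : Set.Ioo r_h r_I ∈ 𝓝[>] r_h := Ioo_mem_nhdsGT hrI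
    obtain ⟨x, hx, hxm⟩ := (h1.and (eventually_of_mem h2 (fun x hx => hx))).exists
    exact ⟨x, hxm.1, hxm.2, hx⟩
  -- H continuity
  have hHcont : ContinuousOn H (Set.Ioi r_h) := by
    have hsub' : Set.Ioi r_h ⊆ Set.Ioi (0:ℝ) := fun x hx => hrpos x (le_of_lt hx)
    rw [hHdef]
    apply ContinuousOn.add
    · apply ContinuousOn.sub
      · exact (hcχ''.mono hsub').div (hcχ'.mono hsub')
          (fun x hx => ne_of_gt (hχ'pos x (le_of_lt hx)))
      · exact (continuousOn_const.mul (hcχ'.mono hsub')).div (hcχ.mono hsub')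
          (fun x hx => ne_of_gt (hA2 x hx).1)
    · exact continuousOn_const.div continuousOn_id
        (fun x hx => ne_of_gt (hrpos x (le_of_lt hx)))
  -- IVT helper: opposite signs straddle r_I
  have hIVT : ∀ x y, r_h < x → x < y → H x * H y < 0 → x < r_I ∧ r_I < y := by
    intro x y hx hxy hsigns
    have hcont : ContinuousOn H (Set.Icc x y) :=
      hHcont.mono (fun z hz => lt_of_lt_of_le hx hz.1)
    have : ∃ z ∈ Set.Ioo x y, H z = 0 := by
      rcases mul_neg_iff.mp hsigns with ⟨hpx, hny⟩ | ⟨hnx, hpy⟩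
      · obtain ⟨z, hz, hz0⟩ := intermediate_value_Ioo' hxy.le hcont ⟨hny, hpx⟩
        exact ⟨z, hz, hz0⟩
      · obtain ⟨z, hz, hz0⟩ := intermediate_value_Ioo hxy.le hcont ⟨hnx, hpy⟩
        exact ⟨z, hz, hz0⟩
    obtain ⟨z, hz, hz0⟩ := this
    have := hA4u z ⟨lt_trans hx hz.1, hz0⟩
    subst this
    exact ⟨hz.1, hz.2⟩
  have hHne : ∀ r, r_h < r → r ≠ r_I → H r ≠ 0 := by
    intro r hr hne h0
    exact hne (hA4u r ⟨hr, h0⟩)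
  -- H < 0 on (r_h, r_I)
  have hHneg : ∀ r, r_h < r → r < r_I → H r < 0 := by
    intro r hr hrI'
    rcases lt_trichotomy (H r) 0 with h | h | h
    · exact h
    · exact absurd h (hHne r hr (ne_of_lt hrI'))
    · rcases lt_trichotomy r a with hra | hra | hra
      · have := hIVT r a hr hra (mul_neg_of_pos_of_neg h haneg)
        linarith [this.2]
      · rw [hra] at h; linarith
      · have := hIVT a r ha1 hra (mul_neg_of_neg_of_pos haneg h)
        linarith [this.1]
  -- asymptotics
  have hrχ'0 : Tendsto (fun r => r * deriv χ r) atTop (𝓝 0) := by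
    have := hA3b.mul tendsto_inv_atTop_zero
    rw [mul_zero] at this
    refine this.congr' ?_
    filter_upwards [eventually_gt_atTop (0:ℝ)] with r hr
    field_simp
  have hnum : Tendsto (fun r => M * (2 * χ r - r * deriv χ r)) atTop (𝓝 (2 * M)) := by
    have : Tendsto (fun r => 2 * χ r - r * deriv χ r) atTop (𝓝 2) := by
      have := (hA3a.const_mul 2).sub hrχ'0
      simpa using this
    have h := tendsto_const_nhds.mul this (f := fun _ : ℝ => M)
    convert h using 2
    ring
  have hMrG : Tendsto (fun r => M * r * G r) atTop (𝓝 1) := by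
    have h2M : (2 * M) ≠ 0 := by positivity
    have h := hnum.div hA3b h2M
    rw [div_self h2M] at h
    refine h.congr' ?_
    filter_upwards [eventually_gt_atTop (max r_h 0)] with r hr
    have hr0 : (0:ℝ) < r := lt_of_le_of_lt (le_max_right _ _) hr
    have hrh' : r_h < r := lt_of_le_of_lt (le_max_left _ _) hr
    have hχ' : deriv χ r ≠ 0 := ne_of_gt (hχ'pos r hrh'.le)
    rw [hG, Pi.div_apply]
    field_simp
  have hG0 : Tendsto G atTop (𝓝 0) := by
    have hinv : Tendsto (fun r : ℝ => (M * r)⁻¹) atTop (𝓝 0) := by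
      apply tendsto_inv_atTop_zero.comp
      exact tendsto_id.const_mul_atTop hM
    have := hMrG.mul hinv
    rw [mul_zero] at this
    refine this.congr' ?_
    filter_upwards [eventually_gt_atTop (0:ℝ)] with r hr
    have hMr : M * r ≠ 0 := by positivity
    field_simp
  have hGposev : ∀ᶠ r in atTop, 0 < G r := by
    filter_upwards [hMrG.eventually (eventually_gt_nhds (by norm_num : (1:ℝ)/2 < 1)),
      eventually_gt_atTop (0:ℝ)] with r h1 h2
    have hMr : 0 < M * r := by positivity
    nlinarith
  -- strict monotonicity on [r_h, r_I]
  have hmono : StrictMonoOn G (Set.Icc r_h r_I) := by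
    apply strictMonoOn_of_deriv_pos (convex_Icc _ _) (hGcont.mono Icc_subset_Ici_self)
    intro x hx
    rw [interior_Icc] at hx
    rw [hGd x hx.1]
    have hχpos : (0:ℝ) < χ x := (hA2 x hx.1).1
    have hd := hden x hx.1.le
    have hH := hHneg x hx.1 hx.2
    have : -2 * χ x / (x ^ 3 * deriv χ x) < 0 := by
      apply div_neg_of_neg_of_pos _ hd
      linarith
    exact mul_pos_of_neg_of_neg this hH
  -- H > 0 on (r_I, ∞)
  have hHpos : ∀ r, r_I < r → 0 < H r := by
    intro b hb
    by_contra hcon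
    push_neg at hcon
    have hbneg : H b < 0 :=
      lt_of_le_of_ne hcon (hHne b (lt_trans hrI hb) (ne_of_gt hb))
    -- then H < 0 on all of (r_I, ∞)
    have hallneg : ∀ y, r_I < y → H y < 0 := by
      intro y hy
      rcases lt_trichotomy (H y) 0 with h | h | h
      · exact h
      · exact absurd h (hHne y (lt_trans hrI hy) (ne_of_gt hy))
      · rcases lt_trichotomy y b with hyb | hyb | hyb
        · have := hIVT y b (lt_trans hrI hy) hyb (mul_neg_of_pos_of_neg h hbneg)
          linarith [this.1]
        · rw [hyb] at h; linarith
        · have := hIVT b y (lt_trans hrI hb) hyb (mul_neg_of_neg_of_pos hbneg h)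
          linarith [this.2]
    -- G strictly increasing on [r_I, ∞)
    have hmono2 : StrictMonoOn G (Set.Ici r_I) := by
      apply strictMonoOn_of_deriv_pos (convex_Ici _) (hGcont.mono (Ici_subset_Ici.mpr hrI.le))
      intro x hx
      rw [interior_Ici] at hx
      rw [hGd x (lt_trans hrI hx)]
      have hχpos : (0:ℝ) < χ x := (hA2 x (lt_trans hrI hx)).1
      have hd := hden x (le_of_lt (lt_trans hrI hx))
      have hH := hallneg x hx
      have : -2 * χ x / (x ^ 3 * deriv χ x) < 0 := by
        apply div_neg_of_neg_of_pos _ hd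
        linarith
      exact mul_pos_of_neg_of_neg this hH
    -- then G ≤ 0 on [r_I, ∞), contradicting eventual positivity
    have hle0 : ∀ y, r_I ≤ y → G y ≤ 0 := by
      intro y hy
      apply ge_of_tendsto hG0
      filter_upwards [eventually_gt_atTop y] with z hz
      exact le_of_lt (hmono2 hy (le_trans hy hz.le) hz)
    obtain ⟨z, hz1, hz2⟩ := (hGposev.and (eventually_gt_atTop r_I)).exists
    exact absurd (hle0 z hz2.le) (not_le.mpr hz1)
  -- G strictly decreasing on [r_I, ∞)
  have hanti : StrictAntiOn G (Set.Ici r_I) := by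
    apply strictAntiOn_of_deriv_neg (convex_Ici _) (hGcont.mono (Ici_subset_Ici.mpr hrI.le))
    intro x hx
    rw [interior_Ici] at hx
    rw [hGd x (lt_trans hrI hx)]
    have hχpos : (0:ℝ) < χ x := (hA2 x (lt_trans hrI hx)).1
    have hd := hden x (le_of_lt (lt_trans hrI hx))
    have hH := hHpos x hx
    have hneg : -2 * χ x / (x ^ 3 * deriv χ x) < 0 := by
      apply div_neg_of_neg_of_pos _ hd
      linarith
    exact mul_neg_of_neg_of_pos hneg hH
  -- G > 0 on [r_I, ∞)
  have hGpos_ge : ∀ r, r_I ≤ r → 0 < G r := by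
    intro r hr
    obtain ⟨z, hz1, hz2⟩ := (hGposev.and (eventually_gt_atTop r)).exists
    have : G z < G r := hanti hr (le_trans hr hz2.le) hz2
    linarith
  have hGrI : 0 < G r_I := hGpos_ge r_I le_rfl
  -- the photon sphere radius via IVT
  obtain ⟨r_ph, hph_mem, hGph⟩ : ∃ r_ph ∈ Set.Ioo r_h r_I, G r_ph = 0 := by
    have hcont : ContinuousOn G (Set.Icc r_h r_I) := hGcont.mono Icc_subset_Ici_self
    have h0 : (0:ℝ) ∈ Set.Ioo (G r_h) (G r_I) := by
      rw [hGrh]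
      constructor
      · apply div_neg_of_neg_of_pos <;> [norm_num; positivity]
      · exact hGrI
    obtain ⟨z, hz, hz0⟩ := intermediate_value_Ioo hrI.le hcont h0
    exact ⟨z, hz, hz0⟩
  have hph1 : r_h < r_ph := hph_mem.1
  have hph2 : r_ph < r_I := hph_mem.2
  refine ⟨r_ph, r_I, hph1, hph2, hGrh, hGph, ?_, ?_, ?_, ?_, ?_, hGrI, ?_, hG0, hMrG, ?_⟩
  · -- G < 0 left of r_ph
    intro r hr hrph
    have h := hmono ⟨hr, le_of_lt (lt_trans hrph hph2)⟩ ⟨hph1.le, hph2.le⟩ hrph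
    rw [hGph] at h
    exact h
  · -- G > 0 right of r_ph
    intro r hr
    rcases le_or_gt r r_I with h | h
    · have h2 := hmono ⟨hph1.le, hph2.le⟩ ⟨le_of_lt (lt_trans hph1 hr), h⟩ hr
      rw [hGph] at h2
      exact h2
    · exact hGpos_ge r h.le
  · -- uniqueness of zero
    intro r hr hGr
    rcases lt_trichotomy r r_ph with h | h | h
    · exfalso
      have hlt := hmono ⟨hr.le, (lt_trans h hph2).le⟩ ⟨hph1.le, hph2.le⟩ h
      rw [hGph, hGr] at hlt
      exact lt_irrefl 0 hlt
    · exact h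
    · exfalso
      rcases le_or_gt r r_I with h' | h'
      · have hlt := hmono ⟨hph1.le, hph2.le⟩ ⟨(lt_trans hph1 h).le, h'⟩ h
        rw [hGph, hGr] at hlt
        exact lt_irrefl 0 hlt
      · have := hGpos_ge r h'.le
        rw [hGr] at this
        exact lt_irrefl 0 this
  · -- deriv G r_I = 0
    rw [hGd r_I hrI]
    have hH0 : H r_I = 0 := hHrI
    rw [hH0, mul_zero]
  · -- uniqueness of critical point
    intro r hr hdr
    rw [hGd r hr] at hdr
    have hχpos : (0:ℝ) < χ r := (hA2 r hr).1
    have hd := hden r hr.le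
    have hne : -2 * χ r / (r ^ 3 * deriv χ r) ≠ 0 := by
      apply ne_of_lt
      apply div_neg_of_neg_of_pos _ hd
      linarith
    have hH0 : H r = 0 := by
      rcases mul_eq_zero.mp hdr with h | h
      · exact absurd h hne
      · exact h
    exact hA4u r ⟨hr, hH0⟩
  · -- strict global max
    intro r hr hne
    rcases lt_or_gt_of_ne hne with h | h
    · exact hmono ⟨hr, h.le⟩ ⟨le_of_lt hrI, le_rfl⟩ h
    · exact hanti (Set.mem_Ici.mpr le_rfl) (le_of_lt h) h
  · -- photon sphere condition
    have := hG r_ph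
    rw [hGph] at this
    have hd : r_ph ^ 3 * deriv χ r_ph ≠ 0 := ne_of_gt (hden r_ph hph1.le)
    have hnum0 : 2 * χ r_ph - r_ph * deriv χ r_ph = 0 := by
      rcases div_eq_zero_iff.mp this.symm with h | h
      · exact h
      · exact absurd h hd
    linarith
end

section
/- If L = L_ISCO, then V_{m,L}'(r) ≥ 0 for all r ∈ (r_h, ∞), with V_{m,L}'(r) = 0 only at r = r_ISCO, and moreover V_{m,L}''(r_ISCO) = 0; in particular r_ISCO is an inflection point of V_{m,L_ISCO} and V_{m,L_ISCO} is (non-strictly) monotonically increasing on (r_h, ∞). -/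
open Real Filter Set Topology

/-- for `L = L_ISCO` the effective potential has nonnegative derivative on
`(r_h,∞)`, vanishing only at `r_ISCO`, where also the second derivative vanishes
(an inflection point); in particular `V_{m,L_ISCO}` is monotonically increasing. -/
theorem stmt2
    (χ : ℝ → ℝ) (r_h M m r_ISCO L_ISCO : ℝ)
    (hrh : 0 < r_h)
    (hsmooth : ContDiffOn ℝ (⊤ : ℕ∞) χ (Set.Ioi 0))
    (hA1 : χ r_h = 0 ∧ 0 < deriv χ r_h)
    (hA2 : ∀ r, r_h < r → 0 < χ r ∧ 0 < deriv χ r)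
    (hM : 0 < M)
    (hA3a : Tendsto χ atTop (𝓝 1))
    (hA3b : Tendsto (fun r => r ^ 2 * deriv χ r) atTop (𝓝 (2 * M)))
    (hA4 : ∃! r, r ∈ Set.Ioi r_h ∧
      deriv (deriv χ) r / deriv χ r - 2 * deriv χ r / χ r + 3 / r = 0)
    (G : ℝ → ℝ)
    (hG : ∀ r, G r = (2 * χ r - r * deriv χ r) / (r ^ 3 * deriv χ r))
    -- r_ISCO is the unique strict global maximum point of G on [r_h,∞), with G(r_ISCO) > 0
    (h_ISCO_mem : r_h < r_ISCO)
    (h_ISCO_pos : 0 < G r_ISCO)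
    (h_ISCO_max : ∀ r, r_h ≤ r → r ≠ r_ISCO → G r < G r_ISCO)
    (hm : 0 < m)
    (hLISCO : L_ISCO = m / Real.sqrt (G r_ISCO))
    (V : ℝ → ℝ)
    (hV : ∀ r, V r = χ r * (m ^ 2 + L_ISCO ^ 2 / r ^ 2)) :
    (∀ r, r_h < r → 0 ≤ deriv V r) ∧
    (∀ r, r_h < r → deriv V r = 0 → r = r_ISCO) ∧
    deriv V r_ISCO = 0 ∧
    deriv (deriv V) r_ISCO = 0 ∧
    MonotoneOn V (Set.Ioi r_h) := by
  have hLpos : 0 < L_ISCO := by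
    rw [hLISCO]
    exact div_pos hm (Real.sqrt_pos.mpr h_ISCO_pos)
  have hL2 : L_ISCO ^ 2 * G r_ISCO = m ^ 2 := by
    rw [hLISCO, div_pow, Real.sq_sqrt h_ISCO_pos.le]
    field_simp
  have hχd : ∀ r : ℝ, 0 < r → DifferentiableAt ℝ χ r := fun r hr =>
    (hsmooth.contDiffAt (isOpen_Ioi.mem_nhds hr)).differentiableAt (by simp)
  have hχ'smooth : ContDiffOn ℝ (⊤ : ℕ∞) (deriv χ) (Set.Ioi 0) :=
    hsmooth.deriv_of_isOpen isOpen_Ioi (by simp)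
  have hχ'd : ∀ r : ℝ, 0 < r → DifferentiableAt ℝ (deriv χ) r := fun r hr =>
    (hχ'smooth.contDiffAt (isOpen_Ioi.mem_nhds hr)).differentiableAt (by simp)
  have key : ∀ r, r_h < r →
      HasDerivAt V (deriv χ r * L_ISCO ^ 2 * (G r_ISCO - G r)) r := by
    intro r hr
    have hr0 : (0 : ℝ) < r := hrh.trans hr
    have hχ' := (hA2 r hr).2
    have hr0' : r ≠ 0 := hr0.ne'
    have h1 : HasDerivAt (fun x : ℝ => m ^ 2 + L_ISCO ^ 2 / x ^ 2)
        (0 + (0 * r ^ 2 - L_ISCO ^ 2 * (2 * r ^ 1)) / (r ^ 2) ^ 2) r :=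
      (hasDerivAt_const r (m ^ 2)).add
        ((hasDerivAt_const r (L_ISCO ^ 2)).div (hasDerivAt_pow 2 r) (pow_ne_zero 2 hr0'))
    have h2 := ((hχd r hr0).hasDerivAt).mul h1
    have hVeq : V = fun x => χ x * (m ^ 2 + L_ISCO ^ 2 / x ^ 2) := funext hV
    rw [hVeq]
    refine h2.congr_deriv ?_
    rw [hG r, ← hL2]
    field_simp
    ring
  have hderiv : ∀ r, r_h < r → deriv V r = deriv χ r * L_ISCO ^ 2 * (G r_ISCO - G r) :=
    fun r hr => (key r hr).deriv
  have hGle : ∀ r, r_h < r → G r ≤ G r_ISCO := by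
    intro r hr
    by_cases h : r = r_ISCO
    · rw [h]
    · exact (h_ISCO_max r hr.le h).le
  have hnn : ∀ r, r_h < r → 0 ≤ deriv V r := by
    intro r hr
    rw [hderiv r hr]
    exact mul_nonneg (mul_nonneg (hA2 r hr).2.le (sq_nonneg _))
      (sub_nonneg.mpr (hGle r hr))
  have hRpos : (0 : ℝ) < r_ISCO := hrh.trans h_ISCO_mem
  refine ⟨hnn, ?_, ?_, ?_, ?_⟩
  · intro r hr h0
    by_contra hne
    have h1 := hderiv r hr
    rw [h0] at h1
    have hpos : 0 < deriv χ r * L_ISCO ^ 2 * (G r_ISCO - G r) :=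
      mul_pos (mul_pos (hA2 r hr).2 (pow_pos hLpos 2))
        (sub_pos.mpr (h_ISCO_max r hr.le hne))
    linarith
  · rw [hderiv r_ISCO h_ISCO_mem, sub_self, mul_zero]
  · have hχ'I := (hA2 r_ISCO h_ISCO_mem).2
    have hGdiff : DifferentiableAt ℝ G r_ISCO := by
      have hGfun : G = fun r => (2 * χ r - r * deriv χ r) / (r ^ 3 * deriv χ r) :=
        funext hG
      rw [hGfun]
      exact DifferentiableAt.div
        (((hχd _ hRpos).const_mul 2).sub (differentiableAt_fun_id.mul (hχ'd _ hRpos)))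
        ((differentiableAt_fun_id.pow 3).mul (hχ'd _ hRpos))
        (mul_ne_zero (pow_ne_zero 3 hRpos.ne') hχ'I.ne')
    have hGderiv0 : deriv G r_ISCO = 0 := by
      apply IsLocalMax.deriv_eq_zero
      filter_upwards [Ioi_mem_nhds h_ISCO_mem] with r hr using hGle r hr
    have hEvEq : deriv V =ᶠ[𝓝 r_ISCO]
        fun r => deriv χ r * L_ISCO ^ 2 * (G r_ISCO - G r) := by
      filter_upwards [Ioi_mem_nhds h_ISCO_mem] with r hr using hderiv r hr
    have hW : HasDerivAt (fun r => deriv χ r * L_ISCO ^ 2 * (G r_ISCO - G r))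
        (deriv (deriv χ) r_ISCO * L_ISCO ^ 2 * (G r_ISCO - G r_ISCO)
          + deriv χ r_ISCO * L_ISCO ^ 2 * (0 - deriv G r_ISCO)) r_ISCO :=
      ((hχ'd _ hRpos).hasDerivAt.mul_const (L_ISCO ^ 2)).mul
        ((hasDerivAt_const _ (G r_ISCO)).sub hGdiff.hasDerivAt)
    rw [hEvEq.deriv_eq, hW.deriv, hGderiv0]
    ring
  · apply monotoneOn_of_deriv_nonneg (convex_Ioi r_h)
    · exact fun r hr => (key r hr).differentiableAt.continuousAt.continuousWithinAt
    · intro r hr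
      rw [interior_Ioi] at hr
      exact (key r hr).differentiableAt.differentiableWithinAt
    · intro r hr
      rw [interior_Ioi] at hr
      exact hnn r hr
end

section
/- If L > L_ISCO, then V_{m,L}' has exactly two zeros in (r_h, ∞), say r_max(L) < r_min(L), and these satisfy r_ph < r_max(L) < r_ISCO < r_min(L); moreover r_max(L) is a strict local maximum point of V_{m,L} and r_min(L) is a strict local minimum point of V_{m,L}. -/
open Real Filter Set Topology

private lemma sign_const_aux {f : ℝ → ℝ} {s : Set ℝ} (hs : s.OrdConnected)
    (hf : ContinuousOn f s) (h0 : ∀ x ∈ s, f x ≠ 0) {a b : ℝ}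
    (ha : a ∈ s) (hb : b ∈ s) (hfa : 0 < f a) : 0 < f b := by
  by_contra hfb
  push_neg at hfb
  have hfb' : f b < 0 := lt_of_le_of_ne hfb (h0 b hb)
  have hsub := hs.uIcc_subset ha hb
  have h0m : (0:ℝ) ∈ uIcc (f a) (f b) := by
    rw [Set.mem_uIcc]; right; exact ⟨hfb'.le, hfa.le⟩
  obtain ⟨x, hx, hfx⟩ := intermediate_value_uIcc (hf.mono hsub) h0m
  exact h0 x (hsub hx) hfx

/-- for `L > L_ISCO`, the derivative of the effective potential `V_{m,L}`
has exactly two zeros `r_max(L) < r_min(L)` in `(r_h,∞)`, with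
`r_ph < r_max(L) < r_ISCO < r_min(L)`; `r_max(L)` is a strict local maximum point and
`r_min(L)` a strict local minimum point of `V_{m,L}`. -/
theorem stmt3
    (χ : ℝ → ℝ) (r_h M m L r_ph r_ISCO L_ISCO : ℝ)
    (hrh : 0 < r_h)
    (hsmooth : ContDiffOn ℝ (⊤ : ℕ∞) χ (Set.Ioi 0))
    (hA1 : χ r_h = 0 ∧ 0 < deriv χ r_h)
    (hA2 : ∀ r, r_h < r → 0 < χ r ∧ 0 < deriv χ r)
    (hM : 0 < M)
    (hA3a : Tendsto χ atTop (𝓝 1))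
    (hA3b : Tendsto (fun r => r ^ 2 * deriv χ r) atTop (𝓝 (2 * M)))
    (hA4 : ∃! r, r ∈ Set.Ioi r_h ∧
      deriv (deriv χ) r / deriv χ r - 2 * deriv χ r / χ r + 3 / r = 0)
    (G : ℝ → ℝ)
    (hG : ∀ r, G r = (2 * χ r - r * deriv χ r) / (r ^ 3 * deriv χ r))
    -- r_ph is the unique zero of G in (r_h,∞)
    (h_ph_mem : r_h < r_ph)
    (h_ph_zero : G r_ph = 0)
    (h_ph_unique : ∀ r, r_h < r → G r = 0 → r = r_ph)
    -- r_ISCO ∈ (r_ph,∞) is the unique strict global maximum point of G, with G(r_ISCO) > 0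
    (h_ISCO_mem : r_ph < r_ISCO)
    (h_ISCO_pos : 0 < G r_ISCO)
    (h_ISCO_max : ∀ r, r_h ≤ r → r ≠ r_ISCO → G r < G r_ISCO)
    (hm : 0 < m)
    (hLISCO : L_ISCO = m / Real.sqrt (G r_ISCO))
    (hL : L_ISCO < L)
    (V : ℝ → ℝ)
    (hV : ∀ r, V r = χ r * (m ^ 2 + L ^ 2 / r ^ 2)) :
    ∃ rmax rmin : ℝ,
      r_ph < rmax ∧ rmax < r_ISCO ∧ r_ISCO < rmin ∧
      deriv V rmax = 0 ∧ deriv V rmin = 0 ∧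
      (∀ r, r_h < r → deriv V r = 0 → r = rmax ∨ r = rmin) ∧
      (∀ᶠ r in 𝓝[≠] rmax, V r < V rmax) ∧
      (∀ᶠ r in 𝓝[≠] rmin, V rmin < V r) := by
  have hχpos : ∀ r, r_h < r → 0 < χ r := fun r hr => (hA2 r hr).1
  have hχ'pos : ∀ r, r_h < r → 0 < deriv χ r := fun r hr => (hA2 r hr).2
  have hrpos : ∀ r, r_h < r → (0:ℝ) < r := fun r hr => hrh.trans hr
  have hrISCO_h : r_h < r_ISCO := h_ph_mem.trans h_ISCO_mem
  -- differentiability facts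
  have hsmooth' : ContDiffOn ℝ (⊤ : ℕ∞) (deriv χ) (Set.Ioi 0) :=
    hsmooth.deriv_of_isOpen (m := (⊤ : ℕ∞)) isOpen_Ioi (by simp)
  have hdiffχ : ∀ r, 0 < r → HasDerivAt χ (deriv χ r) r := fun r hr =>
    ((hsmooth.differentiableOn (by simp)).differentiableAt (Ioi_mem_nhds hr)).hasDerivAt
  have hdiffχ' : ∀ r, 0 < r → HasDerivAt (deriv χ) (deriv (deriv χ) r) r := fun r hr =>
    ((hsmooth'.differentiableOn (by simp)).differentiableAt (Ioi_mem_nhds hr)).hasDerivAt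
  have hcontχ : ContinuousOn χ (Set.Ioi 0) := hsmooth.continuousOn
  have hcontχ' : ContinuousOn (deriv χ) (Set.Ioi 0) := hsmooth'.continuousOn
  have hcontχ'' : ContinuousOn (deriv (deriv χ)) (Set.Ioi 0) :=
    ((hsmooth'.deriv_of_isOpen (m := (⊤ : ℕ∞)) isOpen_Ioi (by simp))).continuousOn
  have hIoi : Set.Ioi r_h ⊆ Set.Ioi 0 := fun r hr => hrh.trans hr
  -- L and c
  have hsg : 0 < Real.sqrt (G r_ISCO) := Real.sqrt_pos.2 h_ISCO_pos
  have hL0 : 0 < L := lt_trans (by rw [hLISCO]; positivity) hL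
  set c : ℝ := m ^ 2 / L ^ 2 with hc_def
  have hc_pos : 0 < c := by positivity
  have hc_lt : c < G r_ISCO := by
    have h1 : m < L * Real.sqrt (G r_ISCO) := by
      rw [hLISCO] at hL
      calc m = m / Real.sqrt (G r_ISCO) * Real.sqrt (G r_ISCO) := by field_simp
        _ < L * Real.sqrt (G r_ISCO) := mul_lt_mul_of_pos_right hL hsg
    have h2 : m ^ 2 < L ^ 2 * G r_ISCO := by
      calc m ^ 2 = m * m := sq m
        _ < (L * Real.sqrt (G r_ISCO)) * (L * Real.sqrt (G r_ISCO)) :=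
            mul_self_lt_mul_self hm.le h1
        _ = L ^ 2 * (Real.sqrt (G r_ISCO) * Real.sqrt (G r_ISCO)) := by ring
        _ = L ^ 2 * G r_ISCO := by rw [Real.mul_self_sqrt h_ISCO_pos.le]
    rw [hc_def, div_lt_iff₀ (by positivity)]
    linarith [mul_comm (L ^ 2) (G r_ISCO)]
  -- derivative of V
  have hVd : ∀ r, r_h < r → HasDerivAt V (deriv χ r * (m ^ 2 - L ^ 2 * G r)) r := by
    intro r hr
    have hr0 : (0:ℝ) < r := hrpos r hr
    have hχ' := hχ'pos r hr
    have h2 : HasDerivAt (fun x : ℝ => m ^ 2 + L ^ 2 / x ^ 2) (-(2 * L ^ 2) / r ^ 3) r := by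
      have hp : HasDerivAt (fun x : ℝ => x ^ 2) (2 * r) r := by
        simpa using hasDerivAt_pow 2 r
      have h3 := ((hasDerivAt_const r (L ^ 2)).div hp (by positivity)).const_add (m ^ 2)
      refine h3.congr_deriv ?_
      field_simp
      ring
    have hd := (hdiffχ r hr0).mul h2
    have hVfun : V = fun x => χ x * (m ^ 2 + L ^ 2 / x ^ 2) := funext hV
    rw [hVfun]
    refine hd.congr_deriv ?_
    rw [hG r]
    field_simp
    ring
  -- E and the derivative of G
  set E : ℝ → ℝ := fun r => deriv (deriv χ) r / deriv χ r - 2 * deriv χ r / χ r + 3 / r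
    with hE_def
  have hGd : ∀ r, r_h < r → HasDerivAt G (-(2 * χ r) / (r ^ 3 * deriv χ r) * E r) r := by
    intro r hr
    have hr0 := hrpos r hr
    have hχ := hχpos r hr
    have hχ' := hχ'pos r hr
    have hGfun : G = fun x => (2 * χ x - x * deriv χ x) / (x ^ 3 * deriv χ x) := funext hG
    have hN : HasDerivAt (fun x => 2 * χ x - x * deriv χ x)
        (2 * deriv χ r - (1 * deriv χ r + r * deriv (deriv χ) r)) r :=
      ((hdiffχ r hr0).const_mul 2).sub ((hasDerivAt_id r).mul (hdiffχ' r hr0))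
    have hp : HasDerivAt (fun x : ℝ => x ^ 3) (3 * r ^ 2) r := by
      simpa using hasDerivAt_pow 3 r
    have hD : HasDerivAt (fun x => x ^ 3 * deriv χ x)
        (3 * r ^ 2 * deriv χ r + r ^ 3 * deriv (deriv χ) r) r := hp.mul (hdiffχ' r hr0)
    have hDne : r ^ 3 * deriv χ r ≠ 0 := by positivity
    have hq := hN.div hD hDne
    rw [hGfun]
    refine hq.congr_deriv ?_
    simp only [hE_def]
    field_simp
    ring
  have hderivG : ∀ r, r_h < r → deriv G r = -(2 * χ r) / (r ^ 3 * deriv χ r) * E r :=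
    fun r hr => (hGd r hr).deriv
  have hfac : ∀ r, r_h < r → -(2 * χ r) / (r ^ 3 * deriv χ r) < 0 := by
    intro r hr
    apply div_neg_of_neg_of_pos
    · have := hχpos r hr; linarith
    · have := hrpos r hr; have := hχ'pos r hr; positivity
  -- E vanishes exactly at r_ISCO
  have hlocmax : IsLocalMax G r_ISCO := by
    filter_upwards [Ioi_mem_nhds hrISCO_h] with r hr
    rcases eq_or_ne r r_ISCO with h | h
    · rw [h]
    · exact (h_ISCO_max r (le_of_lt hr) h).le
  have hE_ISCO : E r_ISCO = 0 := by
    have h0 := hlocmax.hasDerivAt_eq_zero (hGd r_ISCO hrISCO_h)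
    rcases mul_eq_zero.1 h0 with h | h
    · exact absurd h (ne_of_lt (hfac r_ISCO hrISCO_h))
    · exact h
  have hEne : ∀ r, r_h < r → r ≠ r_ISCO → E r ≠ 0 := by
    intro r hr hne hE
    obtain ⟨r₀, _, huniq⟩ := hA4
    have h1 := huniq r ⟨hr, by simpa [hE_def] using hE⟩
    have h2 := huniq r_ISCO ⟨hrISCO_h, by simpa [hE_def] using hE_ISCO⟩
    exact hne (h1.trans h2.symm)
  have hdGne : ∀ r, r_h < r → r ≠ r_ISCO → deriv G r ≠ 0 := by
    intro r hr hne
    rw [hderivG r hr]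
    exact mul_ne_zero (ne_of_lt (hfac r hr)) (hEne r hr hne)
  -- continuity of deriv G
  have c1 : ContinuousOn χ (Set.Ioi r_h) := hcontχ.mono hIoi
  have c2 : ContinuousOn (deriv χ) (Set.Ioi r_h) := hcontχ'.mono hIoi
  have c3 : ContinuousOn (deriv (deriv χ)) (Set.Ioi r_h) := hcontχ''.mono hIoi
  have cE : ContinuousOn E (Set.Ioi r_h) := by
    rw [hE_def]
    exact ((c3.div c2 fun r hr => (hχ'pos r hr).ne').sub
      ((continuousOn_const.mul c2).div c1 fun r hr => (hχpos r hr).ne')).add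
      (continuousOn_const.div continuousOn_id fun r hr => (hrpos r hr).ne')
  have hcontdG : ContinuousOn (deriv G) (Set.Ioi r_h) := by
    have hform : ContinuousOn (fun r => -(2 * χ r) / (r ^ 3 * deriv χ r) * E r)
        (Set.Ioi r_h) := by
      refine ContinuousOn.mul (ContinuousOn.div ?_ ?_ ?_) cE
      · exact (continuousOn_const.mul c1).neg
      · exact (continuousOn_id.pow 3).mul c2
      · intro r hr
        exact (mul_pos (pow_pos (hrpos r hr) 3) (hχ'pos r hr)).ne'
    exact hform.congr fun r hr => hderivG r hr
  -- sign of deriv G on (r_h, r_ISCO)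
  have hsignIoo : ∀ r ∈ Set.Ioo r_h r_ISCO, 0 < deriv G r := by
    have hOC : (Set.Ioo r_h r_ISCO).OrdConnected := ordConnected_Ioo
    have hcont : ContinuousOn (deriv G) (Set.Ioo r_h r_ISCO) :=
      hcontdG.mono Set.Ioo_subset_Ioi_self
    have hne : ∀ x ∈ Set.Ioo r_h r_ISCO, deriv G x ≠ 0 :=
      fun x hx => hdGne x hx.1 (ne_of_lt hx.2)
    have hph_mem : r_ph ∈ Set.Ioo r_h r_ISCO := ⟨h_ph_mem, h_ISCO_mem⟩
    rcases lt_or_gt_of_ne (hne r_ph hph_mem) with hneg | hpos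
    · exfalso
      have hallneg : ∀ r ∈ Set.Ioo r_h r_ISCO, deriv G r < 0 := by
        intro r hr
        have := sign_const_aux hOC hcont.neg (fun x hx => neg_ne_zero.2 (hne x hx))
          hph_mem hr (by rw [Pi.neg_apply]; linarith)
        rw [Pi.neg_apply] at this
        linarith
      have hanti : StrictAntiOn G (Set.Icc r_ph r_ISCO) := by
        apply strictAntiOn_of_deriv_neg (convex_Icc _ _)
        · exact continuousOn_of_forall_continuousAt fun x hx =>
            (hGd x (lt_of_lt_of_le h_ph_mem hx.1)).continuousAt
        · intro x hx
          rw [interior_Icc] at hx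
          exact hallneg x ⟨h_ph_mem.trans hx.1, hx.2⟩
      have := hanti ⟨le_refl _, h_ISCO_mem.le⟩ ⟨h_ISCO_mem.le, le_refl _⟩ h_ISCO_mem
      rw [h_ph_zero] at this
      linarith
    · intro r hr
      exact sign_const_aux hOC hcont hne hph_mem hr hpos
  have hGmono : StrictMonoOn G (Set.Ioc r_h r_ISCO) := by
    apply strictMonoOn_of_deriv_pos (convex_Ioc _ _)
    · exact continuousOn_of_forall_continuousAt fun x hx => (hGd x hx.1).continuousAt
    · intro x hx
      rw [interior_Ioc] at hx
      exact hsignIoo x hx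
  -- sign of deriv G on (r_ISCO, ∞)
  have hsignIoi : ∀ r ∈ Set.Ioi r_ISCO, deriv G r < 0 := by
    have hOC : (Set.Ioi r_ISCO).OrdConnected := ordConnected_Ioi
    have hcont : ContinuousOn (deriv G) (Set.Ioi r_ISCO) :=
      hcontdG.mono (Set.Ioi_subset_Ioi hrISCO_h.le)
    have hne : ∀ x ∈ Set.Ioi r_ISCO, deriv G x ≠ 0 :=
      fun x hx => hdGne x (hrISCO_h.trans hx) (ne_of_gt hx)
    have htest : r_ISCO + 1 ∈ Set.Ioi r_ISCO := by simp
    rcases lt_or_gt_of_ne (hne _ htest) with hneg | hpos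
    · intro r hr
      have := sign_const_aux hOC hcont.neg (fun x hx => neg_ne_zero.2 (hne x hx))
        htest hr (by rw [Pi.neg_apply]; linarith)
      rw [Pi.neg_apply] at this
      linarith
    · exfalso
      have hallpos : ∀ r ∈ Set.Ioi r_ISCO, 0 < deriv G r :=
        fun r hr => sign_const_aux hOC hcont hne htest hr hpos
      have hmono : StrictMonoOn G (Set.Ici r_ISCO) := by
        apply strictMonoOn_of_deriv_pos (convex_Ici _)
        · exact continuousOn_of_forall_continuousAt fun x hx =>
            (hGd x (lt_of_lt_of_le hrISCO_h hx)).continuousAt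
        · intro x hx
          rw [interior_Ici] at hx
          exact hallpos x hx
      have h1 := hmono (Set.self_mem_Ici) (Set.mem_Ici.2 (lt_add_one r_ISCO).le)
        (lt_add_one r_ISCO)
      have h2 := h_ISCO_max (r_ISCO + 1) (by linarith) (by linarith)
      linarith
  have hGanti : StrictAntiOn G (Set.Ici r_ISCO) := by
    apply strictAntiOn_of_deriv_neg (convex_Ici _)
    · exact continuousOn_of_forall_continuousAt fun x hx =>
        (hGd x (lt_of_lt_of_le hrISCO_h hx)).continuousAt
    · intro x hx
      rw [interior_Ici] at hx
      exact hsignIoi x hx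
  -- existence of rmax via IVT
  have hcontG1 : ContinuousOn G (Set.Icc r_ph r_ISCO) :=
    continuousOn_of_forall_continuousAt fun x hx => (hGd x (lt_of_lt_of_le h_ph_mem hx.1)).continuousAt
  obtain ⟨rmax, hrmax_mem, hGrmax⟩ :=
    intermediate_value_Ioo h_ISCO_mem.le hcontG1 (by rw [h_ph_zero]; exact ⟨hc_pos, hc_lt⟩)
  have hrmax1 : r_ph < rmax := hrmax_mem.1
  have hrmax2 : rmax < r_ISCO := hrmax_mem.2
  have hrmax_h : r_h < rmax := h_ph_mem.trans hrmax1
  -- G tends to 0 at infinity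
  have hGtop : Tendsto G atTop (𝓝 0) := by
    have hGfun : G = fun r => (2 * χ r - r * deriv χ r) / (r ^ 3 * deriv χ r) := funext hG
    rw [hGfun]
    have hnum : Tendsto (fun r => 2 * χ r - r * deriv χ r) atTop (𝓝 2) := by
      have h1 : Tendsto (fun r => 2 * χ r) atTop (𝓝 2) := by
        simpa using hA3a.const_mul 2
      have h2 : Tendsto (fun r => r * deriv χ r) atTop (𝓝 0) := by
        have h3 : Tendsto (fun r : ℝ => (r ^ 2 * deriv χ r) * r⁻¹) atTop (𝓝 (2 * M * 0)) :=
          hA3b.mul tendsto_inv_atTop_zero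
        rw [mul_zero] at h3
        apply h3.congr'
        filter_upwards [eventually_gt_atTop (0:ℝ)] with r hr
        field_simp
      simpa using h1.sub h2
    have hden : Tendsto (fun r => r ^ 3 * deriv χ r) atTop atTop := by
      have h4 : Tendsto (fun r : ℝ => r * (r ^ 2 * deriv χ r)) atTop atTop :=
        Tendsto.atTop_mul_pos (by linarith) tendsto_id hA3b
      exact h4.congr fun r => by ring
    exact hnum.div_atTop hden
  -- existence of rmin via IVT
  obtain ⟨R, hR1, hR2⟩ :=
    ((hGtop.eventually (gt_mem_nhds hc_pos)).and (eventually_gt_atTop r_ISCO)).exists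
  have hcontG2 : ContinuousOn G (Set.Icc r_ISCO R) :=
    continuousOn_of_forall_continuousAt fun x hx => (hGd x (lt_of_lt_of_le hrISCO_h hx.1)).continuousAt
  obtain ⟨rmin, hrmin_mem, hGrmin⟩ :=
    intermediate_value_Ioo' hR2.le hcontG2 ⟨hR1, hc_lt⟩
  have hrmin1 : r_ISCO < rmin := hrmin_mem.1
  have hrmin_h : r_h < rmin := hrISCO_h.trans hrmin1
  -- deriv V zero iff G = c
  have hdV : ∀ r, r_h < r → deriv V r = deriv χ r * (m ^ 2 - L ^ 2 * G r) :=
    fun r hr => (hVd r hr).deriv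
  have hzero_iff : ∀ r, r_h < r → (deriv V r = 0 ↔ G r = c) := by
    intro r hr
    rw [hdV r hr]
    constructor
    · intro h
      rcases mul_eq_zero.1 h with h | h
      · exact absurd h (hχ'pos r hr).ne'
      · rw [hc_def, eq_div_iff (by positivity : (L:ℝ) ^ 2 ≠ 0)]
        linear_combination -h
    · intro h
      rw [h, hc_def]
      have hL2 : (L:ℝ) ^ 2 ≠ 0 := by positivity
      field_simp
      ring
  have hdVmax0 : deriv V rmax = 0 := (hzero_iff rmax hrmax_h).2 hGrmax
  have hdVmin0 : deriv V rmin = 0 := (hzero_iff rmin hrmin_h).2 hGrmin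
  -- uniqueness
  have huniq : ∀ r, r_h < r → deriv V r = 0 → r = rmax ∨ r = rmin := by
    intro r hr h0
    have hGr : G r = c := (hzero_iff r hr).1 h0
    rcases le_or_gt r r_ISCO with hle | hlt
    · left
      exact hGmono.injOn ⟨hr, hle⟩ ⟨hrmax_h, hrmax2.le⟩ (hGr.trans hGrmax.symm)
    · right
      exact hGanti.injOn (Set.mem_Ici.2 hlt.le) (Set.mem_Ici.2 hrmin1.le)
        (hGr.trans hGrmin.symm)
  -- monotonicity of V
  have hLsq : (0:ℝ) < L ^ 2 := by positivity
  have hcmul : L ^ 2 * c = m ^ 2 := by rw [hc_def]; field_simp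
  have hdVpos_left : ∀ x ∈ Set.Ioo r_h rmax, 0 < deriv V x := by
    intro x hx
    rw [hdV x hx.1]
    have hGx : G x < c := by
      rw [← hGrmax]
      exact hGmono ⟨hx.1, (hx.2.trans hrmax2).le⟩ ⟨hrmax_h, hrmax2.le⟩ hx.2
    have h5 : L ^ 2 * G x < m ^ 2 := by
      have := mul_lt_mul_of_pos_left hGx hLsq
      linarith [hcmul]
    exact mul_pos (hχ'pos x hx.1) (by linarith)
  have hVmono1 : StrictMonoOn V (Set.Icc r_ph rmax) := by
    apply strictMonoOn_of_deriv_pos (convex_Icc _ _)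
    · exact continuousOn_of_forall_continuousAt fun x hx =>
        (hVd x (lt_of_lt_of_le h_ph_mem hx.1)).continuousAt
    · intro x hx
      rw [interior_Icc] at hx
      exact hdVpos_left x ⟨h_ph_mem.trans hx.1, hx.2⟩
  have hdVneg : ∀ x ∈ Set.Ioo rmax rmin, deriv V x < 0 := by
    intro x hx
    have hx_h : r_h < x := hrmax_h.trans hx.1
    rw [hdV x hx_h]
    have hGx : c < G x := by
      rcases le_or_gt x r_ISCO with hle | hlt
      · rw [← hGrmax]
        exact hGmono ⟨hrmax_h, hrmax2.le⟩ ⟨hx_h, hle⟩ hx.1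
      · rw [← hGrmin]
        exact hGanti (Set.mem_Ici.2 hlt.le) (Set.mem_Ici.2 hrmin1.le) hx.2
    have h5 : m ^ 2 < L ^ 2 * G x := by
      have := mul_lt_mul_of_pos_left hGx hLsq
      linarith [hcmul]
    exact mul_neg_of_pos_of_neg (hχ'pos x hx_h) (by linarith)
  have hVanti : StrictAntiOn V (Set.Icc rmax rmin) := by
    apply strictAntiOn_of_deriv_neg (convex_Icc _ _)
    · exact continuousOn_of_forall_continuousAt fun x hx =>
        (hVd x (lt_of_lt_of_le hrmax_h hx.1)).continuousAt
    · intro x hx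
      rw [interior_Icc] at hx
      exact hdVneg x hx
  have hdVpos_right : ∀ x ∈ Set.Ioi rmin, 0 < deriv V x := by
    intro x hx
    have hx_h : r_h < x := hrmin_h.trans hx
    rw [hdV x hx_h]
    have hGx : G x < c := by
      rw [← hGrmin]
      exact hGanti (Set.mem_Ici.2 hrmin1.le) (Set.mem_Ici.2 (hrmin1.trans hx).le) hx
    have h5 : L ^ 2 * G x < m ^ 2 := by
      have := mul_lt_mul_of_pos_left hGx hLsq
      linarith [hcmul]
    exact mul_pos (hχ'pos x hx_h) (by linarith)
  have hVmono2 : StrictMonoOn V (Set.Ici rmin) := by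
    apply strictMonoOn_of_deriv_pos (convex_Ici _)
    · exact continuousOn_of_forall_continuousAt fun x hx =>
        (hVd x (lt_of_lt_of_le hrmin_h hx)).continuousAt
    · intro x hx
      rw [interior_Ici] at hx
      exact hdVpos_right x hx
  refine ⟨rmax, rmin, hrmax1, hrmax2, hrmin1, hdVmax0, hdVmin0, huniq, ?_, ?_⟩
  · have hmem : Set.Ioo r_ph rmin ∈ 𝓝 rmax := Ioo_mem_nhds hrmax1 (hrmax2.trans hrmin1)
    filter_upwards [mem_nhdsWithin_of_mem_nhds hmem, eventually_mem_nhdsWithin] with r hr hne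
    have hne' : r ≠ rmax := hne
    rcases lt_or_gt_of_ne hne' with hlt | hgt
    · exact hVmono1 ⟨hr.1.le, hlt.le⟩ ⟨hrmax1.le, le_refl _⟩ hlt
    · exact hVanti ⟨le_refl _, (hrmax2.trans hrmin1).le⟩ ⟨hgt.le, hr.2.le⟩ hgt
  · have hmem : Set.Ioo rmax (rmin + 1) ∈ 𝓝 rmin :=
      Ioo_mem_nhds (hrmax2.trans hrmin1) (lt_add_one rmin)
    filter_upwards [mem_nhdsWithin_of_mem_nhds hmem, eventually_mem_nhdsWithin] with r hr hne
    have hne' : r ≠ rmin := hne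
    rcases lt_or_gt_of_ne hne' with hlt | hgt
    · exact hVanti ⟨hr.1.le, hlt.le⟩ ⟨(hrmax2.trans hrmin1).le, le_refl _⟩ hlt
    · exact hVmono2 Set.self_mem_Ici (Set.mem_Ici.2 hgt.le) hgt
end

section
/- The critical radii depend monotonically on the angular momentum: for L_ISCO < L₁ < L₂ one has r_ph < r_max(L₂) < r_max(L₁) < r_ISCO < r_min(L₁) < r_min(L₂). Moreover r_max(L) → r_ph and r_min(L) → ∞ as L → ∞, and r_max(L) → r_ISCO and r_min(L) → r_ISCO as L → L_ISCO from above. -/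
open Real Filter Set Topology

/-- monotone dependence of the critical radii `r_max(L)` and `r_min(L)` on
the angular momentum `L`, together with their limits as `L → ∞` and `L → L_ISCO⁺`. -/
theorem stmt4
    (χ : ℝ → ℝ) (r_h M m r_ph r_ISCO L_ISCO : ℝ)
    (hrh : 0 < r_h)
    (hsmooth : ContDiffOn ℝ (⊤ : ℕ∞) χ (Set.Ioi 0))
    (hA1 : χ r_h = 0 ∧ 0 < deriv χ r_h)
    (hA2 : ∀ r, r_h < r → 0 < χ r ∧ 0 < deriv χ r)
    (hM : 0 < M)
    (hA3a : Tendsto χ atTop (𝓝 1))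
    (hA3b : Tendsto (fun r => r ^ 2 * deriv χ r) atTop (𝓝 (2 * M)))
    (hA4 : ∃! r, r ∈ Set.Ioi r_h ∧
      deriv (deriv χ) r / deriv χ r - 2 * deriv χ r / χ r + 3 / r = 0)
    (G : ℝ → ℝ)
    (hG : ∀ r, G r = (2 * χ r - r * deriv χ r) / (r ^ 3 * deriv χ r))
    -- r_ph is the unique zero of G in (r_h,∞)
    (h_ph_mem : r_h < r_ph)
    (h_ph_zero : G r_ph = 0)
    (h_ph_unique : ∀ r, r_h < r → G r = 0 → r = r_ph)
    -- r_ISCO ∈ (r_ph,∞) is the unique strict global maximum point of G, with G(r_ISCO) > 0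
    (h_ISCO_mem : r_ph < r_ISCO)
    (h_ISCO_pos : 0 < G r_ISCO)
    (h_ISCO_max : ∀ r, r_h ≤ r → r ≠ r_ISCO → G r < G r_ISCO)
    (hm : 0 < m)
    (hLISCO : L_ISCO = m / Real.sqrt (G r_ISCO))
    -- the effective potential V(L,r) = V_{m,L}(r)
    (V : ℝ → ℝ → ℝ)
    (hV : ∀ L r, V L r = χ r * (m ^ 2 + L ^ 2 / r ^ 2))
    -- for L > L_ISCO, rmax L and rmin L are the two zeros of (V L)' in (r_h,∞):
    -- a strict local maximum point in (r_ph, r_ISCO) and a strict local minimum point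
    -- in (r_ISCO, ∞) of V L
    (rmax rmin : ℝ → ℝ)
    (h_rmax_mem : ∀ L, L_ISCO < L → rmax L ∈ Set.Ioo r_ph r_ISCO)
    (h_rmin_mem : ∀ L, L_ISCO < L → r_ISCO < rmin L)
    (h_rmax_crit : ∀ L, L_ISCO < L → deriv (V L) (rmax L) = 0)
    (h_rmin_crit : ∀ L, L_ISCO < L → deriv (V L) (rmin L) = 0)
    (h_only : ∀ L, L_ISCO < L → ∀ r, r_h < r → deriv (V L) r = 0 → r = rmax L ∨ r = rmin L)
    (h_rmax_locmax : ∀ L, L_ISCO < L → ∀ᶠ r in 𝓝[≠] (rmax L), V L r < V L (rmax L))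
    (h_rmin_locmin : ∀ L, L_ISCO < L → ∀ᶠ r in 𝓝[≠] (rmin L), V L (rmin L) < V L r) :
    (∀ L₁ L₂, L_ISCO < L₁ → L₁ < L₂ →
      r_ph < rmax L₂ ∧ rmax L₂ < rmax L₁ ∧ rmax L₁ < r_ISCO ∧
      r_ISCO < rmin L₁ ∧ rmin L₁ < rmin L₂) ∧
    Tendsto rmax atTop (𝓝 r_ph) ∧
    Tendsto rmin atTop atTop ∧
    Tendsto rmax (𝓝[>] L_ISCO) (𝓝 r_ISCO) ∧
    Tendsto rmin (𝓝[>] L_ISCO) (𝓝 r_ISCO) := by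
  have hχ' : ∀ r, r_h < r → 0 < deriv χ r := fun r hr => (hA2 r hr).2
  have hL0 : 0 < L_ISCO := by
    rw [hLISCO]
    exact div_pos hm (Real.sqrt_pos.2 h_ISCO_pos)
  have hGI : m ^ 2 / L_ISCO ^ 2 = G r_ISCO := by
    have hs : Real.sqrt (G r_ISCO) ^ 2 = G r_ISCO := Real.sq_sqrt h_ISCO_pos.le
    have hm2 : (m : ℝ) ^ 2 ≠ 0 := by positivity
    rw [hLISCO, div_pow, hs, div_div_eq_mul_div, mul_comm, mul_div_assoc, div_self hm2, mul_one]
  -- the key criterion: critical points of V L are solutions of G r = m²/L²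
  have hcrit : ∀ L r, 0 < L → r_h < r → (deriv (V L) r = 0 ↔ G r = m ^ 2 / L ^ 2) := by
    intro L r hL hr
    have hr0 : 0 < r := hrh.trans hr
    have hq : 0 < deriv χ r := hχ' r hr
    have hχd : HasDerivAt χ (deriv χ r) r :=
      ((hsmooth.contDiffAt (isOpen_Ioi.mem_nhds hr0)).differentiableAt (by simp)).hasDerivAt
    have h2 : HasDerivAt (fun x : ℝ => m ^ 2 + L ^ 2 / x ^ 2)
        ((0 * r ^ 2 - L ^ 2 * (2 * r ^ 1)) / (r ^ 2) ^ 2) r :=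
      ((hasDerivAt_const r (L ^ 2)).div (hasDerivAt_pow 2 r) (by positivity)).const_add (m ^ 2)
    have hVd : HasDerivAt (V L)
        (deriv χ r * (m ^ 2 + L ^ 2 / r ^ 2) +
          χ r * ((0 * r ^ 2 - L ^ 2 * (2 * r ^ 1)) / (r ^ 2) ^ 2)) r := by
      have := hχd.mul h2
      simpa [hV] using this.congr_of_eventuallyEq (by filter_upwards with x; rw [hV]; rfl)
    have hr3 : (r : ℝ) ^ 3 ≠ 0 := by positivity
    rw [hVd.deriv, hG, div_eq_div_iff (by positivity) (by positivity)]
    constructor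
    · intro h
      field_simp at h
      have key : deriv χ r * m ^ 2 * r ^ 3 + deriv χ r * L ^ 2 * r - 2 * χ r * L ^ 2 = 0 := by
        apply mul_left_cancel₀ hr3
        rw [mul_zero]
        linear_combination r ^ 3 * h
      linear_combination -key
    · intro h
      field_simp
      linear_combination -h
  -- continuity of G on (r_h, ∞)
  have hGcont : ContinuousOn G (Set.Ioi r_h) := by
    have hsub : Set.Ioi r_h ⊆ Set.Ioi (0 : ℝ) := fun x hx => hrh.trans hx
    have hχc : ContinuousOn χ (Set.Ioi r_h) := hsmooth.continuousOn.mono hsub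
    have hdc : ContinuousOn (deriv χ) (Set.Ioi r_h) :=
      (hsmooth.continuousOn_deriv_of_isOpen isOpen_Ioi (by simp)).mono hsub
    have hbase : ContinuousOn (fun r => (2 * χ r - r * deriv χ r) / (r ^ 3 * deriv χ r))
        (Set.Ioi r_h) := by
      apply ContinuousOn.div
      · exact (continuousOn_const.mul hχc).sub (continuousOn_id.mul hdc)
      · exact (continuousOn_id.pow 3).mul hdc
      · intro x hx
        exact ne_of_gt (mul_pos (pow_pos (hrh.trans hx) 3) (hχ' x hx))
    exact hbase.congr fun x _ => hG x
  have hGmaxle : ∀ L, L_ISCO < L → m ^ 2 / L ^ 2 < G r_ISCO := by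
    intro L hL
    rw [← hGI]
    exact div_lt_div_of_pos_left (by positivity) (pow_pos hL0 2)
      (pow_lt_pow_left₀ hL hL0.le two_ne_zero)
  have hGrmax : ∀ L, L_ISCO < L → G (rmax L) = m ^ 2 / L ^ 2 := fun L hL =>
    (hcrit L (rmax L) (hL0.trans hL) (h_ph_mem.trans (h_rmax_mem L hL).1)).1 (h_rmax_crit L hL)
  have hGrmin : ∀ L, L_ISCO < L → G (rmin L) = m ^ 2 / L ^ 2 := fun L hL =>
    (hcrit L (rmin L) (hL0.trans hL)
      (h_ph_mem.trans (h_ISCO_mem.trans (h_rmin_mem L hL)))).1 (h_rmin_crit L hL)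
  -- positivity of G to the right of r_ph
  have hGpos : ∀ r, r_ph < r → 0 < G r := by
    intro r hr
    by_contra hcon
    push_neg at hcon
    rcases eq_or_lt_of_le hcon with h0 | h0
    · exact absurd (h_ph_unique r ((h_ph_mem.trans hr)) h0) hr.ne'
    · rcases lt_trichotomy r r_ISCO with hlt | heq | hgt
      · have hsub : Set.Icc r r_ISCO ⊆ Set.Ioi r_h := fun x hx =>
          ((h_ph_mem.trans hr).trans_le hx.1)
        obtain ⟨s, hs, hGs⟩ := intermediate_value_Ioo hlt.le (hGcont.mono hsub)
          (show (0 : ℝ) ∈ Set.Ioo (G r) (G r_ISCO) from ⟨h0, h_ISCO_pos⟩)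
        exact absurd (h_ph_unique s ((h_ph_mem.trans hr).trans hs.1) hGs)
          (ne_of_gt (hr.trans hs.1))
      · rw [heq] at h0; linarith
      · have hsub : Set.Icc r_ISCO r ⊆ Set.Ioi r_h := fun x hx =>
          ((h_ph_mem.trans h_ISCO_mem).trans_le hx.1)
        obtain ⟨s, hs, hGs⟩ := intermediate_value_Ioo' hgt.le (hGcont.mono hsub)
          (show (0 : ℝ) ∈ Set.Ioo (G r) (G r_ISCO) from ⟨h0, h_ISCO_pos⟩)
        exact absurd (h_ph_unique s ((h_ph_mem.trans h_ISCO_mem).trans hs.1) hGs)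
          (ne_of_gt (h_ISCO_mem.trans hs.1))
  -- monotonicity
  have hmono : ∀ L₁ L₂, L_ISCO < L₁ → L₁ < L₂ →
      r_ph < rmax L₂ ∧ rmax L₂ < rmax L₁ ∧ rmax L₁ < r_ISCO ∧
      r_ISCO < rmin L₁ ∧ rmin L₁ < rmin L₂ := by
    intro L₁ L₂ h1 h12
    have h2 : L_ISCO < L₂ := h1.trans h12
    have hc21 : m ^ 2 / L₂ ^ 2 < m ^ 2 / L₁ ^ 2 :=
      div_lt_div_of_pos_left (by positivity) (pow_pos (hL0.trans h1) 2)
        (pow_lt_pow_left₀ h12 (hL0.trans h1).le two_ne_zero)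
    refine ⟨(h_rmax_mem L₂ h2).1, ?_, (h_rmax_mem L₁ h1).2, h_rmin_mem L₁ h1, ?_⟩
    · by_contra hcon
      push_neg at hcon
      rcases eq_or_lt_of_le hcon with heq | hlt
      · have e1 := hGrmax L₁ h1
        rw [heq, hGrmax L₂ h2] at e1
        linarith
      · have hsub : Set.Icc (rmax L₂) r_ISCO ⊆ Set.Ioi r_h := fun x hx =>
          (h_ph_mem.trans (h_rmax_mem L₂ h2).1).trans_le hx.1
        obtain ⟨s, hs, hGs⟩ := intermediate_value_Ioo (h_rmax_mem L₂ h2).2.le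
          (hGcont.mono hsub)
          (show m ^ 2 / L₁ ^ 2 ∈ Set.Ioo (G (rmax L₂)) (G r_ISCO) by
            rw [hGrmax L₂ h2]; exact ⟨hc21, hGmaxle L₁ h1⟩)
        have hs_h : r_h < s := (h_ph_mem.trans (h_rmax_mem L₂ h2).1).trans hs.1
        rcases h_only L₁ h1 s hs_h ((hcrit L₁ s (hL0.trans h1) hs_h).2 hGs) with h | h
        · rw [h] at hs; linarith [hs.1]
        · rw [h] at hs; linarith [hs.2, h_rmin_mem L₁ h1]
    · by_contra hcon
      push_neg at hcon
      rcases eq_or_lt_of_le hcon with heq | hlt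
      · have := hGrmin L₁ h1
        rw [← heq, hGrmin L₂ h2] at this
        linarith
      · have hsub : Set.Icc r_ISCO (rmin L₂) ⊆ Set.Ioi r_h := fun x hx =>
          (h_ph_mem.trans h_ISCO_mem).trans_le hx.1
        obtain ⟨s, hs, hGs⟩ := intermediate_value_Ioo' (h_rmin_mem L₂ h2).le
          (hGcont.mono hsub)
          (show m ^ 2 / L₁ ^ 2 ∈ Set.Ioo (G (rmin L₂)) (G r_ISCO) by
            rw [hGrmin L₂ h2]; exact ⟨hc21, hGmaxle L₁ h1⟩)
        have hs_h : r_h < s := (h_ph_mem.trans h_ISCO_mem).trans hs.1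
        rcases h_only L₁ h1 s hs_h ((hcrit L₁ s (hL0.trans h1) hs_h).2 hGs) with h | h
        · rw [h] at hs; linarith [hs.1, (h_rmax_mem L₁ h1).2]
        · rw [h] at hs; linarith [hs.2]
  have htend0 : Tendsto (fun L : ℝ => m ^ 2 / L ^ 2) atTop (𝓝 0) :=
    tendsto_const_nhds.div_atTop (tendsto_pow_atTop two_ne_zero)
  have hcontL : Tendsto (fun L : ℝ => m ^ 2 / L ^ 2) (𝓝 L_ISCO) (𝓝 (G r_ISCO)) := by
    rw [← hGI]
    exact tendsto_const_nhds.div ((continuous_pow 2).tendsto L_ISCO) (pow_ne_zero 2 hL0.ne')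
  refine ⟨hmono, ?_, ?_, ?_, ?_⟩
  · -- rmax → r_ph at ∞
    refine tendsto_order.2 ⟨fun a ha => ?_, fun b hb => ?_⟩
    · filter_upwards [eventually_gt_atTop L_ISCO] with L hL
      exact ha.trans (h_rmax_mem L hL).1
    · have ht1 : r_ph < min ((r_ph + b) / 2) ((r_ph + r_ISCO) / 2) :=
        lt_min (by linarith) (by linarith)
      set t := min ((r_ph + b) / 2) ((r_ph + r_ISCO) / 2) with ht_def
      have ht2 : t < b := lt_of_le_of_lt (min_le_left _ _) (by linarith)
      have ht3 : t ≤ r_ISCO := le_of_lt (lt_of_le_of_lt (min_le_right _ _) (by linarith))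
      have hsub : Set.Icc t r_ISCO ⊆ Set.Ioi r_h := fun x hx =>
        (h_ph_mem.trans ht1).trans_le hx.1
      obtain ⟨x₀, hx₀m, hx₀min⟩ := isCompact_Icc.exists_isMinOn (Set.nonempty_Icc.2 ht3)
        (hGcont.mono hsub)
      have hδ : 0 < G x₀ := hGpos x₀ (ht1.trans_le hx₀m.1)
      filter_upwards [eventually_gt_atTop L_ISCO, htend0.eventually_lt_const hδ] with L hL hL'
      by_contra hcon
      push_neg at hcon
      have hmem : rmax L ∈ Set.Icc t r_ISCO := ⟨ht2.le.trans hcon, (h_rmax_mem L hL).2.le⟩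
      have hle : G x₀ ≤ G (rmax L) := hx₀min hmem
      rw [hGrmax L hL] at hle
      linarith
  · -- rmin → ∞ at ∞
    refine tendsto_atTop.2 fun b => ?_
    have hsub : Set.Icc r_ISCO (max b r_ISCO) ⊆ Set.Ioi r_h := fun x hx =>
      (h_ph_mem.trans h_ISCO_mem).trans_le hx.1
    obtain ⟨x₀, hx₀m, hx₀min⟩ := isCompact_Icc.exists_isMinOn
      (Set.nonempty_Icc.2 (le_max_right _ _)) (hGcont.mono hsub)
    have hδ : 0 < G x₀ := hGpos x₀ (h_ISCO_mem.trans_le hx₀m.1)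
    filter_upwards [eventually_gt_atTop L_ISCO, htend0.eventually_lt_const hδ] with L hL hL'
    by_contra hcon
    push_neg at hcon
    have hmem : rmin L ∈ Set.Icc r_ISCO (max b r_ISCO) :=
      ⟨(h_rmin_mem L hL).le, le_max_of_le_left hcon.le⟩
    have hle : G x₀ ≤ G (rmin L) := hx₀min hmem
    rw [hGrmin L hL] at hle
    linarith
  · -- rmax → r_ISCO as L → L_ISCO⁺
    refine tendsto_order.2 ⟨fun a ha => ?_, fun b hb => ?_⟩
    · have ht1 : r_ph < max a ((r_ph + r_ISCO) / 2) := lt_max_of_lt_right (by linarith)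
      set t := max a ((r_ph + r_ISCO) / 2) with ht_def
      have ht2 : t < r_ISCO := max_lt ha (by linarith)
      have hsub : Set.Icc r_ph t ⊆ Set.Ioi r_h := fun x hx => h_ph_mem.trans_le hx.1
      obtain ⟨x₀, hx₀m, hx₀max⟩ := isCompact_Icc.exists_isMaxOn (Set.nonempty_Icc.2 ht1.le)
        (hGcont.mono hsub)
      have hc : G x₀ < G r_ISCO := h_ISCO_max x₀ (h_ph_mem.le.trans hx₀m.1)
        (by intro h; rw [h] at hx₀m; linarith [hx₀m.2])
      filter_upwards [self_mem_nhdsWithin,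
        ((hcontL.mono_left nhdsWithin_le_nhds).eventually_const_lt hc)] with L hL hL'
      by_contra hcon
      push_neg at hcon
      have hmem : rmax L ∈ Set.Icc r_ph t :=
        ⟨(h_rmax_mem L hL).1.le, hcon.trans (le_max_left _ _)⟩
      have hle : G (rmax L) ≤ G x₀ := hx₀max hmem
      rw [hGrmax L hL] at hle
      linarith
    · filter_upwards [self_mem_nhdsWithin] with L hL
      exact (h_rmax_mem L hL).2.trans hb
  · -- rmin → r_ISCO as L → L_ISCO⁺
    refine tendsto_order.2 ⟨fun a ha => ?_, fun b hb => ?_⟩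
    · filter_upwards [self_mem_nhdsWithin] with L hL
      exact ha.trans (h_rmin_mem L hL)
    · have hL₀ : L_ISCO < L_ISCO + 1 := by linarith
      have ht1 : r_ISCO < (r_ISCO + b) / 2 := by linarith
      have ht2 : (r_ISCO + b) / 2 < b := by linarith
      set t := (r_ISCO + b) / 2 with ht_def
      set R := max (rmin (L_ISCO + 1)) t with hR_def
      have ht3 : t ≤ R := le_max_right _ _
      have hsub : Set.Icc t R ⊆ Set.Ioi r_h := fun x hx =>
        ((h_ph_mem.trans h_ISCO_mem).trans ht1).trans_le hx.1
      obtain ⟨x₀, hx₀m, hx₀max⟩ := isCompact_Icc.exists_isMaxOn (Set.nonempty_Icc.2 ht3)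
        (hGcont.mono hsub)
      have hc : G x₀ < G r_ISCO := h_ISCO_max x₀
        ((h_ph_mem.trans h_ISCO_mem).le.trans (ht1.le.trans hx₀m.1))
        (by intro h; rw [h] at hx₀m; linarith [hx₀m.1])
      filter_upwards [self_mem_nhdsWithin,
        ((hcontL.mono_left nhdsWithin_le_nhds).eventually_const_lt hc),
        nhdsWithin_le_nhds (Iio_mem_nhds hL₀)] with L hL hL' hL''
      by_contra hcon
      push_neg at hcon
      have hless : rmin L < rmin (L_ISCO + 1) := (hmono L (L_ISCO + 1) hL hL'').2.2.2.2
      have hmem : rmin L ∈ Set.Icc t R :=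
        ⟨ht2.le.trans hcon, le_max_of_le_left hless.le⟩
      have hle : G (rmin L) ≤ G x₀ := hx₀max hmem
      rw [hGrmin L hL] at hle
      linarith
end

section
/- For every E > 0 with E² > E_ISCO² := V_{m,L_ISCO}(r_ISCO) there exists a unique L_c(E) ∈ (L_ISCO, ∞) such that V_{m,L_c(E)}(r_max(L_c(E))) = E². The function E ↦ L_c(E) is strictly increasing on (E_ISCO, ∞) and L_c(E) → ∞ as E → ∞. -/
open Real Filter Set Topology

set_option maxHeartbeats 1600000 in
/-- for every `E > 0` with `E² > E_ISCO² = V_{m,L_ISCO}(r_ISCO)` there is a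
unique critical angular momentum `L_c(E) ∈ (L_ISCO,∞)` with
`V_{m,L_c(E)}(r_max(L_c(E))) = E²`; the function `E ↦ L_c(E)` is strictly increasing on
`(E_ISCO,∞)` and tends to `∞` as `E → ∞`. -/
theorem stmt6
    (χ : ℝ → ℝ) (r_h M m r_ph r_ISCO L_ISCO : ℝ)
    (hrh : 0 < r_h)
    (hsmooth : ContDiffOn ℝ (⊤ : ℕ∞) χ (Set.Ioi 0))
    (hA1 : χ r_h = 0 ∧ 0 < deriv χ r_h)
    (hA2 : ∀ r, r_h < r → 0 < χ r ∧ 0 < deriv χ r)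
    (hM : 0 < M)
    (hA3a : Tendsto χ atTop (𝓝 1))
    (hA3b : Tendsto (fun r => r ^ 2 * deriv χ r) atTop (𝓝 (2 * M)))
    (hA4 : ∃! r, r ∈ Set.Ioi r_h ∧
      deriv (deriv χ) r / deriv χ r - 2 * deriv χ r / χ r + 3 / r = 0)
    (G : ℝ → ℝ)
    (hG : ∀ r, G r = (2 * χ r - r * deriv χ r) / (r ^ 3 * deriv χ r))
    -- r_ph is the unique zero of G in (r_h,∞)
    (h_ph_mem : r_h < r_ph)
    (h_ph_zero : G r_ph = 0)
    (h_ph_unique : ∀ r, r_h < r → G r = 0 → r = r_ph)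
    -- r_ISCO ∈ (r_ph,∞) is the unique strict global maximum point of G, with G(r_ISCO) > 0
    (h_ISCO_mem : r_ph < r_ISCO)
    (h_ISCO_pos : 0 < G r_ISCO)
    (h_ISCO_max : ∀ r, r_h ≤ r → r ≠ r_ISCO → G r < G r_ISCO)
    (hm : 0 < m)
    (hLISCO : L_ISCO = m / Real.sqrt (G r_ISCO))
    -- the effective potential V(L,r) = V_{m,L}(r)
    (V : ℝ → ℝ → ℝ)
    (hV : ∀ L r, V L r = χ r * (m ^ 2 + L ^ 2 / r ^ 2))
    -- for L > L_ISCO, rmax L and rmin L are the two zeros of (V L)' in (r_h,∞):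
    -- a strict local maximum point in (r_ph, r_ISCO) and a strict local minimum point
    -- in (r_ISCO, ∞) of V L
    (rmax rmin : ℝ → ℝ)
    (h_rmax_mem : ∀ L, L_ISCO < L → rmax L ∈ Set.Ioo r_ph r_ISCO)
    (h_rmin_mem : ∀ L, L_ISCO < L → r_ISCO < rmin L)
    (h_rmax_crit : ∀ L, L_ISCO < L → deriv (V L) (rmax L) = 0)
    (h_rmin_crit : ∀ L, L_ISCO < L → deriv (V L) (rmin L) = 0)
    (h_only : ∀ L, L_ISCO < L → ∀ r, r_h < r → deriv (V L) r = 0 → r = rmax L ∨ r = rmin L)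
    (h_rmax_locmax : ∀ L, L_ISCO < L → ∀ᶠ r in 𝓝[≠] (rmax L), V L r < V L (rmax L))
    (h_rmin_locmin : ∀ L, L_ISCO < L → ∀ᶠ r in 𝓝[≠] (rmin L), V L (rmin L) < V L r) :
    (∀ E : ℝ, 0 < E → V L_ISCO r_ISCO < E ^ 2 →
      ∃! L : ℝ, L_ISCO < L ∧ V L (rmax L) = E ^ 2) ∧
    ∃ Lc : ℝ → ℝ,
      (∀ E : ℝ, 0 < E → V L_ISCO r_ISCO < E ^ 2 →
        L_ISCO < Lc E ∧ V (Lc E) (rmax (Lc E)) = E ^ 2) ∧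
      StrictMonoOn Lc (Set.Ioi (Real.sqrt (V L_ISCO r_ISCO))) ∧
      Tendsto Lc atTop atTop := by
  obtain ⟨hχrh, hχ'rh⟩ := hA1
  have hrph0 : (0:ℝ) < r_ph := hrh.trans h_ph_mem
  have hISCOh : r_h < r_ISCO := h_ph_mem.trans h_ISCO_mem
  have hISCO0 : (0:ℝ) < r_ISCO := hrh.trans hISCOh
  -- differentiability of χ
  have hχdiff : ∀ r : ℝ, 0 < r → HasDerivAt χ (deriv χ r) r := by
    intro r hr
    exact (((hsmooth.differentiableOn (by simp)).differentiableAt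
      (isOpen_Ioi.mem_nhds hr)).hasDerivAt)
  have hχcont : ContinuousOn χ (Ioi 0) := hsmooth.continuousOn
  have hχ'cont : ContinuousOn (deriv χ) (Ioi 0) :=
    hsmooth.continuousOn_deriv_of_isOpen isOpen_Ioi (by simp)
  -- χ strictly monotone on [r_h, ∞)
  have hχmono : StrictMonoOn χ (Ici r_h) := by
    apply strictMonoOn_of_deriv_pos (convex_Ici r_h)
      (hχcont.mono (fun x hx => lt_of_lt_of_le hrh hx))
    intro x hx
    rw [interior_Ici] at hx
    exact (hA2 x hx).2
  -- χ < 1 on (r_h, ∞)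
  have hχlt1 : ∀ r, r_h < r → χ r < 1 := by
    intro r hr
    have h1 : χ r < χ (r + 1) :=
      hχmono (mem_Ici.mpr hr.le) (mem_Ici.mpr (by linarith)) (by linarith)
    have h2 : χ (r + 1) ≤ 1 := by
      apply ge_of_tendsto hA3a
      filter_upwards [eventually_ge_atTop (r + 1)] with s hs
      rcases eq_or_lt_of_le hs with h | h
      · rw [h]
      · exact (hχmono (mem_Ici.mpr (by linarith)) (mem_Ici.mpr (by linarith)) h).le
    linarith
  -- derivative formula for V L
  have hVd : ∀ L r, r_h < r → HasDerivAt (V L) (deriv χ r * (m ^ 2 - L ^ 2 * G r)) r := by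
    intro L r hr
    have hr0 : (0:ℝ) < r := hrh.trans hr
    have hχ' : 0 < deriv χ r := (hA2 r hr).2
    have h1 := hχdiff r hr0
    have h2 : HasDerivAt (fun x : ℝ => m ^ 2 + L ^ 2 / x ^ 2)
        (0 + (0 * r ^ 2 - L ^ 2 * ((2:ℕ) * r ^ (2 - 1))) / (r ^ 2) ^ 2) r :=
      (hasDerivAt_const r (m ^ 2)).add
        ((hasDerivAt_const r (L ^ 2)).div (hasDerivAt_pow 2 r) (pow_ne_zero 2 hr0.ne'))
    have h3 : HasDerivAt (fun x => χ x * (m ^ 2 + L ^ 2 / x ^ 2))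
        (deriv χ r * (m ^ 2 + L ^ 2 / r ^ 2) + χ r * (0 + (0 * r ^ 2 - L ^ 2 * ((2:ℕ) * r ^ (2 - 1))) / (r ^ 2) ^ 2)) r :=
      h1.mul h2
    have hfun : V L = fun x => χ x * (m ^ 2 + L ^ 2 / x ^ 2) := funext (hV L)
    rw [hfun]
    convert h3 using 1
    rw [hG]
    field_simp
    ring
  have hVderiv : ∀ L r, r_h < r → deriv (V L) r = deriv χ r * (m ^ 2 - L ^ 2 * G r) :=
    fun L r hr => (hVd L r hr).deriv
  -- G continuous on (r_h, ∞)
  have hGcont : ContinuousOn G (Ioi r_h) := by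
    have : ContinuousOn (fun r => (2 * χ r - r * deriv χ r) / (r ^ 3 * deriv χ r)) (Ioi r_h) := by
      apply ContinuousOn.div
      · exact (continuousOn_const.mul (hχcont.mono (fun x hx => hrh.trans hx))).sub
          (continuousOn_id.mul (hχ'cont.mono (fun x hx => hrh.trans hx)))
      · exact (continuousOn_pow 3).mul (hχ'cont.mono (fun x hx => hrh.trans hx))
      · intro x hx
        exact mul_ne_zero (pow_ne_zero 3 (hrh.trans hx).ne') (hA2 x hx).2.ne'
    exact this.congr (fun x _ => hG x)
  -- L_ISCO facts
  have hsqrtG : (0:ℝ) < Real.sqrt (G r_ISCO) := Real.sqrt_pos.mpr h_ISCO_pos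
  have hLISCOpos : 0 < L_ISCO := by rw [hLISCO]; positivity
  have hLISCOsq : L_ISCO ^ 2 * G r_ISCO = m ^ 2 := by
    rw [hLISCO, div_pow, Real.sq_sqrt h_ISCO_pos.le]
    field_simp
  -- critical point characterization
  have hcrit : ∀ L r, r_h < r → (deriv (V L) r = 0 ↔ L ^ 2 * G r = m ^ 2) := by
    intro L r hr
    rw [hVderiv L r hr]
    have hχ' : 0 < deriv χ r := (hA2 r hr).2
    constructor
    · intro h
      rcases mul_eq_zero.mp h with h | h
      · exact absurd h hχ'.ne'
      · linarith [sub_eq_zero.mp h]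
    · intro h
      have : m ^ 2 - L ^ 2 * G r = 0 := by linarith
      rw [this, mul_zero]
  -- G at rmax
  have hGrmax : ∀ L, L_ISCO < L → L ^ 2 * G (rmax L) = m ^ 2 := by
    intro L hL
    have hmem := h_rmax_mem L hL
    exact (hcrit L (rmax L) (h_ph_mem.trans hmem.1)).mp (h_rmax_crit L hL)
  -- for ρ ∈ (r_ph, r_ISCO) with 0 < G ρ < G r_ISCO, the associated L recovers ρ as rmax
  have hLofρ : ∀ ρ, ρ ∈ Ioo r_ph r_ISCO → 0 < G ρ →
      L_ISCO < m / Real.sqrt (G ρ) ∧ rmax (m / Real.sqrt (G ρ)) = ρ := by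
    intro ρ hρ hGρ
    have hρh : r_h < ρ := h_ph_mem.trans hρ.1
    have hGlt : G ρ < G r_ISCO := h_ISCO_max ρ (hρh.le.trans (le_refl ρ)) hρ.2.ne
    have hsρ : (0:ℝ) < Real.sqrt (G ρ) := Real.sqrt_pos.mpr hGρ
    have hL : L_ISCO < m / Real.sqrt (G ρ) := by
      rw [hLISCO]
      apply div_lt_div_of_pos_left hm hsρ
      exact Real.sqrt_lt_sqrt hGρ.le hGlt
    refine ⟨hL, ?_⟩
    have hLsq : (m / Real.sqrt (G ρ)) ^ 2 * G ρ = m ^ 2 := by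
      rw [div_pow, Real.sq_sqrt hGρ.le]
      field_simp
    have hc : deriv (V (m / Real.sqrt (G ρ))) ρ = 0 := (hcrit _ ρ hρh).mpr hLsq
    rcases h_only _ hL ρ hρh hc with h | h
    · exact h.symm
    · exact absurd (h ▸ hρ.2) (not_lt.mpr (h_rmin_mem _ hL).le)
  -- injectivity of G on [r_ph, r_ISCO]
  have hGinj : InjOn G (Icc r_ph r_ISCO) := by
    intro r1 hr1 r2 hr2 heq
    by_contra hne
    have hsub : Icc r_ph r_ISCO ⊆ Ioi r_h := fun x hx => h_ph_mem.trans_le hx.1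
    -- neither equals r_ISCO
    have hne1 : r1 ≠ r_ISCO := by
      rintro rfl
      exact absurd heq.symm (h_ISCO_max r2 ((h_ph_mem.trans_le hr2.1).le) (fun h => hne (h ▸ rfl))).ne
    have hne2 : r2 ≠ r_ISCO := by
      rintro rfl
      exact absurd heq (h_ISCO_max r1 ((h_ph_mem.trans_le hr1.1).le) hne1).ne
    have key : ∀ r, r ∈ Icc r_ph r_ISCO → r ≠ r_ISCO → 0 < G r → rmax (m / Real.sqrt (G r)) = r := by
      intro r hr hrne hGr
      exact (hLofρ r ⟨lt_of_le_of_ne hr.1 (fun h => by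
        simp [← h, h_ph_zero] at hGr), lt_of_le_of_ne hr.2 hrne⟩ hGr).2
    rcases lt_trichotomy (G r1) 0 with hneg | hzero | hpos
    · -- negative value: IVT gives extra zero
      have hr1ph : r_ph < r1 := by
        rcases eq_or_lt_of_le hr1.1 with h | h
        · exact absurd (h ▸ h_ph_zero) (by rw [← h] at hneg ⊢; exact hneg.ne)
        · exact h
      have hcont : ContinuousOn G (Icc r1 r_ISCO) :=
        hGcont.mono (fun x hx => h_ph_mem.trans (hr1ph.trans_le hx.1))
      have : (0:ℝ) ∈ Icc (G r1) (G r_ISCO) := ⟨hneg.le, h_ISCO_pos.le⟩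
      obtain ⟨z, hz, hz0⟩ := intermediate_value_Icc hr1.2 hcont this
      have : z = r_ph := h_ph_unique z (h_ph_mem.trans (hr1ph.trans_le hz.1)) hz0
      exact absurd (this ▸ hz.1) (not_le.mpr hr1ph)
    · have h1 : r1 = r_ph := h_ph_unique r1 (h_ph_mem.trans_le hr1.1) hzero
      have h2 : r2 = r_ph := h_ph_unique r2 (h_ph_mem.trans_le hr2.1) (heq ▸ hzero)
      exact hne (h1.trans h2.symm)
    · have k1 := key r1 hr1 hne1 hpos
      have k2 := key r2 hr2 hne2 (heq ▸ hpos)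
      rw [heq] at k1
      exact hne (k1.symm.trans k2)
  -- G strictly monotone on [r_ph, r_ISCO]
  have hGmono : StrictMonoOn G (Icc r_ph r_ISCO) := by
    apply ContinuousOn.strictMonoOn_of_injOn_Icc h_ISCO_mem.le
      (by rw [h_ph_zero]; exact h_ISCO_pos.le)
      (hGcont.mono (fun x hx => h_ph_mem.trans_le hx.1)) hGinj
  have hGpos : ∀ r, r_ph < r → r ≤ r_ISCO → 0 < G r := by
    intro r h1 h2
    have := hGmono (left_mem_Icc.mpr h_ISCO_mem.le) ⟨h1.le, h2⟩ h1
    rwa [h_ph_zero] at this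
  -- strict monotonicity of L ↦ V L (rmax L)
  have hΦmono : ∀ L1 L2, L_ISCO < L1 → L1 < L2 → V L1 (rmax L1) < V L2 (rmax L2) := by
    intro L1 L2 hL1 hL12
    have hL2 : L_ISCO < L2 := hL1.trans hL12
    have hL1p : 0 < L1 := hLISCOpos.trans hL1
    have hL2p : 0 < L2 := hLISCOpos.trans hL2
    have hm1 := h_rmax_mem L1 hL1
    have hm2 := h_rmax_mem L2 hL2
    have hmem1 : rmax L1 ∈ Icc r_ph r_ISCO := ⟨hm1.1.le, hm1.2.le⟩
    have hmem2 : rmax L2 ∈ Icc r_ph r_ISCO := ⟨hm2.1.le, hm2.2.le⟩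
    have hg1 := hGrmax L1 hL1
    have hg2 := hGrmax L2 hL2
    have hGpos2 : 0 < G (rmax L2) := hGpos _ hm2.1 hm2.2.le
    have hGpos1 : 0 < G (rmax L1) := hGpos _ hm1.1 hm1.2.le
    have hGlt : G (rmax L2) < G (rmax L1) := by
      have h1 : G (rmax L2) * L2 ^ 2 < G (rmax L1) * L2 ^ 2 := by
        nlinarith [mul_pos hGpos1 (mul_pos hL1p hL2p)]
      exact (mul_lt_mul_iff_of_pos_right (by positivity)).mp h1
    have hrlt : rmax L2 < rmax L1 := by
      by_contra h
      push_neg at h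
      rcases eq_or_lt_of_le h with h | h
      · rw [h] at hGlt; exact lt_irrefl _ hGlt
      · exact absurd (hGmono hmem1 hmem2 h) (not_lt.mpr hGlt.le)
    -- V L2 is strictly decreasing on [rmax L2, rmax L1]
    have hIccsub : Icc (rmax L2) (rmax L1) ⊆ Icc r_ph r_ISCO :=
      Icc_subset_Icc hmem2.1 hmem1.2
    have hanti : StrictAntiOn (V L2) (Icc (rmax L2) (rmax L1)) := by
      apply strictAntiOn_of_deriv_neg (convex_Icc _ _)
      · intro x hx
        have hxh : r_h < x := h_ph_mem.trans_le (hIccsub hx).1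
        exact ((hVd L2 x hxh).differentiableAt.continuousAt).continuousWithinAt
      · intro x hx
        rw [interior_Icc] at hx
        have hxmem : x ∈ Icc r_ph r_ISCO := hIccsub ⟨hx.1.le, hx.2.le⟩
        have hxh : r_h < x := h_ph_mem.trans_le hxmem.1
        rw [hVderiv L2 x hxh]
        apply mul_neg_of_pos_of_neg (hA2 x hxh).2
        have : G (rmax L2) < G x := hGmono hmem2 hxmem hx.1
        nlinarith [mul_pos (pow_pos hL2p 2) (sub_pos.mpr this)]
    have step1 : V L2 (rmax L1) < V L2 (rmax L2) :=
      hanti (left_mem_Icc.mpr hrlt.le) (right_mem_Icc.mpr hrlt.le) hrlt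
    have step2 : V L1 (rmax L1) < V L2 (rmax L1) := by
      rw [hV, hV]
      have hχp : 0 < χ (rmax L1) := (hA2 _ (h_ph_mem.trans hm1.1)).1
      have hrp : (0:ℝ) < rmax L1 := hrph0.trans hm1.1
      have : L1 ^ 2 / (rmax L1) ^ 2 < L2 ^ 2 / (rmax L1) ^ 2 := by
        apply div_lt_div_of_pos_right _ (by positivity)
        nlinarith
      exact mul_lt_mul_of_pos_left (by linarith) hχp
    linarith
  set K := V L_ISCO r_ISCO with hKdef
  have hKval : K = χ r_ISCO * (m ^ 2 + m ^ 2 / (G r_ISCO * r_ISCO ^ 2)) := by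
    rw [hKdef, hV]
    congr 1
    congr 1
    rw [eq_comm, div_eq_div_iff (by positivity) (by positivity), ← hLISCOsq]
    ring
  have hKpos : 0 < K := by
    rw [hKval]
    exact mul_pos (hA2 r_ISCO hISCOh).1 (by positivity)
  -- existence
  have hex : ∀ E : ℝ, 0 < E → K < E ^ 2 → ∃ L, L_ISCO < L ∧ V L (rmax L) = E ^ 2 := by
    intro E hE hEK
    obtain ⟨F, hF⟩ : ∃ F : ℝ → ℝ, ∀ ρ, F ρ = χ ρ * (m ^ 2 + m ^ 2 / (G ρ * ρ ^ 2)) :=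
      ⟨_, fun _ => rfl⟩
    have hFISCO : F r_ISCO = K := by rw [hF]; exact hKval.symm
    have hχph : 0 < χ r_ph := (hA2 r_ph h_ph_mem).1
    obtain ⟨ε, hε, hεpos⟩ : ∃ e : ℝ, e = χ r_ph * m ^ 2 / (E ^ 2 * r_ISCO ^ 2) ∧ 0 < e :=
      ⟨_, rfl, by positivity⟩
    -- find a close to r_ph with small G
    have hGat : ContinuousAt G r_ph := hGcont.continuousAt (isOpen_Ioi.mem_nhds h_ph_mem)
    obtain ⟨δ, hδpos, hδ⟩ := Metric.continuousAt_iff.mp hGat ε hεpos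
    obtain ⟨a, haI, hadist⟩ : ∃ a, a ∈ Ioo r_ph r_ISCO ∧ dist a r_ph < δ := by
      refine ⟨r_ph + min (δ / 2) ((r_ISCO - r_ph) / 2), ⟨?_, ?_⟩, ?_⟩
      · have : 0 < min (δ / 2) ((r_ISCO - r_ph) / 2) :=
          lt_min (by linarith) (by linarith)
        linarith
      · have : min (δ / 2) ((r_ISCO - r_ph) / 2) ≤ (r_ISCO - r_ph) / 2 := min_le_right _ _
        linarith
      · rw [Real.dist_eq]
        have h0 : 0 < min (δ / 2) ((r_ISCO - r_ph) / 2) := lt_min (by linarith) (by linarith)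
        have h1 : min (δ / 2) ((r_ISCO - r_ph) / 2) ≤ δ / 2 := min_le_left _ _
        rw [abs_of_pos (by linarith)]
        linarith
    have hGa : G a < ε := by
      have := hδ hadist
      rw [Real.dist_eq, h_ph_zero, sub_zero] at this
      exact (le_abs_self _).trans_lt this
    have hGapos : 0 < G a := hGpos a haI.1 haI.2.le
    have hFa : E ^ 2 < F a := by
      have hχa : χ r_ph < χ a :=
        hχmono (mem_Ici.mpr h_ph_mem.le) (mem_Ici.mpr (h_ph_mem.trans haI.1).le) haI.1
      have ha0 : 0 < a := hrph0.trans haI.1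
      have hGAr : 0 < G a * r_ISCO ^ 2 := mul_pos hGapos (by positivity)
      have hGAa : 0 < G a * a ^ 2 := mul_pos hGapos (by positivity)
      have h1 : χ r_ph * (m ^ 2 / (G a * r_ISCO ^ 2)) ≤ F a := by
        have hb : m ^ 2 / (G a * r_ISCO ^ 2) ≤ m ^ 2 / (G a * a ^ 2) := by
          have hsq : a ^ 2 ≤ r_ISCO ^ 2 := pow_le_pow_left₀ ha0.le haI.2.le 2
          exact div_le_div_of_nonneg_left (sq_nonneg m) hGAa
            (mul_le_mul_of_nonneg_left hsq hGapos.le)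
        have hχa' : 0 < χ a := hχph.trans hχa
        have hmb : 0 < m ^ 2 / (G a * a ^ 2) := by positivity
        calc χ r_ph * (m ^ 2 / (G a * r_ISCO ^ 2))
            ≤ χ a * (m ^ 2 / (G a * a ^ 2)) := by
              apply mul_le_mul hχa.le hb (by positivity) hχa'.le
          _ ≤ χ a * (m ^ 2 + m ^ 2 / (G a * a ^ 2)) := by
              apply mul_le_mul_of_nonneg_left _ hχa'.le
              linarith only [sq_nonneg m]
          _ = F a := (hF a).symm
      have h2 : E ^ 2 < χ r_ph * (m ^ 2 / (G a * r_ISCO ^ 2)) := by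
        have hmul : G a * (E ^ 2 * r_ISCO ^ 2) <
            χ r_ph * m ^ 2 / (E ^ 2 * r_ISCO ^ 2) * (E ^ 2 * r_ISCO ^ 2) :=
          mul_lt_mul_of_pos_right (hε ▸ hGa) (by positivity)
        have heq : χ r_ph * m ^ 2 / (E ^ 2 * r_ISCO ^ 2) * (E ^ 2 * r_ISCO ^ 2) =
            χ r_ph * m ^ 2 := div_mul_cancel₀ _ (by positivity)
        rw [mul_div_assoc', lt_div_iff₀ hGAr]
        linarith only [hmul, heq]
      linarith only [h1, h2]
    -- IVT on [a, r_ISCO]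
    have hFcont : ContinuousOn F (Icc a r_ISCO) := by
      have hsub : Icc a r_ISCO ⊆ Ioi r_h := fun x hx =>
        h_ph_mem.trans (haI.1.trans_le hx.1)
      have hc : ContinuousOn (fun ρ => χ ρ * (m ^ 2 + m ^ 2 / (G ρ * ρ ^ 2)))
          (Icc a r_ISCO) := by
        apply ContinuousOn.mul (hχcont.mono (fun x hx => hrh.trans (hsub hx)))
        apply ContinuousOn.add continuousOn_const
        apply ContinuousOn.div continuousOn_const
        · exact ((hGcont.mono hsub).mul (continuousOn_pow 2))
        · intro x hx
          have hx0 : 0 < x := hrh.trans (hsub hx)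
          have : 0 < G x := hGpos x (haI.1.trans_le hx.1) hx.2
          positivity
      exact hc.congr (fun x _ => hF x)
    obtain ⟨ρ, hρmem, hFρ⟩ := intermediate_value_Icc' haI.2.le hFcont
      (by rw [hFISCO]; exact ⟨hEK.le, hFa.le⟩)
    have hρI : ρ ∈ Ioo r_ph r_ISCO := by
      constructor
      · exact haI.1.trans_le hρmem.1
      · rcases eq_or_lt_of_le hρmem.2 with h | h
        · exfalso; rw [h, hFISCO] at hFρ; linarith only [hEK, hFρ]
        · exact h
    have hGρ : 0 < G ρ := hGpos ρ hρI.1 hρI.2.le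
    obtain ⟨hL, hrmaxρ⟩ := hLofρ ρ hρI hGρ
    refine ⟨m / Real.sqrt (G ρ), hL, ?_⟩
    rw [hrmaxρ, hV, ← hFρ, hF ρ]
    congr 1
    congr 1
    rw [div_pow, Real.sq_sqrt hGρ.le, div_div]
  -- uniqueness packaged
  have huniq : ∀ E : ℝ, 0 < E → K < E ^ 2 → ∃! L, L_ISCO < L ∧ V L (rmax L) = E ^ 2 := by
    intro E hE hEK
    obtain ⟨L, hL, hVL⟩ := hex E hE hEK
    refine ⟨L, ⟨hL, hVL⟩, ?_⟩
    rintro L' ⟨hL', hVL'⟩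
    rcases lt_trichotomy L' L with h | h | h
    · have := hΦmono L' L hL' h
      rw [hVL, hVL'] at this
      exact absurd this (lt_irrefl _)
    · exact h
    · have := hΦmono L L' hL h
      rw [hVL, hVL'] at this
      exact absurd this (lt_irrefl _)
  classical
  obtain ⟨Lc, hLcSpec⟩ : ∃ Lc : ℝ → ℝ, ∀ E, 0 < E → K < E ^ 2 →
      L_ISCO < Lc E ∧ V (Lc E) (rmax (Lc E)) = E ^ 2 := by
    refine ⟨fun E => if h : 0 < E ∧ K < E ^ 2 then (hex E h.1 h.2).choose else 0, ?_⟩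
    intro E hE hEK
    simp only [dif_pos (⟨hE, hEK⟩ : 0 < E ∧ K < E ^ 2)]
    exact (hex E hE hEK).choose_spec
  have hEcond : ∀ E : ℝ, Real.sqrt K < E → 0 < E ∧ K < E ^ 2 := by
    intro E hE
    have h0 : 0 < E := (Real.sqrt_pos.mpr hKpos).trans hE
    exact ⟨h0, (Real.sqrt_lt' h0).mp hE⟩
  refine ⟨huniq, Lc, hLcSpec, ?_, ?_⟩
  · -- strict monotonicity
    intro E1 h1 E2 h2 h12
    obtain ⟨c1p, c1K⟩ := hEcond E1 h1
    obtain ⟨c2p, c2K⟩ := hEcond E2 h2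
    obtain ⟨hL1, hV1⟩ := hLcSpec E1 c1p c1K
    obtain ⟨hL2, hV2⟩ := hLcSpec E2 c2p c2K
    have hE12 : E1 ^ 2 < E2 ^ 2 := by nlinarith only [h12, c1p]
    by_contra hle
    push_neg at hle
    rcases eq_or_lt_of_le hle with h | h
    · rw [← h] at hV1
      rw [hV1] at hV2
      exact absurd hV2 (by linarith only [hE12])
    · have := hΦmono (Lc E2) (Lc E1) hL2 h
      rw [hV1, hV2] at this
      linarith only [this, hE12]
  · -- tendsto atTop
    have hbound : ∀ᶠ E in atTop, r_ph * (E - m) ≤ Lc E := by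
      filter_upwards [eventually_gt_atTop (Real.sqrt K), eventually_ge_atTop m]
        with E hEK' hEm
      obtain ⟨hE0, hEK⟩ := hEcond E hEK'
      obtain ⟨hL, hΦ⟩ := hLcSpec E hE0 hEK
      have hmem := h_rmax_mem (Lc E) hL
      have hρph : r_ph < rmax (Lc E) := hmem.1
      have hρ0 : (0:ℝ) < rmax (Lc E) := hrph0.trans hρph
      have hχρ : 0 < χ (rmax (Lc E)) := (hA2 _ (h_ph_mem.trans hρph)).1
      have hχρ1 : χ (rmax (Lc E)) < 1 := hχlt1 _ (h_ph_mem.trans hρph)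
      have hLpos : 0 < Lc E := hLISCOpos.trans hL
      have h1 : E ^ 2 ≤ m ^ 2 + Lc E ^ 2 / rmax (Lc E) ^ 2 := by
        rw [hV] at hΦ
        have hx : (0:ℝ) < m ^ 2 + Lc E ^ 2 / rmax (Lc E) ^ 2 := by positivity
        nlinarith only [hΦ, hχρ1, hx, hχρ]
      have h2 : Lc E ^ 2 / rmax (Lc E) ^ 2 ≤ Lc E ^ 2 / r_ph ^ 2 :=
        div_le_div_of_nonneg_left (sq_nonneg _) (by positivity)
          (pow_le_pow_left₀ hrph0.le hρph.le 2)
      have h3 : E ^ 2 - m ^ 2 ≤ Lc E ^ 2 / r_ph ^ 2 := by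
        linarith only [h1, h2]
      have h4 : (E ^ 2 - m ^ 2) * r_ph ^ 2 ≤ Lc E ^ 2 := by
        have hc : Lc E ^ 2 / r_ph ^ 2 * r_ph ^ 2 = Lc E ^ 2 :=
          div_mul_cancel₀ _ (by positivity)
        have := mul_le_mul_of_nonneg_right h3 (sq_nonneg r_ph)
        linarith only [this, hc]
      have h5 : (r_ph * (E - m)) ^ 2 ≤ Lc E ^ 2 := by
        nlinarith only [h4, hEm, hm, hrph0]
      rcases le_or_gt (r_ph * (E - m)) 0 with h | h
      · exact h.trans hLpos.le
      · exact (pow_le_pow_iff_left₀ h.le hLpos.le two_ne_zero).mp h5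
    apply tendsto_atTop_mono' atTop hbound
    have hsub : Tendsto (fun E : ℝ => E - m) atTop atTop := by
      simpa [sub_eq_add_neg] using tendsto_atTop_add_const_right atTop (-m) tendsto_id
    exact hsub.const_mul_atTop hrph0
end

section
/- The critical angular momentum grows asymptotically linearly in the energy with slope determined by the photon sphere: L_c(E)/E → r_ph/√(χ(r_ph)) as E → ∞. -/
set_option maxHeartbeats 1000000


open Real Filter Set Topology

/-- the critical angular momentum grows asymptotically linearly in the
energy, `L_c(E)/E → r_ph/√χ(r_ph)` as `E → ∞`. -/
theorem stmt7
    (χ : ℝ → ℝ) (r_h M m r_ph r_ISCO L_ISCO : ℝ)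
    (hrh : 0 < r_h)
    (hsmooth : ContDiffOn ℝ (⊤ : ℕ∞) χ (Set.Ioi 0))
    (hA1 : χ r_h = 0 ∧ 0 < deriv χ r_h)
    (hA2 : ∀ r, r_h < r → 0 < χ r ∧ 0 < deriv χ r)
    (hM : 0 < M)
    (hA3a : Tendsto χ atTop (𝓝 1))
    (hA3b : Tendsto (fun r => r ^ 2 * deriv χ r) atTop (𝓝 (2 * M)))
    (hA4 : ∃! r, r ∈ Set.Ioi r_h ∧
      deriv (deriv χ) r / deriv χ r - 2 * deriv χ r / χ r + 3 / r = 0)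
    (G : ℝ → ℝ)
    (hG : ∀ r, G r = (2 * χ r - r * deriv χ r) / (r ^ 3 * deriv χ r))
    -- r_ph is the unique zero of G in (r_h,∞)
    (h_ph_mem : r_h < r_ph)
    (h_ph_zero : G r_ph = 0)
    (h_ph_unique : ∀ r, r_h < r → G r = 0 → r = r_ph)
    -- r_ISCO ∈ (r_ph,∞) is the unique strict global maximum point of G, with G(r_ISCO) > 0
    (h_ISCO_mem : r_ph < r_ISCO)
    (h_ISCO_pos : 0 < G r_ISCO)
    (h_ISCO_max : ∀ r, r_h ≤ r → r ≠ r_ISCO → G r < G r_ISCO)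
    (hm : 0 < m)
    (hLISCO : L_ISCO = m / Real.sqrt (G r_ISCO))
    -- the effective potential V(L,r) = V_{m,L}(r)
    (V : ℝ → ℝ → ℝ)
    (hV : ∀ L r, V L r = χ r * (m ^ 2 + L ^ 2 / r ^ 2))
    -- for L > L_ISCO, rmax L and rmin L are the two zeros of (V L)' in (r_h,∞):
    -- a strict local maximum point in (r_ph, r_ISCO) and a strict local minimum point
    -- in (r_ISCO, ∞) of V L
    (rmax rmin : ℝ → ℝ)
    (h_rmax_mem : ∀ L, L_ISCO < L → rmax L ∈ Set.Ioo r_ph r_ISCO)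
    (h_rmin_mem : ∀ L, L_ISCO < L → r_ISCO < rmin L)
    (h_rmax_crit : ∀ L, L_ISCO < L → deriv (V L) (rmax L) = 0)
    (h_rmin_crit : ∀ L, L_ISCO < L → deriv (V L) (rmin L) = 0)
    (h_only : ∀ L, L_ISCO < L → ∀ r, r_h < r → deriv (V L) r = 0 → r = rmax L ∨ r = rmin L)
    (h_rmax_locmax : ∀ L, L_ISCO < L → ∀ᶠ r in 𝓝[≠] (rmax L), V L r < V L (rmax L))
    (h_rmin_locmin : ∀ L, L_ISCO < L → ∀ᶠ r in 𝓝[≠] (rmin L), V L (rmin L) < V L r)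
    -- the critical angular momentum L_c(E) for E > E_ISCO
    (E_ISCO : ℝ) (hEISCO : E_ISCO = Real.sqrt (V L_ISCO r_ISCO))
    (Lc : ℝ → ℝ)
    (hLc : ∀ E, E_ISCO < E → L_ISCO < Lc E ∧ V (Lc E) (rmax (Lc E)) = E ^ 2) :
    Tendsto (fun E => Lc E / E) atTop (𝓝 (r_ph / Real.sqrt (χ r_ph))) := by

  obtain ⟨hA1a, hA1b⟩ := hA1
  have hrph_pos : 0 < r_ph := hrh.trans h_ph_mem
  have hχph : 0 < χ r_ph := (hA2 r_ph h_ph_mem).1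
  have hLISCO_pos : 0 < L_ISCO := by
    rw [hLISCO]
    exact div_pos hm (Real.sqrt_pos.2 h_ISCO_pos)
  have hopen : IsOpen (Set.Ioi (0:ℝ)) := isOpen_Ioi
  have hχc : ContinuousOn χ (Set.Ioi 0) := hsmooth.continuousOn
  have hχ'c : ContinuousOn (deriv χ) (Set.Ioi 0) :=
    hsmooth.continuousOn_deriv_of_isOpen hopen (by simp)
  have hdiff : ∀ r : ℝ, 0 < r → DifferentiableAt ℝ χ r := fun r hr =>
    ((hsmooth.differentiableOn (by simp)).differentiableAt (hopen.mem_nhds hr))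
  have hsub : Set.Ioi r_h ⊆ Set.Ioi (0:ℝ) := fun x hx => hrh.trans hx
  -- criticality gives L² G r = m²
  have hcrit : ∀ L r, r_h < r → deriv (V L) r = 0 → L ^ 2 * G r = m ^ 2 := by
    intro L r hr hder
    have hr0 : 0 < r := hrh.trans hr
    have hχ' : 0 < deriv χ r := (hA2 r hr).2
    have hVeq : V L = fun s => χ s * (m ^ 2 + L ^ 2 / s ^ 2) := funext (hV L)
    have h1 : HasDerivAt (fun s : ℝ => m ^ 2 + L ^ 2 / s ^ 2)
        (0 + (0 * r ^ 2 - L ^ 2 * (2 * r ^ 1)) / (r ^ 2) ^ 2) r := by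
      exact (hasDerivAt_const r (m ^ 2)).add
        ((hasDerivAt_const r (L ^ 2)).div (hasDerivAt_pow 2 r) (pow_ne_zero 2 hr0.ne'))
    have h2 : HasDerivAt (V L)
        (deriv χ r * (m ^ 2 + L ^ 2 / r ^ 2) +
          χ r * (0 + (0 * r ^ 2 - L ^ 2 * (2 * r ^ 1)) / (r ^ 2) ^ 2)) r := by
      rw [hVeq]
      exact ((hdiff r hr0).hasDerivAt).mul h1
    have h3 := h2.deriv
    rw [hder] at h3
    have hχ'ne : deriv χ r ≠ 0 := hχ'.ne'
    have hrne : r ≠ 0 := hr0.ne'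
    have hbne : r ^ 3 * deriv χ r ≠ 0 := mul_ne_zero (pow_ne_zero 3 hrne) hχ'ne
    rw [hG, ← mul_div_assoc, div_eq_iff hbne]
    field_simp at h3
    have key' : L ^ 2 * (2 * χ r - r * deriv χ r) * r ^ 3
        = m ^ 2 * (r ^ 3 * deriv χ r) * r ^ 3 := by
      linear_combination r ^ 3 * h3
    exact mul_right_cancel₀ (pow_ne_zero 3 hrne) key'
  have hGm : ∀ L, L_ISCO < L → L ^ 2 * G (rmax L) = m ^ 2 := fun L hL =>
    hcrit L (rmax L) (h_ph_mem.trans (h_rmax_mem L hL).1) (h_rmax_crit L hL)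
  -- continuity of G
  have hGc : ContinuousOn G (Set.Ioi r_h) := by
    have hden : ∀ x ∈ Set.Ioi r_h, x ^ 3 * deriv χ x ≠ 0 := by
      intro x hx
      have hx0 : 0 < x := hrh.trans hx
      exact (mul_pos (pow_pos hx0 3) (hA2 x hx).2).ne'
    have h1 : ContinuousOn (fun r => (2 * χ r - r * deriv χ r) / (r ^ 3 * deriv χ r))
        (Set.Ioi r_h) := by
      apply ContinuousOn.div
      · exact (continuousOn_const.mul (hχc.mono hsub)).sub
          (continuousOn_id.mul (hχ'c.mono hsub))
      · exact ((continuousOn_id.pow 3)).mul (hχ'c.mono hsub)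
      · exact hden
    exact h1.congr fun x _ => hG x
  -- G is positive on (r_ph, ∞)
  have hGpos : ∀ r, r_ph < r → 0 < G r := by
    intro r hrr
    by_contra hcon
    push_neg at hcon
    have hrh' : r_h < r := h_ph_mem.trans hrr
    have hne : G r ≠ 0 := by
      intro h0
      exact absurd (h_ph_unique r hrh' h0) (ne_of_gt hrr)
    have hlt : G r < 0 := lt_of_le_of_ne hcon hne
    have hsub2 : Set.uIcc r r_ISCO ⊆ Set.Ioi r_h := by
      intro x hx
      rw [Set.mem_uIcc] at hx
      rcases hx with ⟨h1, _⟩ | ⟨h1, _⟩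
      · exact lt_of_lt_of_le hrh' h1
      · exact lt_of_lt_of_le (h_ph_mem.trans h_ISCO_mem) h1
    have h0mem : (0:ℝ) ∈ Set.uIcc (G r) (G r_ISCO) :=
      Set.mem_uIcc.2 (Or.inl ⟨hlt.le, h_ISCO_pos.le⟩)
    obtain ⟨s, hs, hGs⟩ := intermediate_value_uIcc (hGc.mono hsub2) h0mem
    have hs' : r_h < s := hsub2 hs
    have hseq := h_ph_unique s hs' hGs
    rw [Set.mem_uIcc] at hs
    rcases hs with ⟨h1, _⟩ | ⟨h1, _⟩
    · exact absurd hseq (ne_of_gt (lt_of_lt_of_le hrr h1))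
    · exact absurd hseq (ne_of_gt (lt_of_lt_of_le h_ISCO_mem h1))
  -- χ ≤ 1 above r_h
  have hχle : ∀ r, r_h < r → χ r ≤ 1 := by
    have hmono : StrictMonoOn χ (Set.Ici r_h) := by
      apply strictMonoOn_of_deriv_pos (convex_Ici r_h)
      · exact hχc.mono fun x hx => lt_of_lt_of_le hrh hx
      · intro x hx
        rw [interior_Ici] at hx
        exact (hA2 x hx).2
    intro r hr
    refine ge_of_tendsto hA3a ?_
    filter_upwards [eventually_ge_atTop r] with s hs
    exact (hmono.monotoneOn) (le_of_lt hr) (hr.le.trans hs) hs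
  -- rmax L → r_ph as L → ∞
  have hrmax_tendsto : Tendsto rmax atTop (𝓝 r_ph) := by
    rw [tendsto_order]
    constructor
    · intro a ha
      filter_upwards [eventually_gt_atTop L_ISCO] with L hL
      exact ha.trans (h_rmax_mem L hL).1
    · intro b hb
      set b' := min b r_ISCO with hb'def
      have hb' : r_ph < b' := lt_min hb h_ISCO_mem
      have hKne : (Set.Icc b' r_ISCO).Nonempty := Set.nonempty_Icc.2 (min_le_right b r_ISCO)
      have hKsub : Set.Icc b' r_ISCO ⊆ Set.Ioi r_h := fun x hx =>
        h_ph_mem.trans (lt_of_lt_of_le hb' hx.1)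
      obtain ⟨x0, hx0K, hx0min⟩ := isCompact_Icc.exists_isMinOn hKne (hGc.mono hKsub)
      have hδ : 0 < G x0 := hGpos x0 (lt_of_lt_of_le hb' hx0K.1)
      have hsδ : 0 < Real.sqrt (G x0) := Real.sqrt_pos.2 hδ
      filter_upwards [eventually_gt_atTop L_ISCO,
        eventually_gt_atTop (m / Real.sqrt (G x0))] with L hL1 hL2
      by_contra hcon
      push_neg at hcon
      have hmem := h_rmax_mem L hL1
      have hin : rmax L ∈ Set.Icc b' r_ISCO :=
        ⟨le_trans (min_le_left b r_ISCO) hcon, hmem.2.le⟩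
      have hminle : G x0 ≤ G (rmax L) := hx0min hin
      have hGr := hGm L hL1
      have hLpos : 0 < L := hLISCO_pos.trans hL1
      have hmlt : m < L * Real.sqrt (G x0) := (div_lt_iff₀ hsδ).1 hL2
      have hsq : Real.sqrt (G x0) ^ 2 = G x0 := Real.sq_sqrt hδ.le
      nlinarith [hmlt, hGr, hminle, hLpos, hm, sq_nonneg (L * Real.sqrt (G x0) - m)]
  -- Lc → ∞
  have hE2 : ∀ E, E_ISCO < E →
      E ^ 2 = χ (rmax (Lc E)) * (m ^ 2 + (Lc E) ^ 2 / (rmax (Lc E)) ^ 2) := by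
    intro E hE
    rw [← (hLc E hE).2, hV]
  have hLc_atTop : Tendsto Lc atTop atTop := by
    have hbound : ∀ᶠ E in atTop, r_ph * (E - m) ≤ Lc E := by
      filter_upwards [eventually_gt_atTop E_ISCO, eventually_gt_atTop m] with E hE hEm
      obtain ⟨hL, _⟩ := hLc E hE
      have hρmem := h_rmax_mem (Lc E) hL
      have hρpos : 0 < rmax (Lc E) := hrph_pos.trans hρmem.1
      have hLpos : 0 < Lc E := hLISCO_pos.trans hL
      have hE2' := hE2 E hE
      have hχρ1 : χ (rmax (Lc E)) ≤ 1 := hχle _ (h_ph_mem.trans hρmem.1)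
      have hχρ0 : 0 < χ (rmax (Lc E)) := (hA2 _ (h_ph_mem.trans hρmem.1)).1
      have h1 : (Lc E) ^ 2 / (rmax (Lc E)) ^ 2 ≤ (Lc E) ^ 2 / r_ph ^ 2 := by
        gcongr
        exact hρmem.1.le
      have hxnn : 0 ≤ m ^ 2 + (Lc E) ^ 2 / (rmax (Lc E)) ^ 2 := by positivity
      have h2 : E ^ 2 ≤ m ^ 2 + (Lc E) ^ 2 / r_ph ^ 2 := by nlinarith
      have h3 : r_ph ^ 2 * (E ^ 2 - m ^ 2) ≤ (Lc E) ^ 2 := by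
        have hq : (Lc E) ^ 2 / r_ph ^ 2 * r_ph ^ 2 = (Lc E) ^ 2 := by
          field_simp
        nlinarith [h2, sq_nonneg r_ph]
      have h4 : (r_ph * (E - m)) ^ 2 ≤ (Lc E) ^ 2 := by nlinarith [h3, hEm, hm]
      nlinarith [h4, hLpos, hrph_pos, hEm, hm]
    refine tendsto_atTop_mono' atTop hbound ?_
    have : Tendsto (fun E : ℝ => E - m) atTop atTop :=
      tendsto_atTop_add_const_right atTop (-m) tendsto_id
    exact this.const_mul_atTop hrph_pos
  -- composed limits
  have hρE : Tendsto (fun E => rmax (Lc E)) atTop (𝓝 r_ph) := hrmax_tendsto.comp hLc_atTop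
  have hχρE : Tendsto (fun E => χ (rmax (Lc E))) atTop (𝓝 (χ r_ph)) :=
    ((hχc.continuousAt (hopen.mem_nhds hrph_pos)).tendsto).comp hρE
  have h0 : Tendsto (fun E => m ^ 2 / (Lc E) ^ 2) atTop (𝓝 0) := by
    have h1 : Tendsto (fun E => (Lc E) ^ 2) atTop atTop :=
      (tendsto_pow_atTop (two_ne_zero)).comp hLc_atTop
    have h2 : Tendsto (fun E => ((Lc E) ^ 2)⁻¹) atTop (𝓝 0) := h1.inv_tendsto_atTop
    have h3 : Tendsto (fun E => m ^ 2 * ((Lc E) ^ 2)⁻¹) atTop (𝓝 (m ^ 2 * 0)) :=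
      tendsto_const_nhds.mul h2
    rw [mul_zero] at h3
    exact h3.congr fun E => by rw [div_eq_mul_inv]
  have hinv : Tendsto (fun E => 1 / (rmax (Lc E)) ^ 2) atTop (𝓝 (1 / r_ph ^ 2)) := by
    have h1 : Tendsto (fun E => (rmax (Lc E)) ^ 2) atTop (𝓝 (r_ph ^ 2)) := hρE.pow 2
    have h2 := h1.inv₀ (pow_ne_zero 2 hrph_pos.ne')
    simpa [one_div] using h2
  have hA : Tendsto (fun E => χ (rmax (Lc E)) * (m ^ 2 / (Lc E) ^ 2 + 1 / (rmax (Lc E)) ^ 2))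
      atTop (𝓝 (χ r_ph * (0 + 1 / r_ph ^ 2))) := hχρE.mul (h0.add hinv)
  have ha_pos : 0 < χ r_ph * (0 + 1 / r_ph ^ 2) := by positivity
  have htarget : Tendsto
      (fun E => (Real.sqrt (χ (rmax (Lc E)) * (m ^ 2 / (Lc E) ^ 2 + 1 / (rmax (Lc E)) ^ 2)))⁻¹)
      atTop (𝓝 ((Real.sqrt (χ r_ph * (0 + 1 / r_ph ^ 2)))⁻¹)) :=
    ((Real.continuous_sqrt.tendsto _).comp hA).inv₀
      (ne_of_gt (Real.sqrt_pos.2 ha_pos))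
  have hval : (Real.sqrt (χ r_ph * (0 + 1 / r_ph ^ 2)))⁻¹ = r_ph / Real.sqrt (χ r_ph) := by
    have h1 : χ r_ph * (0 + 1 / r_ph ^ 2) = (Real.sqrt (χ r_ph) / r_ph) ^ 2 := by
      rw [div_pow, Real.sq_sqrt hχph.le]
      field_simp
      ring
    rw [h1, Real.sqrt_sq (by positivity), inv_div]
  rw [← hval]
  refine htarget.congr' ?_
  filter_upwards [eventually_gt_atTop E_ISCO, eventually_gt_atTop 0] with E hE hE0
  obtain ⟨hL, _⟩ := hLc E hE
  have hρmem := h_rmax_mem (Lc E) hL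
  have hρpos : 0 < rmax (Lc E) := hrph_pos.trans hρmem.1
  have hLpos : 0 < Lc E := hLISCO_pos.trans hL
  have hE2' := hE2 E hE
  have hAeq : χ (rmax (Lc E)) * (m ^ 2 / (Lc E) ^ 2 + 1 / (rmax (Lc E)) ^ 2)
      = (E / Lc E) ^ 2 := by
    have hρne : rmax (Lc E) ≠ 0 := hρpos.ne'
    have hLne : Lc E ≠ 0 := hLpos.ne'
    rw [div_pow, hE2', eq_div_iff (pow_ne_zero 2 hLne)]
    field_simp
  rw [hAeq, Real.sqrt_sq (by positivity), inv_div]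
end

section
/- Fix r > r_h and consider the set S(r) of pairs (E, L) with E > m, L > L_c(E), r > r_max(L) and V_{m,L}(r) < E² (the parameter region for scattered particles at radius r). Then: (1) if r_h < r ≤ r_ph, the set S(r) is empty; (2) if r ≥ r_mb, then S(r) = {(E, L) : E > m, L_c(E) < L < L_max(E, r)}; (3) if r_ph < r < r_mb, then S(r) = {(E, L) : E > E_min(r), L_c(E) < L < L_max(E, r)}, where E_min(r) := m·χ(r)/√(χ(r) − r·χ'(r)/2); here L_max(E, r) := r·√(E²/χ(r) − m²). -/
open Real Filter Set Topology

private lemma aux_sq_lt {x y : ℝ} (hx : 0 ≤ x) (h : x < y) : x ^ 2 < y ^ 2 := by nlinarith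

private lemma aux_sq_le {x y : ℝ} (hx : 0 ≤ x) (h : x ≤ y) : x ^ 2 ≤ y ^ 2 := by nlinarith

private lemma aux_lt_of_sq {x y : ℝ} (hy : 0 ≤ y) (h : x ^ 2 < y ^ 2) : x < y := by
  by_contra hc
  push_neg at hc
  nlinarith

private lemma aux_le_of_sq {x y : ℝ} (hy : 0 ≤ y) (h : x ^ 2 ≤ y ^ 2) : x ≤ y := by
  by_contra hc
  push_neg at hc
  nlinarith

set_option maxHeartbeats 1000000 in
/-- description of the parameter region `S(r)` of scattered particles at a
fixed radius `r > r_h` (Lemma on the ranges of `E` and `L`): it is empty for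
`r_h < r ≤ r_ph`; for `r ≥ r_mb` it is `{(E,L) : E > m, L_c(E) < L < L_max(E,r)}`; and
for `r_ph < r < r_mb` it is `{(E,L) : E > E_min(r), L_c(E) < L < L_max(E,r)}`. -/
theorem stmt8
    (χ : ℝ → ℝ) (r_h M m r_ph r_ISCO L_ISCO : ℝ)
    (hrh : 0 < r_h)
    (hsmooth : ContDiffOn ℝ (⊤ : ℕ∞) χ (Set.Ioi 0))
    (hA1 : χ r_h = 0 ∧ 0 < deriv χ r_h)
    (hA2 : ∀ r, r_h < r → 0 < χ r ∧ 0 < deriv χ r)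
    (hM : 0 < M)
    (hA3a : Tendsto χ atTop (𝓝 1))
    (hA3b : Tendsto (fun r => r ^ 2 * deriv χ r) atTop (𝓝 (2 * M)))
    (hA4 : ∃! r, r ∈ Set.Ioi r_h ∧
      deriv (deriv χ) r / deriv χ r - 2 * deriv χ r / χ r + 3 / r = 0)
    (G : ℝ → ℝ)
    (hG : ∀ r, G r = (2 * χ r - r * deriv χ r) / (r ^ 3 * deriv χ r))
    -- r_ph is the unique zero of G in (r_h,∞)
    (h_ph_mem : r_h < r_ph)
    (h_ph_zero : G r_ph = 0)
    (h_ph_unique : ∀ r, r_h < r → G r = 0 → r = r_ph)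
    -- r_ISCO ∈ (r_ph,∞) is the unique strict global maximum point of G, with G(r_ISCO) > 0
    (h_ISCO_mem : r_ph < r_ISCO)
    (h_ISCO_pos : 0 < G r_ISCO)
    (h_ISCO_max : ∀ r, r_h ≤ r → r ≠ r_ISCO → G r < G r_ISCO)
    (hm : 0 < m)
    (hLISCO : L_ISCO = m / Real.sqrt (G r_ISCO))
    -- the effective potential V(L,r) = V_{m,L}(r)
    (V : ℝ → ℝ → ℝ)
    (hV : ∀ L r, V L r = χ r * (m ^ 2 + L ^ 2 / r ^ 2))
    -- for L > L_ISCO, rmax L and rmin L are the two zeros of (V L)' in (r_h,∞)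
    (rmax rmin : ℝ → ℝ)
    (h_rmax_mem : ∀ L, L_ISCO < L → rmax L ∈ Set.Ioo r_ph r_ISCO)
    (h_rmin_mem : ∀ L, L_ISCO < L → r_ISCO < rmin L)
    (h_rmax_crit : ∀ L, L_ISCO < L → deriv (V L) (rmax L) = 0)
    (h_rmin_crit : ∀ L, L_ISCO < L → deriv (V L) (rmin L) = 0)
    (h_only : ∀ L, L_ISCO < L → ∀ r, r_h < r → deriv (V L) r = 0 → r = rmax L ∨ r = rmin L)
    (h_rmax_locmax : ∀ L, L_ISCO < L → ∀ᶠ r in 𝓝[≠] (rmax L), V L r < V L (rmax L))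
    (h_rmin_locmin : ∀ L, L_ISCO < L → ∀ᶠ r in 𝓝[≠] (rmin L), V L (rmin L) < V L r)
    -- the critical angular momentum L_c(E) for E > E_ISCO, with E_ISCO < m
    (E_ISCO : ℝ) (hEISCO : E_ISCO = Real.sqrt (V L_ISCO r_ISCO))
    (hEISCOm : E_ISCO < m)
    (Lc : ℝ → ℝ)
    (hLc : ∀ E, E_ISCO < E → L_ISCO < Lc E ∧ V (Lc E) (rmax (Lc E)) = E ^ 2)
    -- the marginally bound radius
    (r_mb : ℝ) (h_rmb : r_mb = rmax (Lc m))
    -- the fixed radius r > r_h and the scattering parameter region S(r)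
    (r : ℝ) (hr : r_h < r)
    (S : Set (ℝ × ℝ))
    (hS : S = {p : ℝ × ℝ | m < p.1 ∧ Lc p.1 < p.2 ∧ rmax p.2 < r ∧ V p.2 r < p.1 ^ 2}) :
    -- (1) empty region inside the photon sphere
    (r ≤ r_ph → S = ∅) ∧
    -- (2) region for r ≥ r_mb
    (r_mb ≤ r → S = {p : ℝ × ℝ | m < p.1 ∧ Lc p.1 < p.2 ∧
      p.2 < r * Real.sqrt (p.1 ^ 2 / χ r - m ^ 2)}) ∧
    -- (3) region for r_ph < r < r_mb
    (r_ph < r → r < r_mb → S = {p : ℝ × ℝ |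
      m * χ r / Real.sqrt (χ r - r * deriv χ r / 2) < p.1 ∧ Lc p.1 < p.2 ∧
      p.2 < r * Real.sqrt (p.1 ^ 2 / χ r - m ^ 2)}) := by
  obtain ⟨hA1a, hA1b⟩ := hA1
  have hχpos : ∀ s, r_h < s → 0 < χ s := fun s hs => (hA2 s hs).1
  have hχ'pos : ∀ s, r_h < s → 0 < deriv χ s := fun s hs => (hA2 s hs).2
  have hχ'pos' : ∀ s, r_h ≤ s → 0 < deriv χ s := by
    intro s hs
    rcases eq_or_lt_of_le hs with h | h
    · rw [← h]; exact hA1b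
    · exact hχ'pos s h
  have hpos : ∀ s, r_h ≤ s → 0 < s := fun s hs => lt_of_lt_of_le hrh hs
  have hsqrtG : 0 < Real.sqrt (G r_ISCO) := Real.sqrt_pos.mpr h_ISCO_pos
  have hLIpos : 0 < L_ISCO := by rw [hLISCO]; positivity
  have h_h_ph : r_h < r_ph := h_ph_mem
  have hrISCOh : r_h < r_ISCO := h_h_ph.trans h_ISCO_mem
  -- differentiability of χ
  have hdiffχ : ∀ s : ℝ, 0 < s → HasDerivAt χ (deriv χ s) s := by
    intro s hs
    exact ((hsmooth.contDiffAt (isOpen_Ioi.mem_nhds hs)).differentiableAt (by simp)).hasDerivAt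
  -- the derivative of the effective potential
  have hasDerivV : ∀ (L s : ℝ), r_h < s →
      HasDerivAt (V L) (deriv χ s * (m ^ 2 - L ^ 2 * G s)) s := by
    intro L s hs
    have hs0 : 0 < s := hpos s hs.le
    have hχ's : deriv χ s ≠ 0 := (hχ'pos s hs).ne'
    have hs0' : s ≠ 0 := hs0.ne'
    have h1 : HasDerivAt (fun x : ℝ => x ^ 2) (2 * s) s := by
      simpa using hasDerivAt_pow 2 s
    have h2 : HasDerivAt (fun x : ℝ => L ^ 2 / x ^ 2)
        ((0 * s ^ 2 - L ^ 2 * (2 * s)) / (s ^ 2) ^ 2) s :=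
      (hasDerivAt_const s (L ^ 2)).div h1 (pow_ne_zero 2 hs0')
    have h3 := (hasDerivAt_const s (m ^ 2)).add h2
    have h4 := (hdiffχ s hs0).mul h3
    have hfun : V L = fun x => χ x * (m ^ 2 + L ^ 2 / x ^ 2) := funext (hV L)
    rw [hfun]
    refine h4.congr_deriv ?_
    rw [hG s, Pi.add_apply]
    field_simp
    ring
  have derivV : ∀ (L s : ℝ), r_h < s →
      deriv (V L) s = deriv χ s * (m ^ 2 - L ^ 2 * G s) := fun L s hs =>
    (hasDerivV L s hs).deriv
  -- continuity of G
  have hsub0 : Ici r_h ⊆ Ioi (0 : ℝ) := fun y hy => lt_of_lt_of_le hrh hy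
  have hc1 : ContinuousOn χ (Ici r_h) := hsmooth.continuousOn.mono hsub0
  have hc2 : ContinuousOn (deriv χ) (Ici r_h) :=
    (hsmooth.continuousOn_deriv_of_isOpen isOpen_Ioi (by simp)).mono hsub0
  have Gcont : ContinuousOn G (Ici r_h) := by
    have hGfun : G = fun s => (2 * χ s - s * deriv χ s) / (s ^ 3 * deriv χ s) := funext hG
    rw [hGfun]
    apply ContinuousOn.div
    · exact (continuousOn_const.mul hc1).sub (continuousOn_id.mul hc2)
    · exact (continuousOn_id.pow 3).mul hc2
    · intro y hy
      exact ne_of_gt (mul_pos (pow_pos (hpos y hy) 3) (hχ'pos' y hy))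
  have GrH : G r_h < 0 := by
    rw [hG, hA1a]
    apply div_neg_of_neg_of_pos
    · linarith [mul_pos hrh hA1b]
    · exact mul_pos (pow_pos hrh 3) hA1b
  -- sign of G
  have Gpos : ∀ s, r_ph < s → 0 < G s := by
    intro s hs
    have hsh : r_h < s := h_h_ph.trans hs
    rcases lt_trichotomy (G s) 0 with h | h | h
    · exfalso
      rcases lt_trichotomy s r_ISCO with h2 | h2 | h2
      · obtain ⟨c, hc, hGc⟩ := intermediate_value_Icc h2.le
          (Gcont.mono fun y hy => le_trans hsh.le hy.1) ⟨h.le, h_ISCO_pos.le⟩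
        have hch : r_h < c := lt_of_lt_of_le hsh hc.1
        have hceq := h_ph_unique c hch hGc
        rw [hceq] at hc
        exact absurd hc.1 (not_le.mpr hs)
      · rw [h2] at h; linarith
      · obtain ⟨c, hc, hGc⟩ := intermediate_value_Icc' h2.le
          (Gcont.mono fun y hy => le_trans hrISCOh.le hy.1) ⟨h.le, h_ISCO_pos.le⟩
        have hch : r_h < c := lt_of_lt_of_le hrISCOh hc.1
        have hceq := h_ph_unique c hch hGc
        rw [hceq] at hc
        exact absurd hc.1 (not_le.mpr h_ISCO_mem)
    · exact absurd (h_ph_unique s hsh h) (ne_of_gt hs)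
    · exact h
  have Gneg : ∀ s, r_h ≤ s → s < r_ph → G s < 0 := by
    intro s hs1 hs2
    rcases lt_trichotomy (G s) 0 with h | h | h
    · exact h
    · exfalso
      rcases eq_or_lt_of_le hs1 with h2 | h2
      · rw [← h2] at h; linarith
      · have := h_ph_unique s h2 h
        rw [this] at hs2; exact lt_irrefl _ hs2
    · exfalso
      obtain ⟨c, hc, hGc⟩ := intermediate_value_Icc hs1
        (Gcont.mono fun y hy => hy.1) ⟨GrH.le, h.le⟩
      have hcne : c ≠ r_h := by intro hh; rw [hh] at hGc; linarith
      have hch : r_h < c := lt_of_le_of_ne hc.1 (Ne.symm hcne)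
      have hceq := h_ph_unique c hch hGc
      rw [hceq] at hc
      linarith [hc.2]
  -- G(rmax L) = m^2/L^2
  have hGrmax : ∀ L, L_ISCO < L → G (rmax L) = m ^ 2 / L ^ 2 := by
    intro L hL
    have h1 := h_rmax_crit L hL
    have hmem := h_rmax_mem L hL
    have hrh' : r_h < rmax L := h_h_ph.trans hmem.1
    rw [derivV L _ hrh'] at h1
    have hχ' := hχ'pos _ hrh'
    have h2 : m ^ 2 - L ^ 2 * G (rmax L) = 0 := by
      rcases mul_eq_zero.mp h1 with h | h
      · exact absurd h hχ'.ne'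
      · exact h
    have hL0 : (0 : ℝ) < L := lt_trans hLIpos hL
    rw [eq_div_iff (pow_ne_zero 2 hL0.ne')]
    linarith
  -- points with positive G below r_ISCO are rmax points
  have hrmax_of : ∀ s, r_h < s → s < r_ISCO → 0 < G s →
      s = rmax (m / Real.sqrt (G s)) := by
    intro s hs1 hs2 hs3
    have hGsI : G s < G r_ISCO := h_ISCO_max s hs1.le (ne_of_lt hs2)
    have hsq : 0 < Real.sqrt (G s) := Real.sqrt_pos.mpr hs3
    have hL : L_ISCO < m / Real.sqrt (G s) := by
      rw [hLISCO]
      exact div_lt_div_of_pos_left hm hsq (Real.sqrt_lt_sqrt hs3.le hGsI)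
    have hL2 : (m / Real.sqrt (G s)) ^ 2 * G s = m ^ 2 := by
      rw [div_pow, Real.sq_sqrt hs3.le]
      field_simp
    have hcrit : deriv (V (m / Real.sqrt (G s))) s = 0 := by
      rw [derivV _ s hs1]
      have h0 : m ^ 2 - (m / Real.sqrt (G s)) ^ 2 * G s = 0 := by linarith
      rw [h0, mul_zero]
    rcases h_only _ hL s hs1 hcrit with h | h
    · exact h
    · exfalso
      have := h_rmin_mem _ hL
      rw [← h] at this; linarith
  -- strict monotonicity of G on [r_ph, r_ISCO]
  have Gmono : ∀ a b, r_ph ≤ a → a < b → b ≤ r_ISCO → G a < G b := by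
    intro a b hpa hab hbI
    by_contra hcon
    push_neg at hcon
    have hah : r_h < a := lt_of_lt_of_le h_h_ph hpa
    have haI : a < r_ISCO := lt_of_lt_of_le hab hbI
    have hGaI : G a < G r_ISCO := h_ISCO_max a hah.le (ne_of_lt haI)
    obtain ⟨c, hcmem, hGc⟩ := intermediate_value_Icc hbI
      (Gcont.mono fun y hy => le_trans (hah.trans hab).le hy.1) ⟨hcon, hGaI.le⟩
    have hac : a < c := lt_of_lt_of_le hab hcmem.1
    have hch : r_h < c := hah.trans hac
    have hcI : c < r_ISCO := by
      rcases eq_or_lt_of_le hcmem.2 with h | h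
      · exfalso
        rw [h] at hGc
        exact absurd hGc (ne_of_gt hGaI)
      · exact h
    have hpa' : r_ph < a := by
      rcases eq_or_lt_of_le hpa with h | h
      · exfalso
        have hGc0 : G c = 0 := by rw [hGc, ← h, h_ph_zero]
        have hceq := h_ph_unique c hch hGc0
        rw [hceq, ← h] at hac
        exact lt_irrefl _ hac
      · exact h
    have hGa0 : 0 < G a := Gpos a hpa'
    have h1 := hrmax_of a hah haI hGa0
    have h2 := hrmax_of c hch hcI (by rw [hGc]; exact hGa0)
    rw [hGc] at h2
    rw [← h2] at h1
    exact absurd h1 (ne_of_lt hac)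
  -- positive derivative implies bigger values to the right
  have slope_pos : ∀ (L d a b : ℝ), HasDerivAt (V L) d a → 0 < d → a < b →
      ∃ x, a < x ∧ x < b ∧ V L a < V L x := by
    intro L d a b hf hd hab
    have h1 : Tendsto (slope (V L) a) (𝓝[>] a) (𝓝 d) :=
      (hasDerivAt_iff_tendsto_slope.mp hf).mono_left
        (nhdsWithin_mono a fun x hx => Set.mem_compl_singleton_iff.mpr (ne_of_gt hx))
    have h2 : ∀ᶠ x in 𝓝[>] a, 0 < slope (V L) a x := h1.eventually (eventually_gt_nhds hd)
    have h3 : Ioo a b ∈ 𝓝[>] a := Ioo_mem_nhdsGT_of_mem ⟨le_refl a, hab⟩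
    obtain ⟨x, hx1, hx2⟩ := (h2.and (eventually_of_mem h3 fun x hx => hx)).exists
    refine ⟨x, hx2.1, hx2.2, ?_⟩
    rw [slope_def_field] at hx1
    have hxa : 0 < x - a := sub_pos.mpr hx2.1
    rcases div_pos_iff.mp hx1 with ⟨h, _⟩ | ⟨_, h⟩
    · linarith
    · linarith
  -- key: V L (rmax L) dominates on (r_h, rmin L]
  have keymax : ∀ L, L_ISCO < L → ∀ x, r_h < x → x ≤ rmin L → V L x ≤ V L (rmax L) := by
    intro L hL x hx1 hx2
    obtain ⟨hrm1, hrm2⟩ := h_rmax_mem L hL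
    have hrmin := h_rmin_mem L hL
    have hrmaxh : r_h < rmax L := h_h_ph.trans hrm1
    set a := min x (rmax L) with ha
    have ha1 : r_h < a := lt_min hx1 hrmaxh
    have ha2 : a ≤ rmax L := min_le_right _ _
    have harmin : a < rmin L := lt_of_le_of_lt ha2 (hrm2.trans hrmin)
    have hcont : ContinuousOn (V L) (Icc a (rmin L)) := by
      intro y hy
      exact ((hasDerivV L y (lt_of_lt_of_le ha1 hy.1)).differentiableAt.continuousAt).continuousWithinAt
    obtain ⟨ξ, hξmem, hξmax⟩ := isCompact_Icc.exists_isMaxOn ⟨a, le_refl a, harmin.le⟩ hcont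
    have hxmem : x ∈ Icc a (rmin L) := ⟨min_le_left _ _, hx2⟩
    have key : V L ξ ≤ V L (rmax L) := by
      rcases eq_or_lt_of_le hξmem.1 with hξa | hξa
      · rcases eq_or_lt_of_le ha2 with haM | haM
        · exact le_of_eq (by rw [← hξa, haM])
        · exfalso
          have hGa : G a < G (rmax L) := by
            rcases lt_trichotomy a r_ph with h | h | h
            · exact lt_trans (Gneg a ha1.le h) (Gpos (rmax L) hrm1)
            · rw [h, h_ph_zero]; exact Gpos _ hrm1
            · exact Gmono a (rmax L) h.le haM hrm2.le
          have hGrm := hGrmax L hL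
          have hLpos : 0 < L := lt_trans hLIpos hL
          have hd : 0 < deriv χ a * (m ^ 2 - L ^ 2 * G a) := by
            apply mul_pos (hχ'pos a ha1)
            rw [hGrm] at hGa
            have h5 := (lt_div_iff₀ (by positivity : (0 : ℝ) < L ^ 2)).mp hGa
            linarith [mul_comm (G a) (L ^ 2)]
          obtain ⟨y, hy1, hy2, hy3⟩ := slope_pos L _ a (rmin L) (hasDerivV L a ha1) hd harmin
          have h6 : V L y ≤ V L ξ := hξmax ⟨hy1.le, hy2.le⟩
          rw [← hξa] at h6
          linarith
      · rcases eq_or_lt_of_le hξmem.2 with hξr | hξr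
        · exfalso
          have hev := h_rmin_locmin L hL
          have h1 : Ioo a (rmin L) ∈ 𝓝[<] (rmin L) := Ioo_mem_nhdsLT_of_mem ⟨harmin, le_refl _⟩
          have h2 : ∀ᶠ y in 𝓝[<] (rmin L), V L (rmin L) < V L y :=
            hev.filter_mono (nhdsWithin_mono _ fun y hy =>
              Set.mem_compl_singleton_iff.mpr (ne_of_lt hy))
          obtain ⟨y, hy1, hy2⟩ := (h2.and (eventually_of_mem h1 fun y hy => hy)).exists
          have h6 : V L y ≤ V L ξ := hξmax ⟨hy2.1.le, hy2.2.le⟩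
          rw [hξr] at h6
          linarith
        · have hloc : IsLocalMax (V L) ξ := hξmax.isLocalMax (Icc_mem_nhds hξa hξr)
          have hcrit : deriv (V L) ξ = 0 := hloc.deriv_eq_zero
          rcases h_only L hL ξ (lt_trans ha1 hξa) hcrit with h | h
          · rw [h]
          · exfalso; rw [h] at hξr; exact lt_irrefl _ hξr
    exact le_trans (hξmax hxmem) key
  -- pointwise monotonicity in L
  have hVL : ∀ s, r_h < s → ∀ L1 L2 : ℝ, 0 ≤ L1 → L1 < L2 → V L1 s < V L2 s := by
    intro s hs L1 L2 h1 h2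
    rw [hV, hV]
    have hχ := hχpos s hs
    have hs0 : 0 < s := hpos s hs.le
    have hsq : L1 ^ 2 < L2 ^ 2 := aux_sq_lt h1 h2
    have h3 : L1 ^ 2 / s ^ 2 < L2 ^ 2 / s ^ 2 :=
      (div_lt_div_iff_of_pos_right (by positivity)).mpr hsq
    exact mul_lt_mul_of_pos_left (by linarith) hχ
  -- F(L) := V L (rmax L) exceeds E_ISCO^2
  have hEISCOsq : E_ISCO ^ 2 = V L_ISCO r_ISCO := by
    rw [hEISCO]
    apply Real.sq_sqrt
    rw [hV]
    exact mul_nonneg (hχpos r_ISCO hrISCOh).le (by positivity)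
  have hF_gt : ∀ L, L_ISCO < L → E_ISCO ^ 2 < V L (rmax L) := by
    intro L hL
    have h2 : V L_ISCO r_ISCO < V L r_ISCO := hVL r_ISCO hrISCOh L_ISCO L hLIpos.le hL
    have h3 : V L r_ISCO ≤ V L (rmax L) :=
      keymax L hL r_ISCO hrISCOh (h_rmin_mem L hL).le
    linarith [hEISCOsq]
  -- F is strictly increasing
  have Fmono : ∀ L1 L2, L_ISCO < L1 → L1 < L2 → V L1 (rmax L1) < V L2 (rmax L2) := by
    intro L1 L2 h1 h2
    have hm1 := h_rmax_mem L1 h1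
    have hrh1 : r_h < rmax L1 := h_h_ph.trans hm1.1
    have step1 : V L1 (rmax L1) < V L2 (rmax L1) :=
      hVL _ hrh1 L1 L2 (hLIpos.trans h1).le h2
    have step2 : V L2 (rmax L1) ≤ V L2 (rmax L2) :=
      keymax L2 (h1.trans h2) _ hrh1 (hm1.2.trans (h_rmin_mem L2 (h1.trans h2))).le
    linarith
  have FmonoLe : ∀ L1 L2, L_ISCO < L1 → L1 ≤ L2 → V L1 (rmax L1) ≤ V L2 (rmax L2) := by
    intro L1 L2 h1 h2
    rcases eq_or_lt_of_le h2 with h | h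
    · rw [h]
    · exact (Fmono _ _ h1 h).le
  -- the L_max characterization
  have hLmax_iff : ∀ E L : ℝ, 0 < L →
      (V L r < E ^ 2 ↔ L < r * Real.sqrt (E ^ 2 / χ r - m ^ 2)) := by
    intro E L hL
    have hχ := hχpos r hr
    have hr0 : 0 < r := hpos r hr.le
    constructor
    · intro h
      rw [hV] at h
      have hx : L ^ 2 / r ^ 2 < E ^ 2 / χ r - m ^ 2 := by
        have h' : (m ^ 2 + L ^ 2 / r ^ 2) * χ r < E ^ 2 := by
          rw [mul_comm]; exact h
        have h'' : m ^ 2 + L ^ 2 / r ^ 2 < E ^ 2 / χ r := (lt_div_iff₀ hχ).mpr h'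
        linarith
      have h2 : L / r < Real.sqrt (E ^ 2 / χ r - m ^ 2) :=
        (Real.lt_sqrt (by positivity)).mpr (by rw [div_pow]; exact hx)
      calc L = r * (L / r) := by field_simp
      _ < r * Real.sqrt (E ^ 2 / χ r - m ^ 2) := mul_lt_mul_of_pos_left h2 hr0
    · intro h
      have h2 : L / r < Real.sqrt (E ^ 2 / χ r - m ^ 2) := by
        rw [div_lt_iff₀ hr0, mul_comm]
        exact h
      have hx : L ^ 2 / r ^ 2 < E ^ 2 / χ r - m ^ 2 := by
        have := (Real.lt_sqrt (by positivity : (0:ℝ) ≤ L / r)).mp h2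
        rwa [div_pow] at this
      rw [hV]
      have h3 : m ^ 2 + L ^ 2 / r ^ 2 < E ^ 2 / χ r := by linarith
      calc χ r * (m ^ 2 + L ^ 2 / r ^ 2) < χ r * (E ^ 2 / χ r) :=
        mul_lt_mul_of_pos_left h3 hχ
      _ = E ^ 2 := by field_simp
  have hLcm := hLc m hEISCOm
  have hLcm0 : 0 < Lc m := hLIpos.trans hLcm.1
  have hrmbmem : rmax (Lc m) ∈ Set.Ioo r_ph r_ISCO := h_rmax_mem (Lc m) hLcm.1
  have hGmb : G r_mb = m ^ 2 / (Lc m) ^ 2 := by rw [h_rmb]; exact hGrmax _ hLcm.1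
  refine ⟨?_, ?_, ?_⟩
  -- Part 1
  · intro hrle
    rw [hS]
    apply Set.eq_empty_iff_forall_notMem.mpr
    rintro ⟨E, L⟩ ⟨hE, hL, hrmaxr, -⟩
    have hEI : E_ISCO < E := lt_trans hEISCOm hE
    have hLcE := hLc E hEI
    have hLL : L_ISCO < L := lt_trans hLcE.1 hL
    have := (h_rmax_mem L hLL).1
    simp only at hrmaxr
    linarith
  -- Part 2
  · intro hrge
    rw [hS]
    ext ⟨E, L⟩
    simp only [Set.mem_setOf_eq]
    constructor
    · rintro ⟨hE, hL, h3, h4⟩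
      have hEI : E_ISCO < E := lt_trans hEISCOm hE
      have hL0 : 0 < L := lt_trans hLIpos (lt_trans (hLc E hEI).1 hL)
      exact ⟨hE, hL, (hLmax_iff E L hL0).mp h4⟩
    · rintro ⟨hE, hL, h3⟩
      have hEI : E_ISCO < E := lt_trans hEISCOm hE
      have hLcE := hLc E hEI
      have hLL : L_ISCO < L := lt_trans hLcE.1 hL
      have hL0 : 0 < L := hLIpos.trans hLL
      refine ⟨hE, hL, ?_, (hLmax_iff E L hL0).mpr h3⟩
      by_contra hcon
      push_neg at hcon
      have hmem := h_rmax_mem L hLL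
      have hLcmE : Lc m < Lc E := by
        by_contra hc2
        push_neg at hc2
        have h5 := FmonoLe (Lc E) (Lc m) hLcE.1 hc2
        rw [hLcE.2, hLcm.2] at h5
        have := aux_le_of_sq hm.le h5
        linarith
      have hGrm : G (rmax L) = m ^ 2 / L ^ 2 := hGrmax _ hLL
      have hle : G r_mb ≤ G (rmax L) := by
        rcases eq_or_lt_of_le (le_trans hrge hcon) with h | h
        · rw [h]
        · apply le_of_lt
          apply Gmono r_mb (rmax L) ?_ h hmem.2.le
          rw [h_rmb]; exact hrmbmem.1.le
      rw [hGmb, hGrm] at hle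
      have hLLcm : L ≤ Lc m := by
        by_contra h3'
        push_neg at h3'
        have h5 : (Lc m) ^ 2 < L ^ 2 := aux_sq_lt hLcm0.le h3'
        have h6 : m ^ 2 / L ^ 2 < m ^ 2 / (Lc m) ^ 2 :=
          div_lt_div_of_pos_left (pow_pos hm 2) (pow_pos hLcm0 2) h5
        linarith
      linarith
  -- Part 3
  · intro hr1 hr2
    have hrI : r < r_ISCO := by
      apply lt_trans hr2
      rw [h_rmb]; exact hrmbmem.2
    have hGr : 0 < G r := Gpos r hr1
    have hr0 : 0 < r := hpos r hr.le
    have hχr := hχpos r hr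
    have hχ'r := hχ'pos r hr
    set Lt := m / Real.sqrt (G r) with hLt
    have hrrmax : r = rmax Lt := hrmax_of r hr hrI hGr
    have hLtI : L_ISCO < Lt := by
      rw [hLt, hLISCO]
      exact div_lt_div_of_pos_left hm (Real.sqrt_pos.mpr hGr)
        (Real.sqrt_lt_sqrt hGr.le (h_ISCO_max r hr.le (ne_of_lt hrI)))
    have hLt2 : Lt ^ 2 = m ^ 2 / G r := by
      rw [hLt, div_pow, Real.sq_sqrt hGr.le]
    have hLtpos : 0 < Lt := hLIpos.trans hLtI
    have hnum : 0 < 2 * χ r - r * deriv χ r := by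
      have h1 : 0 < r ^ 3 * deriv χ r := mul_pos (pow_pos hr0 3) hχ'r
      have h2 := hGr
      rw [hG] at h2
      rcases div_pos_iff.mp h2 with ⟨h3, _⟩ | ⟨_, h3⟩
      · exact h3
      · linarith
    have hdpos : 0 < χ r - r * deriv χ r / 2 := by linarith
    set Emin := m * χ r / Real.sqrt (χ r - r * deriv χ r / 2) with hEmin
    have hEminpos : 0 < Emin := by
      rw [hEmin]
      exact div_pos (mul_pos hm hχr) (Real.sqrt_pos.mpr hdpos)
    have hχrne : χ r ≠ 0 := hχr.ne'
    have hχ'rne : deriv χ r ≠ 0 := hχ'r.ne'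
    have hrne : r ≠ 0 := hr0.ne'
    have hdne : χ r - r * deriv χ r / 2 ≠ 0 := hdpos.ne'
    have hnumne : 2 * χ r - r * deriv χ r ≠ 0 := hnum.ne'
    have hLt2' : Lt ^ 2 = m ^ 2 * (r ^ 3 * deriv χ r) / (2 * χ r - r * deriv χ r) := by
      rw [hLt2, hG, div_div_eq_mul_div]
    have hnumne' : χ r * 2 - r * deriv χ r ≠ 0 := by
      intro h; apply hnumne; linarith
    have hEminsq : Emin ^ 2 = V Lt r := by
      rw [hEmin, hV, hLt2', div_pow, mul_pow, Real.sq_sqrt hdpos.le]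
      field_simp
      ring
    have hEminF : Emin ^ 2 = V Lt (rmax Lt) := by rw [hEminsq, ← hrrmax]
    have hGrLt : G r = m ^ 2 / Lt ^ 2 := by
      rw [hLt2]
      field_simp
    have hmblt : G r < G r_mb := by
      apply Gmono r r_mb hr1.le hr2
      rw [h_rmb]; exact hrmbmem.2.le
    have hLcmLt : Lc m < Lt := by
      rw [hGrLt, hGmb] at hmblt
      by_contra hc
      push_neg at hc
      have h5 : Lt ^ 2 ≤ (Lc m) ^ 2 := aux_sq_le hLtpos.le hc
      have h6 : m ^ 2 / (Lc m) ^ 2 ≤ m ^ 2 / Lt ^ 2 :=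
        div_le_div_of_nonneg_left (by positivity) (pow_pos hLtpos 2) h5
      linarith
    have hEminm : m < Emin := by
      have h1 : m ^ 2 < Emin ^ 2 := by
        rw [hEminF]
        calc m ^ 2 = V (Lc m) (rmax (Lc m)) := hLcm.2.symm
        _ < V Lt (rmax Lt) := Fmono _ _ hLcm.1 hLcmLt
      exact aux_lt_of_sq hEminpos.le h1
    have hEminEISCO : E_ISCO < Emin := by
      have h1 := hF_gt Lt hLtI
      have h2 : E_ISCO ^ 2 < Emin ^ 2 := by rw [hEminF]; exact h1
      exact aux_lt_of_sq hEminpos.le h2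
    rw [hS]
    ext ⟨E, L⟩
    simp only [Set.mem_setOf_eq]
    constructor
    · rintro ⟨hE, hL, h3, h4⟩
      have hEI : E_ISCO < E := lt_trans hEISCOm hE
      have hLcE := hLc E hEI
      have hLL : L_ISCO < L := lt_trans hLcE.1 hL
      have hL0 : 0 < L := hLIpos.trans hLL
      refine ⟨?_, hL, (hLmax_iff E L hL0).mp h4⟩
      have hmem := h_rmax_mem L hLL
      have hGlt : G (rmax L) < G r := Gmono (rmax L) r hmem.1.le h3 hrI.le
      rw [hGrmax L hLL, hGrLt] at hGlt
      have hLtL : Lt < L := by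
        by_contra hc
        push_neg at hc
        have h5 : L ^ 2 ≤ Lt ^ 2 := aux_sq_le hL0.le hc
        have h6 : m ^ 2 / Lt ^ 2 ≤ m ^ 2 / L ^ 2 :=
          div_le_div_of_nonneg_left (by positivity) (pow_pos hL0 2) h5
        linarith
      have h7 : V Lt r < V L r := hVL r hr Lt L hLtpos.le hLtL
      have hE2 : Emin ^ 2 < E ^ 2 := by rw [hEminsq]; linarith
      exact aux_lt_of_sq (by linarith : (0:ℝ) ≤ E) hE2
    · rintro ⟨hE, hL, h3⟩
      have hEm : m < E := lt_trans hEminm hE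
      have hEI : E_ISCO < E := lt_trans hEminEISCO hE
      have hLcE := hLc E hEI
      have hLL : L_ISCO < L := lt_trans hLcE.1 hL
      have hL0 : 0 < L := hLIpos.trans hLL
      refine ⟨hEm, hL, ?_, (hLmax_iff E L hL0).mpr h3⟩
      by_contra hcon
      push_neg at hcon
      have hmem := h_rmax_mem L hLL
      have hGle : G r ≤ G (rmax L) := by
        rcases eq_or_lt_of_le hcon with h | h
        · rw [h]
        · exact (Gmono r (rmax L) hr1.le h hmem.2.le).le
      rw [hGrLt, hGrmax L hLL] at hGle
      have hLLt : L ≤ Lt := by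
        by_contra hc
        push_neg at hc
        have h5 : Lt ^ 2 < L ^ 2 := aux_sq_lt hLtpos.le hc
        have h6 : m ^ 2 / L ^ 2 < m ^ 2 / Lt ^ 2 :=
          div_lt_div_of_pos_left (pow_pos hm 2) (pow_pos hLtpos 2) h5
        linarith
      have hLcELt : Lt < Lc E := by
        by_contra hc
        push_neg at hc
        have h5 := FmonoLe (Lc E) Lt hLcE.1 hc
        rw [hLcE.2, ← hEminF] at h5
        have := aux_le_of_sq hEminpos.le h5
        linarith
      linarith
end

section
/- Let (t, r, θ, φ, p_t, p_r, p_θ, p_φ) be a point of ℝ⁸ with r > 0 and 0 < θ < π, and suppose that at this point F₀ = m²/2, p_t = −E, p_φ = L_z and F₃ = L², where E ≥ m > 0 and L_z ≠ 0. If neither (a) p_θ = 0 and θ = π/2 (motion confined to the equatorial plane, equivalently |L_z| = L), nor (b) V_{m,L}(r) = E² and V_{m,L}'(r) = 0 (a circular trajectory) holds, then the four differentials (total gradients in ℝ⁸) of F₀, F₁, F₂, F₃ at this point are linearly independent. -/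
open Real Filter Set Topology

private lemma line_hasDerivAt (x₀ : Fin 8 → ℝ) (j : Fin 8) (s : ℝ) :
    HasDerivAt (fun t : ℝ => Function.update x₀ j t) (Pi.single j 1) s := by
  have h : (fun t : ℝ => Function.update x₀ j t)
      = fun t => x₀ + (t - x₀ j) • (Pi.single j 1 : Fin 8 → ℝ) := by
    funext t
    funext i
    rcases eq_or_ne i j with h | h
    · subst h; simp
    · simp [Function.update_of_ne h, Pi.single_eq_of_ne h]
  rw [h]
  simpa using (((hasDerivAt_id s).sub_const (x₀ j)).smul_const (Pi.single j 1 : Fin 8 → ℝ)).const_add x₀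

private lemma partial_eq {F : (Fin 8 → ℝ) → ℝ} {x₀ : Fin 8 → ℝ}
    (hF : DifferentiableAt ℝ F x₀) (j : Fin 8) {D : ℝ}
    (h : HasDerivAt (fun s => F (Function.update x₀ j s)) D (x₀ j)) :
    fderiv ℝ F x₀ (Pi.single j 1) = D := by
  have h1 : HasFDerivAt F (fderiv ℝ F x₀) (Function.update x₀ j (x₀ j)) := by
    rw [Function.update_eq_self]; exact hF.hasFDerivAt
  exact (h1.comp_hasDerivAt (x₀ j) (line_hasDerivAt x₀ j (x₀ j))).unique h

private lemma quad_hasDerivAt (a b c x : ℝ) :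
    HasDerivAt (fun s : ℝ => a * s ^ 2 + b * s + c) (2 * a * x + b) x := by
  have h1 := (hasDerivAt_pow 2 x).const_mul a
  have h2 := (hasDerivAt_id x).const_mul b
  have h3 := (h1.add h2).add_const c
  refine h3.congr_deriv ?_
  push_cast
  ring

private lemma invsin2_hasDerivAt (a c x : ℝ) (hx : Real.sin x ≠ 0) :
    HasDerivAt (fun s : ℝ => c + a / Real.sin s ^ 2)
      (-(2 * a * Real.cos x) / Real.sin x ^ 3) x := by
  have h1 : HasDerivAt (fun s : ℝ => Real.sin s ^ 2)
      ((2 : ℕ) * Real.sin x ^ 1 * Real.cos x) x := (Real.hasDerivAt_sin x).pow 2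
  have h2 := ((hasDerivAt_const x a).div h1 (pow_ne_zero 2 hx)).const_add c
  refine h2.congr_deriv ?_
  field_simp
  ring


set_option maxHeartbeats 1000000 in
/-- Lemma on differentials: at a phase-space point
`x₀ = (t, r, θ, φ, p_t, p_r, p_θ, p_φ) ∈ ℝ⁸` with `r > 0`, `0 < θ < π`, lying on the
level set `F₀ = m²/2`, `p_t = −E`, `p_φ = L_z`, `F₃ = L²` with `E ≥ m > 0`, `L_z ≠ 0`,
the differentials of `F₀, F₁, F₂, F₃` are linearly independent unless
(a) `p_θ = 0 ∧ θ = π/2` (equatorial motion) or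
(b) `V_{m,L}(r) = E² ∧ V_{m,L}'(r) = 0` (a circular trajectory). -/
theorem stmt9
    (σ ψ : ℝ → ℝ)
    (hσsmooth : ContDiffOn ℝ (⊤ : ℕ∞) σ (Set.Ioi 0))
    (hψsmooth : ContDiffOn ℝ (⊤ : ℕ∞) ψ (Set.Ioi 0))
    (hσpos : ∀ r, 0 < r → 0 < σ r)
    (χ : ℝ → ℝ) (hχ : ∀ r, χ r = (σ r) ^ 2 * ψ r)
    -- the free-particle Hamiltonian and the conserved quantities, as functions on ℝ⁸
    -- with coordinates x 0 = t, x 1 = r, x 2 = θ, x 3 = φ,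
    --                  x 4 = p_t, x 5 = p_r, x 6 = p_θ, x 7 = p_φ
    (H F₀ F₁ F₂ F₃ : (Fin 8 → ℝ) → ℝ)
    (hH : ∀ x : Fin 8 → ℝ, H x = (1 / 2) *
      (-((2 - σ (x 1) * ψ (x 1)) / σ (x 1)) * (x 4) ^ 2
        + 2 * ((1 - σ (x 1) * ψ (x 1)) / σ (x 1)) * (x 4) * (x 5)
        + ψ (x 1) * (x 5) ^ 2
        + (1 / (x 1) ^ 2) * ((x 6) ^ 2 + (x 7) ^ 2 / (Real.sin (x 2)) ^ 2)))
    (hF₀ : ∀ x, F₀ x = -H x)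
    (hF₁ : ∀ x, F₁ x = -(x 4))
    (hF₂ : ∀ x, F₂ x = x 7)
    (hF₃ : ∀ x, F₃ x = (x 6) ^ 2 + (x 7) ^ 2 / (Real.sin (x 2)) ^ 2)
    -- the point and the values of the conserved quantities
    (x₀ : Fin 8 → ℝ) (m E L_z L : ℝ)
    (hr : 0 < x₀ 1) (hθ0 : 0 < x₀ 2) (hθπ : x₀ 2 < π)
    (hm : 0 < m) (hE : m ≤ E) (hLz : L_z ≠ 0)
    (hval₀ : F₀ x₀ = m ^ 2 / 2)
    (hval₁ : x₀ 4 = -E)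
    (hval₂ : x₀ 7 = L_z)
    (hval₃ : F₃ x₀ = L ^ 2)
    -- exclusion of case (a): motion confined to the equatorial plane
    (hnota : ¬(x₀ 6 = 0 ∧ x₀ 2 = π / 2))
    -- exclusion of case (b): circular trajectories
    (hnotb : ¬(χ (x₀ 1) * (m ^ 2 + L ^ 2 / (x₀ 1) ^ 2) = E ^ 2 ∧
      deriv (fun s => χ s * (m ^ 2 + L ^ 2 / s ^ 2)) (x₀ 1) = 0)) :
    LinearIndependent ℝ
      ![fderiv ℝ F₀ x₀, fderiv ℝ F₁ x₀, fderiv ℝ F₂ x₀, fderiv ℝ F₃ x₀] := by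
  -- basic facts
  have hS : Real.sin (x₀ 2) ≠ 0 := ne_of_gt (Real.sin_pos_of_pos_of_lt_pi hθ0 hθπ)
  have hr0 : x₀ 1 ≠ 0 := ne_of_gt hr
  have hσ0 : σ (x₀ 1) ≠ 0 := ne_of_gt (hσpos _ hr)
  have hp0 : x₀ 7 ≠ 0 := by rw [hval₂]; exact hLz
  have hP : (x₀ 6) ^ 2 + (x₀ 7) ^ 2 / Real.sin (x₀ 2) ^ 2 = L ^ 2 := by
    rw [← hF₃ x₀]; exact hval₃
  have hHx : H x₀ = -(m ^ 2) / 2 := by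
    have h := hF₀ x₀; rw [hval₀] at h; linarith
  have hσd : DifferentiableAt ℝ σ (x₀ 1) :=
    (hσsmooth.contDiffAt (isOpen_Ioi.mem_nhds hr)).differentiableAt (by simp)
  have hψd : DifferentiableAt ℝ ψ (x₀ 1) :=
    (hψsmooth.contDiffAt (isOpen_Ioi.mem_nhds hr)).differentiableAt (by simp)
  have hline : ∀ (j : Fin 8) (s : ℝ) (k : Fin 8), k ≠ j → Function.update x₀ j s k = x₀ k :=
    fun j s k hk => Function.update_of_ne hk s x₀
  have hpr : ∀ i : Fin 8, DifferentiableAt ℝ (fun x : Fin 8 → ℝ => x i) x₀ :=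
    fun i => differentiableAt_apply (𝕜 := ℝ) i x₀
  -- differentiability of H at x₀
  have hHdiff : DifferentiableAt ℝ H x₀ := by
    rw [show H = fun x : Fin 8 → ℝ => (1 / 2 : ℝ) *
      (-((2 - σ (x 1) * ψ (x 1)) / σ (x 1)) * (x 4) ^ 2
        + 2 * ((1 - σ (x 1) * ψ (x 1)) / σ (x 1)) * (x 4) * (x 5)
        + ψ (x 1) * (x 5) ^ 2
        + (1 / (x 1) ^ 2) * ((x 6) ^ 2 + (x 7) ^ 2 / (Real.sin (x 2)) ^ 2)) from funext hH]
    have hσc : DifferentiableAt ℝ (fun x : Fin 8 → ℝ => σ (x 1)) x₀ := hσd.comp x₀ (hpr 1)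
    have hψc : DifferentiableAt ℝ (fun x : Fin 8 → ℝ => ψ (x 1)) x₀ := hψd.comp x₀ (hpr 1)
    have hsc : DifferentiableAt ℝ (fun x : Fin 8 → ℝ => Real.sin (x 2)) x₀ :=
      (Real.differentiable_sin _).comp x₀ (hpr 2)
    have hσi : DifferentiableAt ℝ (fun x : Fin 8 → ℝ => (σ (x 1))⁻¹) x₀ := hσc.inv hσ0
    have hri : DifferentiableAt ℝ (fun x : Fin 8 → ℝ => ((x 1) ^ 2)⁻¹) x₀ :=
      ((hpr 1).pow 2).inv (pow_ne_zero 2 hr0)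
    have hsi : DifferentiableAt ℝ (fun x : Fin 8 → ℝ => ((Real.sin (x 2)) ^ 2)⁻¹) x₀ :=
      (hsc.pow 2).inv (pow_ne_zero 2 hS)
    simp only [div_eq_mul_inv]
    exact ((((((hσc.mul hψc).const_sub 2).mul hσi).neg.mul ((hpr 4).pow 2)).add
      ((((((hσc.mul hψc).const_sub 1).mul hσi).const_mul 2).mul (hpr 4)).mul (hpr 5))).add
      (hψc.mul ((hpr 5).pow 2))).add
      (((differentiableAt_const 1).mul hri).mul
        (((hpr 6).pow 2).add (((hpr 7).pow 2).mul hsi))) |>.const_mul _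
  have hF₃diff : DifferentiableAt ℝ F₃ x₀ := by
    rw [show F₃ = fun x : Fin 8 → ℝ =>
      (x 6) ^ 2 + (x 7) ^ 2 / (Real.sin (x 2)) ^ 2 from funext hF₃]
    have hsc : DifferentiableAt ℝ (fun x : Fin 8 → ℝ => Real.sin (x 2)) x₀ :=
      (Real.differentiable_sin _).comp x₀ (hpr 2)
    have hsi : DifferentiableAt ℝ (fun x : Fin 8 → ℝ => ((Real.sin (x 2)) ^ 2)⁻¹) x₀ :=
      (hsc.pow 2).inv (pow_ne_zero 2 hS)
    simp only [div_eq_mul_inv]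
    exact ((hpr 6).pow 2).add (((hpr 7).pow 2).mul hsi)
  have hF₁diff : DifferentiableAt ℝ F₁ x₀ := by
    rw [show F₁ = fun x : Fin 8 → ℝ => -(x 4) from funext hF₁]
    exact (hpr 4).neg
  have hF₂diff : DifferentiableAt ℝ F₂ x₀ := by
    rw [show F₂ = fun x : Fin 8 → ℝ => x 7 from funext hF₂]
    exact hpr 7
  have hF₀d : fderiv ℝ F₀ x₀ = -fderiv ℝ H x₀ := by
    rw [show F₀ = fun x => -H x from funext hF₀]
    exact fderiv_neg
  -- partial derivatives of H
  have hH4 : fderiv ℝ H x₀ (Pi.single 4 1) =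
      -((2 - σ (x₀ 1) * ψ (x₀ 1)) / σ (x₀ 1)) * x₀ 4
        + (1 - σ (x₀ 1) * ψ (x₀ 1)) / σ (x₀ 1) * x₀ 5 := by
    apply partial_eq hHdiff 4
    have heq : (fun s => H (Function.update x₀ 4 s)) = fun s =>
        ((1:ℝ)/2 * -((2 - σ (x₀ 1) * ψ (x₀ 1)) / σ (x₀ 1))) * s ^ 2
          + ((1 - σ (x₀ 1) * ψ (x₀ 1)) / σ (x₀ 1) * x₀ 5) * s
          + (1/2 * (ψ (x₀ 1) * (x₀ 5) ^ 2
              + 1 / (x₀ 1) ^ 2 * ((x₀ 6) ^ 2 + (x₀ 7) ^ 2 / Real.sin (x₀ 2) ^ 2))) := by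
      funext s
      rw [hH, hline 4 s 1 (by decide), hline 4 s 2 (by decide), hline 4 s 5 (by decide),
        hline 4 s 6 (by decide), hline 4 s 7 (by decide), Function.update_self]
      ring
    rw [heq]
    convert quad_hasDerivAt _ _ _ (x₀ 4) using 1
    ring
  have hH5 : fderiv ℝ H x₀ (Pi.single 5 1) =
      (1 - σ (x₀ 1) * ψ (x₀ 1)) / σ (x₀ 1) * x₀ 4 + ψ (x₀ 1) * x₀ 5 := by
    apply partial_eq hHdiff 5
    have heq : (fun s => H (Function.update x₀ 5 s)) = fun s =>
        ((1:ℝ)/2 * ψ (x₀ 1)) * s ^ 2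
          + ((1 - σ (x₀ 1) * ψ (x₀ 1)) / σ (x₀ 1) * x₀ 4) * s
          + (1/2 * (-((2 - σ (x₀ 1) * ψ (x₀ 1)) / σ (x₀ 1)) * (x₀ 4) ^ 2
              + 1 / (x₀ 1) ^ 2 * ((x₀ 6) ^ 2 + (x₀ 7) ^ 2 / Real.sin (x₀ 2) ^ 2))) := by
      funext s
      rw [hH, hline 5 s 1 (by decide), hline 5 s 2 (by decide), hline 5 s 4 (by decide),
        hline 5 s 6 (by decide), hline 5 s 7 (by decide), Function.update_self]
      ring
    rw [heq]
    convert quad_hasDerivAt _ _ _ (x₀ 5) using 1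
    ring
  have hH6 : fderiv ℝ H x₀ (Pi.single 6 1) = x₀ 6 / (x₀ 1) ^ 2 := by
    apply partial_eq hHdiff 6
    have heq : (fun s => H (Function.update x₀ 6 s)) = fun s =>
        ((1:ℝ)/2 * (1 / (x₀ 1) ^ 2)) * s ^ 2 + (0:ℝ) * s
          + (1/2 * (-((2 - σ (x₀ 1) * ψ (x₀ 1)) / σ (x₀ 1)) * (x₀ 4) ^ 2
              + 2 * ((1 - σ (x₀ 1) * ψ (x₀ 1)) / σ (x₀ 1)) * x₀ 4 * x₀ 5
              + ψ (x₀ 1) * (x₀ 5) ^ 2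
              + 1 / (x₀ 1) ^ 2 * ((x₀ 7) ^ 2 / Real.sin (x₀ 2) ^ 2))) := by
      funext s
      rw [hH, hline 6 s 1 (by decide), hline 6 s 2 (by decide), hline 6 s 4 (by decide),
        hline 6 s 5 (by decide), hline 6 s 7 (by decide), Function.update_self]
      ring
    rw [heq]
    convert quad_hasDerivAt _ _ _ (x₀ 6) using 1
    ring
  have hH7 : fderiv ℝ H x₀ (Pi.single 7 1) =
      x₀ 7 / ((x₀ 1) ^ 2 * Real.sin (x₀ 2) ^ 2) := by
    apply partial_eq hHdiff 7
    have heq : (fun s => H (Function.update x₀ 7 s)) = fun s =>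
        ((1:ℝ)/2 * (1 / (x₀ 1) ^ 2 / Real.sin (x₀ 2) ^ 2)) * s ^ 2 + (0:ℝ) * s
          + (1/2 * (-((2 - σ (x₀ 1) * ψ (x₀ 1)) / σ (x₀ 1)) * (x₀ 4) ^ 2
              + 2 * ((1 - σ (x₀ 1) * ψ (x₀ 1)) / σ (x₀ 1)) * x₀ 4 * x₀ 5
              + ψ (x₀ 1) * (x₀ 5) ^ 2
              + 1 / (x₀ 1) ^ 2 * ((x₀ 6) ^ 2))) := by
      funext s
      rw [hH, hline 7 s 1 (by decide), hline 7 s 2 (by decide), hline 7 s 4 (by decide),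
        hline 7 s 5 (by decide), hline 7 s 6 (by decide), Function.update_self]
      ring
    rw [heq]
    convert quad_hasDerivAt _ _ _ (x₀ 7) using 1
    field_simp
    ring
  have hH2 : fderiv ℝ H x₀ (Pi.single 2 1) =
      -((x₀ 7) ^ 2 * Real.cos (x₀ 2)) / ((x₀ 1) ^ 2 * Real.sin (x₀ 2) ^ 3) := by
    apply partial_eq hHdiff 2
    have heq : (fun s => H (Function.update x₀ 2 s)) = fun s =>
        (1/2 * (-((2 - σ (x₀ 1) * ψ (x₀ 1)) / σ (x₀ 1)) * (x₀ 4) ^ 2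
            + 2 * ((1 - σ (x₀ 1) * ψ (x₀ 1)) / σ (x₀ 1)) * x₀ 4 * x₀ 5
            + ψ (x₀ 1) * (x₀ 5) ^ 2
            + 1 / (x₀ 1) ^ 2 * ((x₀ 6) ^ 2)))
          + ((1:ℝ)/2 * (1 / (x₀ 1) ^ 2) * (x₀ 7) ^ 2) / Real.sin s ^ 2 := by
      funext s
      rw [hH, hline 2 s 1 (by decide), hline 2 s 4 (by decide), hline 2 s 5 (by decide),
        hline 2 s 6 (by decide), hline 2 s 7 (by decide), Function.update_self]
      ring
    rw [heq]
    convert invsin2_hasDerivAt _ _ (x₀ 2) hS using 1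
    field_simp
  -- partial derivatives of F₃
  have hF₃z : ∀ j : Fin 8, j ≠ 2 → j ≠ 6 → j ≠ 7 →
      fderiv ℝ F₃ x₀ (Pi.single j 1) = 0 := by
    intro j h2 h6 h7
    apply partial_eq hF₃diff j
    have heq : (fun s => F₃ (Function.update x₀ j s)) = fun _ =>
        (x₀ 6) ^ 2 + (x₀ 7) ^ 2 / Real.sin (x₀ 2) ^ 2 := by
      funext s
      rw [hF₃, hline j s 2 (Ne.symm h2), hline j s 6 (Ne.symm h6), hline j s 7 (Ne.symm h7)]
    rw [heq]
    exact hasDerivAt_const _ _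
  have hF₃2 : fderiv ℝ F₃ x₀ (Pi.single 2 1) =
      -(2 * (x₀ 7) ^ 2 * Real.cos (x₀ 2)) / Real.sin (x₀ 2) ^ 3 := by
    apply partial_eq hF₃diff 2
    have heq : (fun s => F₃ (Function.update x₀ 2 s)) = fun s =>
        (x₀ 6) ^ 2 + (x₀ 7) ^ 2 / Real.sin s ^ 2 := by
      funext s
      rw [hF₃, hline 2 s 6 (by decide), hline 2 s 7 (by decide), Function.update_self]
    rw [heq]
    exact invsin2_hasDerivAt _ _ (x₀ 2) hS
  have hF₃6 : fderiv ℝ F₃ x₀ (Pi.single 6 1) = 2 * x₀ 6 := by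
    apply partial_eq hF₃diff 6
    have heq : (fun s => F₃ (Function.update x₀ 6 s)) = fun s =>
        (1:ℝ) * s ^ 2 + (0:ℝ) * s + (x₀ 7) ^ 2 / Real.sin (x₀ 2) ^ 2 := by
      funext s
      rw [hF₃, hline 6 s 2 (by decide), hline 6 s 7 (by decide), Function.update_self]
      ring
    rw [heq]
    convert quad_hasDerivAt _ _ _ (x₀ 6) using 1
    ring
  have hF₃7 : fderiv ℝ F₃ x₀ (Pi.single 7 1) = 2 * x₀ 7 / Real.sin (x₀ 2) ^ 2 := by
    apply partial_eq hF₃diff 7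
    have heq : (fun s => F₃ (Function.update x₀ 7 s)) = fun s =>
        ((1:ℝ) / Real.sin (x₀ 2) ^ 2) * s ^ 2 + (0:ℝ) * s + (x₀ 6) ^ 2 := by
      funext s
      rw [hF₃, hline 7 s 2 (by decide), hline 7 s 6 (by decide), Function.update_self]
      ring
    rw [heq]
    convert quad_hasDerivAt _ _ _ (x₀ 7) using 1
    ring
  -- partial derivatives of F₁ and F₂
  have hF₁4 : fderiv ℝ F₁ x₀ (Pi.single 4 1) = -1 := by
    apply partial_eq hF₁diff 4
    have heq : (fun s => F₁ (Function.update x₀ 4 s)) = fun s => -s := by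
      funext s; rw [hF₁, Function.update_self]
    rw [heq]
    exact (hasDerivAt_id (x₀ 4)).neg
  have hF₁z : ∀ j : Fin 8, j ≠ 4 → fderiv ℝ F₁ x₀ (Pi.single j 1) = 0 := by
    intro j h4
    apply partial_eq hF₁diff j
    have heq : (fun s => F₁ (Function.update x₀ j s)) = fun _ => -(x₀ 4) := by
      funext s; rw [hF₁, hline j s 4 (Ne.symm h4)]
    rw [heq]
    exact hasDerivAt_const _ _
  have hF₂7 : fderiv ℝ F₂ x₀ (Pi.single 7 1) = 1 := by
    apply partial_eq hF₂diff 7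
    have heq : (fun s => F₂ (Function.update x₀ 7 s)) = fun s => s := by
      funext s; rw [hF₂, Function.update_self]
    rw [heq]
    exact hasDerivAt_id (x₀ 7)
  have hF₂z : ∀ j : Fin 8, j ≠ 7 → fderiv ℝ F₂ x₀ (Pi.single j 1) = 0 := by
    intro j h7
    apply partial_eq hF₂diff j
    have heq : (fun s => F₂ (Function.update x₀ j s)) = fun _ => x₀ 7 := by
      funext s; rw [hF₂, hline j s 7 (Ne.symm h7)]
    rw [heq]
    exact hasDerivAt_const _ _
  -- linear independence
  rw [Fintype.linearIndependent_iff]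
  intro c hc
  have hev : ∀ j : Fin 8,
      c 0 * fderiv ℝ F₀ x₀ (Pi.single j 1) + c 1 * fderiv ℝ F₁ x₀ (Pi.single j 1)
        + c 2 * fderiv ℝ F₂ x₀ (Pi.single j 1) + c 3 * fderiv ℝ F₃ x₀ (Pi.single j 1) = 0 := by
    intro j
    have h := congrArg (fun (φ : (Fin 8 → ℝ) →L[ℝ] ℝ) => φ (Pi.single j 1)) hc
    simpa [Fin.sum_univ_four, ContinuousLinearMap.add_apply, ContinuousLinearMap.smul_apply,
      smul_eq_mul, add_assoc] using h
  have E1 : c 0 * -(fderiv ℝ H x₀ (Pi.single 1 1)) = 0 := by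
    have h := hev 1
    rw [hF₀d, ContinuousLinearMap.neg_apply, hF₁z 1 (by decide), hF₂z 1 (by decide),
      hF₃z 1 (by decide) (by decide) (by decide)] at h
    linarith
  have E5 : c 0 * -((1 - σ (x₀ 1) * ψ (x₀ 1)) / σ (x₀ 1) * x₀ 4 + ψ (x₀ 1) * x₀ 5) = 0 := by
    have h := hev 5
    rw [hF₀d, ContinuousLinearMap.neg_apply, hH5, hF₁z 5 (by decide), hF₂z 5 (by decide),
      hF₃z 5 (by decide) (by decide) (by decide)] at h
    linarith
  have E4 : c 0 * -(-((2 - σ (x₀ 1) * ψ (x₀ 1)) / σ (x₀ 1)) * x₀ 4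
      + (1 - σ (x₀ 1) * ψ (x₀ 1)) / σ (x₀ 1) * x₀ 5) + c 1 * -1 = 0 := by
    have h := hev 4
    rw [hF₀d, ContinuousLinearMap.neg_apply, hH4, hF₁4, hF₂z 4 (by decide),
      hF₃z 4 (by decide) (by decide) (by decide)] at h
    linarith
  have E6 : c 0 * -(x₀ 6 / (x₀ 1) ^ 2) + c 3 * (2 * x₀ 6) = 0 := by
    have h := hev 6
    rw [hF₀d, ContinuousLinearMap.neg_apply, hH6, hF₁z 6 (by decide), hF₂z 6 (by decide),
      hF₃6] at h
    linarith
  have E2 : c 0 * -(-((x₀ 7) ^ 2 * Real.cos (x₀ 2)) / ((x₀ 1) ^ 2 * Real.sin (x₀ 2) ^ 3))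
      + c 3 * (-(2 * (x₀ 7) ^ 2 * Real.cos (x₀ 2)) / Real.sin (x₀ 2) ^ 3) = 0 := by
    have h := hev 2
    rw [hF₀d, ContinuousLinearMap.neg_apply, hH2, hF₁z 2 (by decide), hF₂z 2 (by decide),
      hF₃2] at h
    linarith
  have E7 : c 0 * -(x₀ 7 / ((x₀ 1) ^ 2 * Real.sin (x₀ 2) ^ 2)) + c 2 * 1
      + c 3 * (2 * x₀ 7 / Real.sin (x₀ 2) ^ 2) = 0 := by
    have h := hev 7
    rw [hF₀d, ContinuousLinearMap.neg_apply, hH7, hF₁z 7 (by decide), hF₂7, hF₃7] at h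
    linarith
  -- c 0 = 0, using exclusion of circular trajectories
  have hc0 : c 0 = 0 := by
    by_contra hc0
    have hA0 : (1 - σ (x₀ 1) * ψ (x₀ 1)) / σ (x₀ 1) * x₀ 4 + ψ (x₀ 1) * x₀ 5 = 0 := by
      rcases mul_eq_zero.mp E5 with h | h
      · exact absurd h hc0
      · linarith
    have hD10 : fderiv ℝ H x₀ (Pi.single 1 1) = 0 := by
      rcases mul_eq_zero.mp E1 with h | h
      · exact absurd h hc0
      · linarith
    have hgd : HasDerivAt (fun s => H (Function.update x₀ 1 s)) 0 (x₀ 1) := by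
      have h1 : HasFDerivAt H (fderiv ℝ H x₀) (Function.update x₀ 1 (x₀ 1)) := by
        rw [Function.update_eq_self]; exact hHdiff.hasFDerivAt
      have h2 := h1.comp_hasDerivAt (x₀ 1) (line_hasDerivAt x₀ 1 (x₀ 1))
      rw [hD10] at h2
      exact h2
    have hfV : ∀ s ∈ Set.Ioi (0:ℝ), χ s * (m ^ 2 + L ^ 2 / s ^ 2)
        = χ s * (m ^ 2 + 2 * H (Function.update x₀ 1 s))
          - (σ s) ^ 2 * ((1 - σ s * ψ s) / σ s * x₀ 4 + ψ s * x₀ 5) ^ 2 + E ^ 2 := by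
      intro s hs
      have hs0 : s ≠ 0 := ne_of_gt hs
      have hσs : σ s ≠ 0 := ne_of_gt (hσpos s hs)
      rw [hH (Function.update x₀ 1 s), Function.update_self, hline 1 s 2 (by decide),
        hline 1 s 4 (by decide), hline 1 s 5 (by decide), hline 1 s 6 (by decide),
        hline 1 s 7 (by decide), hχ s, hval₁, ← hP]
      field_simp
      ring
    have hVE : χ (x₀ 1) * (m ^ 2 + L ^ 2 / (x₀ 1) ^ 2) = E ^ 2 := by
      have h1 := hfV (x₀ 1) (Set.mem_Ioi.mpr hr)
      rw [Function.update_eq_self, hHx, hA0] at h1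
      rw [h1]; ring
    have hV' : deriv (fun s => χ s * (m ^ 2 + L ^ 2 / s ^ 2)) (x₀ 1) = 0 := by
      have heq : (fun s => χ s * (m ^ 2 + L ^ 2 / s ^ 2)) =ᶠ[nhds (x₀ 1)]
          (fun s => χ s * (m ^ 2 + 2 * H (Function.update x₀ 1 s))
            - (σ s) ^ 2 * ((1 - σ s * ψ s) / σ s * x₀ 4 + ψ s * x₀ 5) ^ 2 + E ^ 2) := by
        filter_upwards [isOpen_Ioi.mem_nhds hr] with s hs
        exact hfV s hs
      rw [heq.deriv_eq]
      have hχd : HasDerivAt χ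
          (((2:ℕ) * σ (x₀ 1) ^ 1 * deriv σ (x₀ 1)) * ψ (x₀ 1)
            + σ (x₀ 1) ^ 2 * deriv ψ (x₀ 1)) (x₀ 1) := by
        rw [show χ = fun s => σ s ^ 2 * ψ s from funext hχ]
        exact (hσd.hasDerivAt.pow 2).mul hψd.hasDerivAt
      have hAd := ((((hσd.hasDerivAt.mul hψd.hasDerivAt).const_sub 1).div
        hσd.hasDerivAt hσ0).mul_const (x₀ 4)).add (hψd.hasDerivAt.mul_const (x₀ 5))
      have hfd := ((hχd.mul ((hgd.const_mul 2).const_add (m ^ 2))).sub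
        ((hσd.hasDerivAt.pow 2).mul (hAd.pow 2))).add_const (E ^ 2)
      have hfd' : HasDerivAt (fun s => χ s * (m ^ 2 + 2 * H (Function.update x₀ 1 s))
        - (σ s) ^ 2 * ((1 - σ s * ψ s) / σ s * x₀ 4 + ψ s * x₀ 5) ^ 2 + E ^ 2) _ (x₀ 1) := hfd
      rw [hfd'.deriv]
      simp only [Function.update_eq_self, hHx, Pi.add_apply, Pi.mul_apply, Pi.pow_apply,
        Pi.div_apply, hA0]
      ring
    exact hnotb ⟨hVE, hV'⟩
  -- remaining coefficients
  have hc1 : c 1 = 0 := by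
    rw [hc0] at E4; linarith
  have hc3 : c 3 = 0 := by
    rcases eq_or_ne (Real.cos (x₀ 2)) 0 with hC | hC
    · have hθ : x₀ 2 = π / 2 := by
        apply Real.injOn_cos ⟨le_of_lt hθ0, le_of_lt hθπ⟩
          ⟨by positivity, by linarith [Real.pi_pos]⟩
        rw [Real.cos_pi_div_two, hC]
      have hq : x₀ 6 ≠ 0 := fun h => hnota ⟨h, hθ⟩
      rw [hc0] at E6
      rcases mul_eq_zero.mp (by linarith : c 3 * (2 * x₀ 6) = 0) with h | h
      · exact h
      · exact absurd h (by positivity)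
    · rw [hc0] at E2
      rcases mul_eq_zero.mp (by linarith :
          c 3 * (-(2 * (x₀ 7) ^ 2 * Real.cos (x₀ 2)) / Real.sin (x₀ 2) ^ 3) = 0) with h | h
      · exact h
      · exfalso
        apply div_ne_zero _ (pow_ne_zero 3 hS) h
        exact neg_ne_zero.mpr (mul_ne_zero (mul_ne_zero two_ne_zero (pow_ne_zero 2 hp0)) hC)
  have hc2 : c 2 = 0 := by
    rw [hc0, hc3] at E7; linarith
  intro i
  fin_cases i
  · exact hc0
  · exact hc1
  · exact hc2
  · exact hc3
end

section
/- Let 0 ≤ λ₁ < λ₂, and suppose ε² > U_{λ₂}(r). Setting s₁ := √(ε² − U_{λ₁}(r)) and s₂ := √(ε² − U_{λ₂}(r)), one has the integral identity ∫_{λ₁}^{λ₂} λ³/√(ε² − U_λ(r)) dλ = (1/3)·(λ₂² − λ₁²)/(s₁ + s₂)² · [λ₁²(s₁ + 2s₂) + λ₂²(s₂ + 2s₁)]. -/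
open Real Filter Set Topology MeasureTheory intervalIntegral

/-!
Writing `ε² − U_λ(r) = a − b λ²` with `a = ε² − χ(r)` and `b = χ(r)/r² > 0`, the integrand
`λ³/√(a − b λ²)` has the elementary antiderivative `−√(a − b λ²)(2a + b λ²)/(3b²)`.
Evaluating it at the endpoints and eliminating `a` and `b` through
`sᵢ² = a − b λᵢ²`, i.e. `b (λ₂² − λ₁²) = s₁² − s₂²`, gives the symmetric closed form.
-/

theorem hasDerivAt_sqrt_sub_mul_sq_mul {a b x : ℝ} (hb : b ≠ 0) (hx : 0 < a - b * x ^ 2) :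
    HasDerivAt (fun y => -(√(a - b * y ^ 2) * (2 * a + b * y ^ 2)) / (3 * b ^ 2))
      (x ^ 3 / √(a - b * x ^ 2)) x := by
  have hq : HasDerivAt (fun y => a - b * y ^ 2) (-(b * (2 * x))) x := by
    simpa using ((hasDerivAt_pow 2 x).const_mul b).const_sub a
  have hp : HasDerivAt (fun y => 2 * a + b * y ^ 2) (b * (2 * x)) x := by
    simpa using ((hasDerivAt_pow 2 x).const_mul b).const_add (2 * a)
  refine (((hq.sqrt hx.ne').mul hp).neg.div_const _).congr_deriv ?_
  have hs2 : √(a - b * x ^ 2) ^ 2 = a - b * x ^ 2 := sq_sqrt hx.le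
  field_simp
  linear_combination (-2 * x) * hs2

theorem integral_pow_three_div_sqrt_sub_mul_sq {a b l₁ l₂ : ℝ} (hb : b ≠ 0)
    (hpos : ∀ x ∈ uIcc l₁ l₂, 0 < a - b * x ^ 2) :
    ∫ x in l₁..l₂, x ^ 3 / √(a - b * x ^ 2) =
      (√(a - b * l₁ ^ 2) * (2 * a + b * l₁ ^ 2) - √(a - b * l₂ ^ 2) * (2 * a + b * l₂ ^ 2)) /
        (3 * b ^ 2) := by
  have hcont : ContinuousOn (fun x => x ^ 3 / √(a - b * x ^ 2)) (uIcc l₁ l₂) :=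
    (continuous_pow 3).continuousOn.div (by fun_prop) fun x hx => (sqrt_pos.mpr (hpos x hx)).ne'
  rw [integral_eq_sub_of_hasDerivAt
    (fun x hx => hasDerivAt_sqrt_sub_mul_sq_mul hb (hpos x hx)) hcont.intervalIntegrable]
  ring

theorem integral_pow_three_div_sqrt_sub_mul_sq_eq {a b l₁ l₂ : ℝ} (hb : b ≠ 0)
    (hpos : ∀ x ∈ uIcc l₁ l₂, 0 < a - b * x ^ 2) :
    ∫ x in l₁..l₂, x ^ 3 / √(a - b * x ^ 2) =
      1 / 3 * (l₂ ^ 2 - l₁ ^ 2) / (√(a - b * l₁ ^ 2) + √(a - b * l₂ ^ 2)) ^ 2 *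
        (l₁ ^ 2 * (√(a - b * l₁ ^ 2) + 2 * √(a - b * l₂ ^ 2)) +
          l₂ ^ 2 * (√(a - b * l₂ ^ 2) + 2 * √(a - b * l₁ ^ 2))) := by
  have h₁ := hpos l₁ left_mem_uIcc
  have h₂ := hpos l₂ right_mem_uIcc
  have hs : √(a - b * l₁ ^ 2) + √(a - b * l₂ ^ 2) ≠ 0 := by positivity
  rw [integral_pow_three_div_sqrt_sub_mul_sq hb hpos]
  set s₁ := √(a - b * l₁ ^ 2)
  set s₂ := √(a - b * l₂ ^ 2)
  have hs₁ : s₁ ^ 2 = a - b * l₁ ^ 2 := sq_sqrt h₁.le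
  have hs₂ : s₂ ^ 2 = a - b * l₂ ^ 2 := sq_sqrt h₂.le
  have hrel : s₁ ^ 2 - s₂ ^ 2 = b * (l₂ ^ 2 - l₁ ^ 2) := by rw [hs₁, hs₂]; ring
  calc (s₁ * (2 * a + b * l₁ ^ 2) - s₂ * (2 * a + b * l₂ ^ 2)) / (3 * b ^ 2)
      = (2 * s₁ ^ 3 + 3 * b * l₁ ^ 2 * s₁ - 2 * s₂ ^ 3 - 3 * b * l₂ ^ 2 * s₂) / (3 * b ^ 2) := by
        linear_combination (-2 * s₁ / (3 * b ^ 2)) * hs₁ + (2 * s₂ / (3 * b ^ 2)) * hs₂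
    _ = _ := by
        field_simp
        linear_combination (3 * s₂ * (s₁ + s₂) ^ 2 + (s₁ ^ 2 - s₂ ^ 2) * (s₂ + 2 * s₁)
          + b * (l₁ ^ 2 * (s₁ + 2 * s₂) + l₂ ^ 2 * (s₂ + 2 * s₁))) * hrel

/-- integral identity
`∫_{λ₁}^{λ₂} λ³/√(ε² − U_λ(r)) dλ
  = (1/3)·(λ₂² − λ₁²)/(s₁ + s₂)² · (λ₁²(s₁ + 2s₂) + λ₂²(s₂ + 2s₁))`, where
`U_λ(r) = χ(r)(1 + λ²/r²)` and `sᵢ = √(ε² − U_{λᵢ}(r))`. -/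
theorem stmt11
    (r χr ε lam₁ lam₂ : ℝ)
    (hr : 0 < r) (hχ : 0 < χr)
    (h1 : 0 ≤ lam₁) (h12 : lam₁ < lam₂)
    (hε : χr * (1 + lam₂ ^ 2 / r ^ 2) < ε ^ 2) :
    ∫ l in lam₁..lam₂, l ^ 3 / Real.sqrt (ε ^ 2 - χr * (1 + l ^ 2 / r ^ 2)) =
      (1 / 3) * (lam₂ ^ 2 - lam₁ ^ 2) /
        (Real.sqrt (ε ^ 2 - χr * (1 + lam₁ ^ 2 / r ^ 2)) +
          Real.sqrt (ε ^ 2 - χr * (1 + lam₂ ^ 2 / r ^ 2))) ^ 2 *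
        (lam₁ ^ 2 * (Real.sqrt (ε ^ 2 - χr * (1 + lam₁ ^ 2 / r ^ 2)) +
            2 * Real.sqrt (ε ^ 2 - χr * (1 + lam₂ ^ 2 / r ^ 2))) +
         lam₂ ^ 2 * (Real.sqrt (ε ^ 2 - χr * (1 + lam₂ ^ 2 / r ^ 2)) +
            2 * Real.sqrt (ε ^ 2 - χr * (1 + lam₁ ^ 2 / r ^ 2)))) := by
  have hU : ∀ l, ε ^ 2 - χr * (1 + l ^ 2 / r ^ 2) = (ε ^ 2 - χr) - χr / r ^ 2 * l ^ 2 :=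
    fun l => by ring
  simp only [hU]
  refine integral_pow_three_div_sqrt_sub_mul_sq_eq (by positivity) fun l hl => ?_
  rw [uIcc_of_le h12.le] at hl
  have hl2 : l ^ 2 ≤ lam₂ ^ 2 := pow_le_pow_left₀ (h1.trans hl.1) hl.2 2
  have hUl : χr * (1 + l ^ 2 / r ^ 2) ≤ χr * (1 + lam₂ ^ 2 / r ^ 2) := by gcongr
  linarith [hU l]
end

section
/- Let g : [1,∞) → ℝ be continuous and bounded. Then the low-temperature (z → ∞) limit lim_{z→∞} z^{−1/2} · ( ∫₁^∞ g(ε)·e^{−z(ε−1)} dε ) / ( ∫₁^∞ ε·√(ε² − 1)·e^{−z(ε−1)} dε ) = √(2/π) · g(1) holds. -/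
open Real Filter Set Topology MeasureTheory


lemma stmt13_sub (f : ℝ → ℝ) {z : ℝ} (hz : 0 < z) :
    (∫ ε in Set.Ici (1 : ℝ), f ε * Real.exp (-z * (ε - 1))) =
      z⁻¹ * ∫ t in Set.Ioi (0 : ℝ), f (1 + t / z) * Real.exp (-t) := by
  rw [MeasureTheory.integral_Ici_eq_integral_Ioi]
  have h1 : (∫ ε in Set.Ioi (1 : ℝ), f ε * Real.exp (-z * (ε - 1))) =
      ∫ u in Set.Ioi (0 : ℝ), f (1 + u) * Real.exp (-z * u) := by
    have := (measurePreserving_add_right (volume : Measure ℝ) 1).setIntegral_preimage_emb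
      (MeasurableEquiv.addRight (1 : ℝ)).measurableEmbedding
      (fun ε => f ε * Real.exp (-z * (ε - 1))) (Set.Ioi 1)
    simp only [preimage_add_const_Ioi, sub_self] at this
    rw [← this]
    refine setIntegral_congr_fun measurableSet_Ioi (fun u hu => ?_)
    show f (u + 1) * Real.exp (-z * (u + 1 - 1)) = _
    ring_nf
  rw [h1]
  have h2 : (∫ u in Set.Ioi (0 : ℝ), f (1 + u) * Real.exp (-z * u)) =
      ∫ u in Set.Ioi (0 : ℝ), (fun x => f (1 + x / z) * Real.exp (-x)) (z * u) := by
    refine setIntegral_congr_fun measurableSet_Ioi (fun u hu => ?_)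
    simp only
    rw [mul_div_cancel_left₀ _ hz.ne']
    ring_nf
  rw [h2, MeasureTheory.integral_comp_mul_left_Ioi (fun x => f (1 + x / z) * Real.exp (-x)) 0 hz,
    mul_zero, smul_eq_mul]

lemma stmt13_A (g : ℝ → ℝ) (hcont : ContinuousOn g (Set.Ici 1))
    (hbdd : ∃ C : ℝ, ∀ ε : ℝ, 1 ≤ ε → |g ε| ≤ C) :
    Tendsto (fun z : ℝ => ∫ t in Set.Ioi (0 : ℝ), g (1 + t / z) * Real.exp (-t)) atTop
      (𝓝 (g 1)) := by
  obtain ⟨C, hC⟩ := hbdd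
  have key := MeasureTheory.tendsto_integral_filter_of_dominated_convergence
    (μ := (volume : Measure ℝ).restrict (Set.Ioi 0)) (l := atTop)
    (F := fun (z : ℝ) (t : ℝ) => g (1 + t / z) * Real.exp (-t))
    (f := fun t => g 1 * Real.exp (-t)) (bound := fun t => C * Real.exp (-t))
    ?_ ?_ ?_ ?_
  · have : (∫ t in Set.Ioi (0 : ℝ), g 1 * Real.exp (-t)) = g 1 := by
      rw [MeasureTheory.integral_const_mul, integral_exp_neg_Ioi_zero, mul_one]
    rwa [this] at key
  · filter_upwards [eventually_gt_atTop (0 : ℝ)] with z hz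
    have hco : ContinuousOn (fun t => g (1 + t / z) * Real.exp (-t)) (Set.Ioi 0) := by
      refine ContinuousOn.mul (hcont.comp ((continuousOn_const.add
        (continuousOn_id.div_const _))) fun t ht => ?_)
        (Real.continuous_exp.comp continuous_neg).continuousOn
      have : (0:ℝ) ≤ t / z := div_nonneg (le_of_lt ht) hz.le
      simpa [Set.mem_Ici] using this
    exact hco.aestronglyMeasurable measurableSet_Ioi
  · filter_upwards [eventually_gt_atTop (0 : ℝ)] with z hz
    filter_upwards [ae_restrict_mem measurableSet_Ioi] with t ht
    have h1 : (1:ℝ) ≤ 1 + t / z := by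
      have : (0:ℝ) ≤ t / z := div_nonneg (le_of_lt ht) hz.le
      linarith
    have : |g (1 + t / z) * Real.exp (-t)| ≤ C * Real.exp (-t) := by
      rw [abs_mul, abs_of_pos (Real.exp_pos _)]
      exact mul_le_mul_of_nonneg_right (hC _ h1) (Real.exp_pos _).le
    simpa [abs_mul] using this
  · have h := (exp_neg_integrableOn_Ioi 0 (one_pos)).const_mul C
    have : (fun x : ℝ => C * Real.exp (-1 * x)) = fun t => C * Real.exp (-t) := by
      funext t; norm_num
    rwa [this] at h
  · filter_upwards [ae_restrict_mem measurableSet_Ioi] with t ht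
    have h1 : Tendsto (fun z : ℝ => 1 + t / z) atTop (𝓝[Set.Ici 1] 1) := by
      rw [tendsto_nhdsWithin_iff]
      constructor
      · have : Tendsto (fun z : ℝ => t / z) atTop (𝓝 0) :=
          Tendsto.div_atTop tendsto_const_nhds tendsto_id
        simpa using tendsto_const_nhds.add this
      · filter_upwards [eventually_gt_atTop (0 : ℝ)] with z hz
        have : (0:ℝ) ≤ t / z := div_nonneg (le_of_lt ht) hz.le
        simpa [Set.mem_Ici] using this
    exact ((hcont 1 Set.self_mem_Ici).tendsto.comp h1).mul tendsto_const_nhds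

lemma stmt13_poly_int : ∀ k : ℕ, IntegrableOn (fun t : ℝ => t ^ k * Real.exp (-t)) (Set.Ioi 0) := by
  intro k
  have h := Real.GammaIntegral_convergent (s := (k : ℝ) + 1) (by positivity)
  refine h.congr_fun (fun x hx => ?_) measurableSet_Ioi
  rw [add_sub_cancel_right]; dsimp only; rw [Real.rpow_natCast, mul_comm]

lemma stmt13_bound_int :
    IntegrableOn (fun t : ℝ => (1 + t) ^ 2 * (2 + t) * Real.exp (-t)) (Set.Ioi 0) := by
  have h : (fun t : ℝ => (1 + t) ^ 2 * (2 + t) * Real.exp (-t)) =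
      fun t => t ^ 3 * Real.exp (-t) + (4 * (t ^ 2 * Real.exp (-t)) +
        (5 * (t ^ 1 * Real.exp (-t)) + 2 * (t ^ 0 * Real.exp (-t)))) := by
    funext t; ring
  rw [h]
  exact (stmt13_poly_int 3).add (((stmt13_poly_int 2).const_mul 4).add
    (((stmt13_poly_int 1).const_mul 5).add ((stmt13_poly_int 0).const_mul 2)))

lemma stmt13_B :
    Tendsto (fun z : ℝ => ∫ t in Set.Ioi (0 : ℝ),
        (1 + t / z) * Real.sqrt t * Real.sqrt (2 + t / z) * Real.exp (-t)) atTop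
      (𝓝 (Real.sqrt (π / 2))) := by
  have key := MeasureTheory.tendsto_integral_filter_of_dominated_convergence
    (μ := (volume : Measure ℝ).restrict (Set.Ioi 0)) (l := atTop)
    (F := fun (z : ℝ) (t : ℝ) => (1 + t / z) * Real.sqrt t * Real.sqrt (2 + t / z) * Real.exp (-t))
    (f := fun t => 1 * Real.sqrt t * Real.sqrt 2 * Real.exp (-t))
    (bound := fun t => (1 + t) ^ 2 * (2 + t) * Real.exp (-t))
    ?_ ?_ ?_ ?_
  · have hval : (∫ t in Set.Ioi (0 : ℝ), 1 * Real.sqrt t * Real.sqrt 2 * Real.exp (-t)) =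
        Real.sqrt (π / 2) := by
      have h1 : ∀ t ∈ Set.Ioi (0:ℝ),
          1 * Real.sqrt t * Real.sqrt 2 * Real.exp (-t) =
            Real.sqrt 2 * (Real.exp (-t) * t ^ ((3:ℝ)/2 - 1)) := by
        intro t ht
        rw [show (3:ℝ)/2 - 1 = 1/2 by norm_num, ← Real.sqrt_eq_rpow]
        ring
      rw [setIntegral_congr_fun measurableSet_Ioi h1, MeasureTheory.integral_const_mul,
        ← Real.Gamma_eq_integral (by norm_num : (0:ℝ) < 3/2)]
      have h2 : Real.Gamma (3/2) = Real.sqrt π / 2 := by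
        rw [show (3:ℝ)/2 = 1/2 + 1 by norm_num, Real.Gamma_add_one (by norm_num),
          Real.Gamma_one_half_eq]
        ring
      rw [h2, Real.sqrt_div Real.pi_pos.le 2]
      have h3 : Real.sqrt 2 * Real.sqrt 2 = 2 := Real.mul_self_sqrt (by norm_num)
      rw [eq_div_iff (by positivity : Real.sqrt 2 ≠ 0)]
      nlinarith [Real.sqrt_nonneg π, Real.sqrt_nonneg 2]
    rwa [hval] at key
  · refine Filter.Eventually.of_forall fun z => ?_
    have hcz : Continuous fun t : ℝ =>
        (1 + t / z) * Real.sqrt t * Real.sqrt (2 + t / z) * Real.exp (-t) := by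
      exact (((continuous_const.add (continuous_id.div_const z)).mul
        Real.continuous_sqrt).mul
        (Real.continuous_sqrt.comp (continuous_const.add (continuous_id.div_const z)))).mul
        (Real.continuous_exp.comp continuous_neg)
    exact hcz.aestronglyMeasurable
  · filter_upwards [eventually_ge_atTop (1 : ℝ)] with z hz
    filter_upwards [ae_restrict_mem measurableSet_Ioi] with t ht
    have hz0 : (0:ℝ) < z := lt_of_lt_of_le one_pos hz
    have ht0 : (0:ℝ) ≤ t / z := div_nonneg (le_of_lt ht) hz0.le
    have htz : t / z ≤ t := div_le_self (le_of_lt ht) hz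
    have ha : 1 + t / z ≤ 1 + t := by linarith
    have hb : Real.sqrt t ≤ 1 + t := by
      have := Real.sqrt_le_sqrt (show t ≤ (1 + t) ^ 2 by nlinarith)
      rwa [Real.sqrt_sq (by linarith)] at this
    have hc : Real.sqrt (2 + t / z) ≤ 2 + t := by
      have := Real.sqrt_le_sqrt (show 2 + t / z ≤ (2 + t) ^ 2 by nlinarith)
      rwa [Real.sqrt_sq (by linarith)] at this
    have habc : (1 + t / z) * Real.sqrt t * Real.sqrt (2 + t / z) ≤ (1 + t) * (1 + t) * (2 + t) :=
      mul_le_mul (mul_le_mul ha hb (Real.sqrt_nonneg _) (by linarith)) hc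
        (Real.sqrt_nonneg _) (by nlinarith)
    have : (1 + t / z) * Real.sqrt t * Real.sqrt (2 + t / z) * Real.exp (-t) ≤
        (1 + t) ^ 2 * (2 + t) * Real.exp (-t) := by
      have := mul_le_mul_of_nonneg_right habc (Real.exp_pos (-t)).le
      nlinarith [Real.exp_pos (-t)]
    rw [Real.norm_eq_abs, abs_of_nonneg (mul_nonneg (mul_nonneg (mul_nonneg (by linarith)
      (Real.sqrt_nonneg _)) (Real.sqrt_nonneg _)) (Real.exp_pos _).le)]
    exact this
  · exact stmt13_bound_int
  · filter_upwards [ae_restrict_mem measurableSet_Ioi] with t ht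
    have hdiv : Tendsto (fun z : ℝ => t / z) atTop (𝓝 0) :=
      Tendsto.div_atTop tendsto_const_nhds tendsto_id
    have h1 : Tendsto (fun z : ℝ => 1 + t / z) atTop (𝓝 1) := by
      simpa using tendsto_const_nhds.add hdiv
    have h2 : Tendsto (fun z : ℝ => Real.sqrt (2 + t / z)) atTop (𝓝 (Real.sqrt 2)) := by
      have h2' : Tendsto (fun z : ℝ => 2 + t / z) atTop (𝓝 2) := by
        simpa using tendsto_const_nhds.add hdiv
      exact (Real.continuous_sqrt.tendsto 2).comp h2'
    exact ((h1.mul tendsto_const_nhds).mul h2).mul tendsto_const_nhds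

/-- low-temperature (z → ∞) Laplace-type asymptotic:
for continuous bounded `g : [1,∞) → ℝ`,
`lim_{z→∞} z^{−1/2}·(∫₁^∞ g(ε) e^{−z(ε−1)} dε)/(∫₁^∞ ε√(ε²−1) e^{−z(ε−1)} dε)
  = √(2/π)·g(1)`. -/
theorem stmt13
    (g : ℝ → ℝ)
    (hcont : ContinuousOn g (Set.Ici 1))
    (hbdd : ∃ C : ℝ, ∀ ε : ℝ, 1 ≤ ε → |g ε| ≤ C) :
    Tendsto (fun z : ℝ =>
        (Real.sqrt z)⁻¹ *
          ((∫ ε in Set.Ici (1 : ℝ), g ε * Real.exp (-z * (ε - 1))) /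
            (∫ ε in Set.Ici (1 : ℝ), ε * Real.sqrt (ε ^ 2 - 1) * Real.exp (-z * (ε - 1)))))
      atTop (𝓝 (Real.sqrt (2 / π) * g 1)) := by
  have hA := stmt13_A g hcont hbdd
  have hB := stmt13_B
  have hBne : Real.sqrt (π / 2) ≠ 0 := by positivity
  have hlim := hA.div hB hBne
  have hval : g 1 / Real.sqrt (π / 2) = Real.sqrt (2 / π) * g 1 := by
    rw [show Real.sqrt (2 / π) = (Real.sqrt (π / 2))⁻¹ by rw [← Real.sqrt_inv, inv_div],
      div_eq_mul_inv, mul_comm]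
  rw [hval] at hlim
  refine hlim.congr' ?_
  filter_upwards [eventually_gt_atTop (0 : ℝ)] with z hz
  simp only [Pi.div_apply]
  have hsz : 0 < Real.sqrt z := Real.sqrt_pos.mpr hz
  have hN := stmt13_sub g hz
  have hD : (∫ ε in Set.Ici (1 : ℝ), ε * Real.sqrt (ε ^ 2 - 1) * Real.exp (-z * (ε - 1))) =
      z⁻¹ * ∫ t in Set.Ioi (0 : ℝ),
        (1 + t / z) * Real.sqrt ((1 + t / z) ^ 2 - 1) * Real.exp (-t) :=
    stmt13_sub (fun ε => ε * Real.sqrt (ε ^ 2 - 1)) hz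
  have hD2 : (∫ t in Set.Ioi (0 : ℝ),
        (1 + t / z) * Real.sqrt ((1 + t / z) ^ 2 - 1) * Real.exp (-t)) =
      (Real.sqrt z)⁻¹ * ∫ t in Set.Ioi (0 : ℝ),
        (1 + t / z) * Real.sqrt t * Real.sqrt (2 + t / z) * Real.exp (-t) := by
    rw [← MeasureTheory.integral_const_mul]
    refine setIntegral_congr_fun measurableSet_Ioi (fun t ht => ?_)
    have key : Real.sqrt ((1 + t / z) ^ 2 - 1) = (Real.sqrt z)⁻¹ *
        (Real.sqrt t * Real.sqrt (2 + t / z)) := by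
      have h1 : (1 + t / z) ^ 2 - 1 = (t / z) * (2 + t / z) := by
        field_simp; ring
      have h2 : (0:ℝ) ≤ t / z := div_nonneg (le_of_lt ht) hz.le
      rw [h1, Real.sqrt_mul h2, Real.sqrt_div (le_of_lt ht)]
      ring
    rw [key]; ring
  rw [hN, hD, hD2, ← mul_assoc, mul_div_mul_comm]
  have h3 : z⁻¹ / (z⁻¹ * (Real.sqrt z)⁻¹) = Real.sqrt z := by
    field_simp
  rw [h3, ← mul_assoc, inv_mul_cancel₀ hsz.ne', one_mul]
end

section
/- Let g : [1,∞) → ℝ be continuous, suppose there is a constant C with |g(ε)| ≤ C(1 + ε²) for all ε ≥ 1, and suppose g(ε)/ε² → c as ε → ∞ for some real c. Then the ultra-relativistic (z → 0⁺) limit lim_{z→0⁺} ( ∫₁^∞ g(ε)·e^{−zε} dε ) / ( ∫₁^∞ ε·√(ε² − 1)·e^{−zε} dε ) = c holds. (Applied to g = λ_c² with λ_c(ε)/ε → ζ̃, this yields the ultra-relativistic mass accretion rate lim_{z→0} Ṁ/n_∞ = π m ζ̃².) -/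
open Real Filter Set Topology MeasureTheory

open scoped Nat

/-!
Substituting `u = z ε` gives
`z ^ (k + 1) ∫₁^∞ g(ε) e^{-zε} dε = ∫₀^∞ 𝟙_{u > z} z ^ k g(u / z) e^{-u} du`.
For `z ≤ 1` the new integrand is dominated by `C (1 + u ^ k) e^{-u}`, and as `z → 0⁺` it tends to
`c u ^ k e^{-u}` because `u / z → ∞`; so the rescaled Laplace integral tends to `c · k!`.
With `k = 2` this applies both to `g` and to `ε √(ε² - 1)` (limit `1`), and in the ratio the
factors `z³` and `2!` cancel.
-/

lemma integrableOn_pow_mul_exp_neg_Ioi (k : ℕ) :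
    IntegrableOn (fun u : ℝ => u ^ k * exp (-u)) (Ioi 0) := by
  refine (GammaIntegral_convergent (s := k + 1) (by positivity)).congr_fun
    (fun u _ => ?_) measurableSet_Ioi
  simp [mul_comm]

lemma integral_pow_mul_exp_neg_Ioi (k : ℕ) :
    ∫ u in Ioi (0 : ℝ), u ^ k * exp (-u) = k ! := by
  rw [← Gamma_nat_eq_factorial, Gamma_eq_integral (by positivity)]
  refine setIntegral_congr_fun measurableSet_Ioi fun u _ => ?_
  simp [mul_comm]

noncomputable def scaledLaplaceIntegrand (g : ℝ → ℝ) (k : ℕ) (z : ℝ) : ℝ → ℝ :=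
  (Ioi z).indicator fun u => z ^ k * g (u / z) * exp (-u)

section ScaledLaplace

variable {g : ℝ → ℝ} {k : ℕ} {c C z u : ℝ}

lemma pow_succ_mul_integral_Ici_one_eq (hz : 0 < z) :
    z ^ (k + 1) * ∫ ε in Ici (1 : ℝ), g ε * exp (-z * ε) =
      ∫ u in Ioi (0 : ℝ), scaledLaplaceIntegrand g k z u := by
  have hsubst : ∫ ε in Ici (1 : ℝ), g ε * exp (-z * ε) =
      z⁻¹ * ∫ u in Ioi z, g (u / z) * exp (-u) := by
    have := integral_comp_mul_left_Ioi (fun u => g (u / z) * exp (-u)) 1 hz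
    rw [mul_one, smul_eq_mul] at this
    rw [integral_Ici_eq_integral_Ioi, ← this]
    refine setIntegral_congr_fun measurableSet_Ioi fun ε _ => ?_
    simp [mul_div_cancel_left₀ _ hz.ne', neg_mul]
  rw [scaledLaplaceIntegrand, setIntegral_indicator measurableSet_Ioi,
    inter_eq_self_of_subset_right (Ioi_subset_Ioi hz.le), hsubst, ← mul_assoc,
    pow_succ, mul_assoc (z ^ k), mul_inv_cancel₀ hz.ne', mul_one, ← integral_const_mul]
  simp only [mul_assoc]

lemma aestronglyMeasurable_scaledLaplaceIntegrand (hcont : ContinuousOn g (Ici 1))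
    (hz : 0 < z) : AEStronglyMeasurable (scaledLaplaceIntegrand g k z) volume := by
  have hmaps : MapsTo (· / z) (Ici z) (Ici 1) := fun u hu => (one_le_div hz).mpr hu
  have hcont' : ContinuousOn (fun u => z ^ k * g (u / z) * exp (-u)) (Ioi z) :=
    ((continuousOn_const.mul (hcont.comp (continuousOn_id.div_const z) hmaps)).mul
      (continuous_exp.comp continuous_neg).continuousOn).mono Ioi_subset_Ici_self
  exact (aestronglyMeasurable_indicator_iff measurableSet_Ioi).mpr
    (hcont'.aestronglyMeasurable measurableSet_Ioi)

lemma norm_scaledLaplaceIntegrand_le (hbdd : ∀ ε, 1 ≤ ε → |g ε| ≤ C * (1 + ε ^ k))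
    (hz : 0 < z) (hz₁ : z ≤ 1) (hu₀ : 0 < u) :
    ‖scaledLaplaceIntegrand g k z u‖ ≤ C * ((1 + u ^ k) * exp (-u)) := by
  have hC : 0 ≤ C := by
    have := (abs_nonneg _).trans (hbdd 1 le_rfl)
    norm_num at this
    linarith
  by_cases hu : u ∈ Ioi z
  · have hgu := hbdd (u / z) ((one_le_div hz).mpr (le_of_lt hu))
    have hzk : z ^ k ≤ 1 := pow_le_one₀ hz.le hz₁
    have hscale : z ^ k * (1 + (u / z) ^ k) = z ^ k + u ^ k := by
      rw [div_pow, mul_add, mul_div_cancel₀ _ (pow_ne_zero k hz.ne'), mul_one]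
    rw [scaledLaplaceIntegrand, indicator_of_mem hu, norm_mul, norm_mul,
      norm_of_nonneg (exp_pos _).le, norm_of_nonneg (pow_nonneg hz.le k), Real.norm_eq_abs]
    calc z ^ k * |g (u / z)| * exp (-u) ≤ z ^ k * (C * (1 + (u / z) ^ k)) * exp (-u) := by
          gcongr
      _ = C * (z ^ k + u ^ k) * exp (-u) := by rw [← hscale]; ring
      _ ≤ C * (1 + u ^ k) * exp (-u) := by gcongr
      _ = C * ((1 + u ^ k) * exp (-u)) := mul_assoc _ _ _
  · rw [scaledLaplaceIntegrand, indicator_of_notMem hu, norm_zero]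
    positivity

lemma tendsto_scaledLaplaceIntegrand (hlim : Tendsto (fun ε => g ε / ε ^ k) atTop (𝓝 c))
    (hu : 0 < u) :
    Tendsto (fun z => scaledLaplaceIntegrand g k z u) (𝓝[>] 0) (𝓝 (c * (u ^ k * exp (-u)))) := by
  have hinv : Tendsto (fun z => u / z) (𝓝[>] 0) atTop := by
    simpa [div_eq_mul_inv] using tendsto_inv_nhdsGT_zero.const_mul_atTop hu
  refine ((hlim.comp hinv).mul_const (u ^ k * exp (-u))).congr' ?_
  filter_upwards [Ioo_mem_nhdsGT hu] with z ⟨hz, hzu⟩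
  simp only [scaledLaplaceIntegrand, Function.comp_apply,
    indicator_of_mem (show u ∈ Ioi z from hzu)]
  rw [div_pow]
  field_simp

theorem tendsto_pow_succ_mul_integral_Ici_one_mul_exp_neg_mul (hcont : ContinuousOn g (Ici 1))
    (hbdd : ∀ ε, 1 ≤ ε → |g ε| ≤ C * (1 + ε ^ k))
    (hlim : Tendsto (fun ε => g ε / ε ^ k) atTop (𝓝 c)) :
    Tendsto (fun z => z ^ (k + 1) * ∫ ε in Ici (1 : ℝ), g ε * exp (-z * ε)) (𝓝[>] 0)
      (𝓝 (k ! * c)) := by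
  have hdom : Tendsto (fun z => ∫ u in Ioi (0 : ℝ), scaledLaplaceIntegrand g k z u) (𝓝[>] 0)
      (𝓝 (∫ u in Ioi (0 : ℝ), c * (u ^ k * exp (-u)))) := by
    refine tendsto_integral_filter_of_dominated_convergence
      (fun u => C * ((1 + u ^ k) * exp (-u))) ?_ ?_ ?_ ?_
    · filter_upwards [self_mem_nhdsWithin] with z hz
      exact (aestronglyMeasurable_scaledLaplaceIntegrand hcont hz).restrict
    · filter_upwards [Ioc_mem_nhdsGT zero_lt_one] with z ⟨hz, hz₁⟩
      exact (ae_restrict_iff' measurableSet_Ioi).mpr <| .of_forall fun u hu =>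
        norm_scaledLaplaceIntegrand_le hbdd hz hz₁ hu
    · refine IntegrableOn.congr_fun (((integrableOn_pow_mul_exp_neg_Ioi 0).add
        (integrableOn_pow_mul_exp_neg_Ioi k)).const_mul C) (fun u _ => ?_) measurableSet_Ioi
      simp only [Pi.add_apply, pow_zero]
      ring
    · exact (ae_restrict_iff' measurableSet_Ioi).mpr <| .of_forall fun u hu =>
        tendsto_scaledLaplaceIntegrand hlim hu
  rw [integral_const_mul, integral_pow_mul_exp_neg_Ioi, mul_comm] at hdom
  refine hdom.congr' ?_
  filter_upwards [self_mem_nhdsWithin] with z hz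
  exact (pow_succ_mul_integral_Ici_one_eq hz).symm

end ScaledLaplace

lemma abs_mul_sqrt_sq_sub_one_le_sq {ε : ℝ} (hε : 1 ≤ ε) :
    |ε * √(ε ^ 2 - 1)| ≤ ε ^ 2 := by
  have hsqrt : √(ε ^ 2 - 1) ≤ ε := sqrt_le_iff.mpr ⟨by linarith, by linarith⟩
  rw [abs_of_nonneg (by positivity)]
  nlinarith [sqrt_nonneg (ε ^ 2 - 1)]

lemma tendsto_mul_sqrt_sq_sub_one_div_sq :
    Tendsto (fun ε : ℝ => ε * √(ε ^ 2 - 1) / ε ^ 2) atTop (𝓝 1) := by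
  have h : Tendsto (fun ε : ℝ => √(1 - ε⁻¹ ^ 2)) atTop (𝓝 1) := by
    simpa using ((tendsto_const_nhds (x := (1 : ℝ))).sub
      (tendsto_inv_atTop_zero.pow 2)).sqrt
  refine h.congr' ?_
  filter_upwards [eventually_ge_atTop (1 : ℝ)] with ε hε
  have hε₀ : 0 < ε := by linarith
  rw [show 1 - ε⁻¹ ^ 2 = (ε ^ 2 - 1) / ε ^ 2 by field_simp, sqrt_div' _ (sq_nonneg ε),
    sqrt_sq hε₀.le]
  field_simp

/-- ultra-relativistic (z → 0⁺) limit: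
for continuous `g : [1,∞) → ℝ` with `|g(ε)| ≤ C(1+ε²)` and `g(ε)/ε² → c` as `ε → ∞`,
`lim_{z→0⁺} (∫₁^∞ g(ε) e^{−zε} dε)/(∫₁^∞ ε√(ε²−1) e^{−zε} dε) = c`. -/
theorem stmt14
    (g : ℝ → ℝ) (c : ℝ)
    (hcont : ContinuousOn g (Set.Ici 1))
    (hbdd : ∃ C : ℝ, ∀ ε : ℝ, 1 ≤ ε → |g ε| ≤ C * (1 + ε ^ 2))
    (hlim : Tendsto (fun ε : ℝ => g ε / ε ^ 2) atTop (𝓝 c)) :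
    Tendsto (fun z : ℝ =>
        (∫ ε in Set.Ici (1 : ℝ), g ε * Real.exp (-z * ε)) /
          (∫ ε in Set.Ici (1 : ℝ), ε * Real.sqrt (ε ^ 2 - 1) * Real.exp (-z * ε)))
      (𝓝[>] 0) (𝓝 c) := by
  obtain ⟨C, hbdd⟩ := hbdd
  have hnum := tendsto_pow_succ_mul_integral_Ici_one_mul_exp_neg_mul hcont hbdd hlim
  have hden := tendsto_pow_succ_mul_integral_Ici_one_mul_exp_neg_mul
    (by fun_prop : ContinuousOn (fun ε : ℝ => ε * √(ε ^ 2 - 1)) (Ici 1))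
    (C := 1) (fun ε hε => (abs_mul_sqrt_sq_sub_one_le_sq hε).trans (by linarith))
    tendsto_mul_sqrt_sq_sub_one_div_sq
  have hratio := hnum.div hden (by positivity)
  rw [mul_div_mul_left _ _ (by positivity), div_one] at hratio
  refine hratio.congr' ?_
  filter_upwards [self_mem_nhdsWithin] with z hz
  exact mul_div_mul_left _ _ (pow_ne_zero _ (ne_of_gt hz))
end

section
/- For every real Λ > 0 one has the strict inequalities 0 < (1/2)·( −1 − Λ²/2 + √(1 + Λ² + Λ⁴/3) ) < Λ²/4. Consequently, in the low-temperature limit the radial pressure at the horizon is positive but strictly smaller than the tangential pressure: 0 < p_rad,h < p_tan,h. -/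
open Real

/-- for every `Λ > 0`,
`0 < (1/2)(−1 − Λ²/2 + √(1 + Λ² + Λ⁴/3)) < Λ²/4`; i.e. in the low-temperature limit the
radial pressure at the horizon is positive but strictly smaller than the tangential one. -/
theorem stmt15 (Λ : ℝ) (hΛ : 0 < Λ) :
    0 < (1 / 2) * (-1 - Λ ^ 2 / 2 + Real.sqrt (1 + Λ ^ 2 + Λ ^ 4 / 3)) ∧
    (1 / 2) * (-1 - Λ ^ 2 / 2 + Real.sqrt (1 + Λ ^ 2 + Λ ^ 4 / 3)) < Λ ^ 2 / 4 := by
  have h1 : (1 + Λ ^ 2 / 2) < Real.sqrt (1 + Λ ^ 2 + Λ ^ 4 / 3) := by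
    rw [show (1 + Λ ^ 2 / 2) = Real.sqrt ((1 + Λ ^ 2 / 2) ^ 2) from
      (Real.sqrt_sq (by positivity)).symm]
    apply Real.sqrt_lt_sqrt (by positivity)
    nlinarith [pow_pos hΛ 4]
  have h2 : Real.sqrt (1 + Λ ^ 2 + Λ ^ 4 / 3) < 1 + Λ ^ 2 := by
    rw [Real.sqrt_lt' (by positivity)]
    nlinarith [pow_pos hΛ 2, pow_pos hΛ 4]
  constructor <;> nlinarith
end
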